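/- arXiv:1908.03903 — 9 statements merged into one kernel-verified Lean document; each statement's English description precedes it below -/
import Mathlib

section
/- Let g ∈ L²(Ω, μ). Then for μ-almost every x ∈ Ω the integral ∫_Ω √(p(x,y) p(y,x)) |g(y)| dμ(y) is finite, the function Dg belongs to L²(Ω, μ), and ‖Dg‖₂ ≤ ‖g‖₂. In particular, if g ≠ 0 and Dg = λ·g for some scalar λ, then |λ| ≤ 1. -/
open MeasureTheory
open scoped ENNReal

section Aux

variable {Ω : Type*} [MeasurableSpace Ω] {μ : Measure Ω} [SigmaFinite μ]

lemma aux_lintegral_one {p : Ω → Ω → ℝ} (hp_meas : Measurable (Function.uncurry p))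
    (hp_nonneg : ∀ x y, 0 ≤ p x y)
    (hp_int : ∀ᵐ x ∂μ, ∫ y, p x y ∂μ = 1) :
    ∀ᵐ x ∂μ, ∫⁻ y, ENNReal.ofReal (p x y) ∂μ = 1 := by
  filter_upwards [hp_int] with x hx
  have hint : Integrable (p x) μ := by
    by_contra h
    rw [integral_undef h] at hx
    norm_num at hx
  rw [← ofReal_integral_eq_lintegral_ofReal hint (Filter.Eventually.of_forall (hp_nonneg x)),
    hx, ENNReal.ofReal_one]

end Aux

/-- Let `(Ω, μ)` be σ-finite and `p` a Markov transition density.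
For `g ∈ L²(Ω, μ)`: for a.e. `x` the integral `∫ √(p(x,y)p(y,x)) |g(y)| dμ(y)` is finite,
the function `Dg : x ↦ ∫ √(p(x,y)p(y,x)) g(y) dμ(y)` belongs to `L²(Ω, μ)` with
`‖Dg‖₂ ≤ ‖g‖₂`; in particular, if `g ≠ 0` and `Dg = λ g` then `|λ| ≤ 1`. -/
theorem discriminant_operator_contraction
    {Ω : Type*} [MeasurableSpace Ω] (μ : Measure Ω) [SigmaFinite μ]
    (p : Ω → Ω → ℝ) (hp_meas : Measurable (Function.uncurry p))
    (hp_nonneg : ∀ x y, 0 ≤ p x y)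
    (hp_int : ∀ᵐ x ∂μ, ∫ y, p x y ∂μ = 1)
    (g : Ω → ℂ) (hg : MemLp g 2 μ) :
    (∀ᵐ x ∂μ, Integrable (fun y => Real.sqrt (p x y * p y x) * ‖g y‖) μ) ∧
    MemLp (fun x => ∫ y, (Real.sqrt (p x y * p y x) : ℂ) * g y ∂μ) 2 μ ∧
    eLpNorm (fun x => ∫ y, (Real.sqrt (p x y * p y x) : ℂ) * g y ∂μ) 2 μ
      ≤ eLpNorm g 2 μ ∧
    (∀ lam : ℂ, ¬ g =ᵐ[μ] 0 →
      (fun x => ∫ y, (Real.sqrt (p x y * p y x) : ℂ) * g y ∂μ) =ᵐ[μ] (fun x => lam * g x) →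
      ‖lam‖ ≤ 1) := by
  classical
  -- replace g by a measurable representative g'
  set g' : Ω → ℂ := hg.1.mk g with hg'def
  have hg'_sm : StronglyMeasurable g' := hg.1.stronglyMeasurable_mk
  have hgG : g =ᵐ[μ] g' := hg.1.ae_eq_mk
  have hmg' : Measurable g' := hg'_sm.measurable
  have hg' : MemLp g' 2 μ := hg.ae_eq hgG
  set K : Ω → Ω → ℝ := fun x y => Real.sqrt (p x y * p y x) with hKdef
  have hK_nonneg : ∀ x y, 0 ≤ K x y := fun x y => Real.sqrt_nonneg _
  have hK_meas : Measurable (Function.uncurry K) :=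
    (hp_meas.mul (hp_meas.comp measurable_swap)).sqrt
  -- the function with measurable representative equals the original pointwise
  have hD_eq : (fun x => ∫ y, (K x y : ℂ) * g y ∂μ)
      = fun x => ∫ y, (K x y : ℂ) * g' y ∂μ := by
    funext x
    exact integral_congr_ae (hgG.mono fun y hy => by simp only [hy])
  set F : Ω → ℝ≥0∞ := fun x => ∫⁻ y, ENNReal.ofReal (K x y) * (‖g' y‖₊ : ℝ≥0∞) ∂μ with hFdef
  set B : Ω → ℝ≥0∞ := fun x => ∫⁻ y, ENNReal.ofReal (p y x) * (‖g' y‖₊ : ℝ≥0∞) ^ 2 ∂μ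
    with hBdef
  set C : ℝ≥0∞ := ∫⁻ y, (‖g' y‖₊ : ℝ≥0∞) ^ 2 ∂μ with hCdef
  have key : ∀ᵐ x ∂μ, ∫⁻ y, ENNReal.ofReal (p x y) ∂μ = 1 :=
    aux_lintegral_one hp_meas hp_nonneg hp_int
  -- Cauchy–Schwarz pointwise bound
  have hF_sq : ∀ᵐ x ∂μ, F x ^ 2 ≤ B x := by
    filter_upwards [key] with x hx
    have hconj : Real.HolderConjugate 2 2 := Real.HolderConjugate.two_two
    set f1 : Ω → ℝ≥0∞ := fun y => ENNReal.ofReal (Real.sqrt (p x y)) with hf1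
    set f2 : Ω → ℝ≥0∞ := fun y => ENNReal.ofReal (Real.sqrt (p y x)) * (‖g' y‖₊ : ℝ≥0∞)
      with hf2
    have hf1m : AEMeasurable f1 μ :=
      ((hp_meas.of_uncurry_left).sqrt.ennreal_ofReal).aemeasurable
    have hf2m : AEMeasurable f2 μ :=
      (((hp_meas.comp (measurable_id.prodMk measurable_const)).sqrt.ennreal_ofReal).mul
        (hmg'.nnnorm.coe_nnreal_ennreal)).aemeasurable
    have hprod : ∀ y, ENNReal.ofReal (K x y) * (‖g' y‖₊ : ℝ≥0∞) = (f1 * f2) y := by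
      intro y
      simp only [hf1, hf2, Pi.mul_apply, hKdef]
      rw [Real.sqrt_mul (hp_nonneg x y), ENNReal.ofReal_mul (Real.sqrt_nonneg _), mul_assoc]
    have hCS := ENNReal.lintegral_mul_le_Lp_mul_Lq μ hconj hf1m hf2m
    have h1 : ∫⁻ y, f1 y ^ (2 : ℝ) ∂μ = 1 := by
      rw [← hx]
      refine lintegral_congr fun y => ?_
      simp only [hf1]
      rw [ENNReal.ofReal_rpow_of_nonneg (Real.sqrt_nonneg _) (by norm_num)]
      congr 1
      rw [show ((2:ℝ)) = ((2:ℕ):ℝ) by norm_num, Real.rpow_natCast, Real.sq_sqrt (hp_nonneg x y)]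
    have h2 : ∫⁻ y, f2 y ^ (2 : ℝ) ∂μ = B x := by
      refine lintegral_congr fun y => ?_
      simp only [hf2]
      rw [ENNReal.mul_rpow_of_nonneg _ _ (by norm_num : (0:ℝ) ≤ 2)]
      congr 1
      · rw [ENNReal.ofReal_rpow_of_nonneg (Real.sqrt_nonneg _) (by norm_num)]
        congr 1
        rw [show ((2:ℝ)) = ((2:ℕ):ℝ) by norm_num, Real.rpow_natCast,
          Real.sq_sqrt (hp_nonneg y x)]
      · rw [← ENNReal.rpow_natCast]; norm_num
    have hF_le : F x ≤ B x ^ (1 / 2 : ℝ) := by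
      calc F x = ∫⁻ y, (f1 * f2) y ∂μ := lintegral_congr fun y => hprod y
        _ ≤ (∫⁻ y, f1 y ^ (2:ℝ) ∂μ) ^ (1/2:ℝ) * (∫⁻ y, f2 y ^ (2:ℝ) ∂μ) ^ (1/2:ℝ) := hCS
        _ = B x ^ (1/2:ℝ) := by rw [h1, h2, ENNReal.one_rpow, one_mul]
    calc F x ^ 2 = (F x) ^ (2 : ℝ) := by rw [← ENNReal.rpow_natCast]; norm_num
      _ ≤ (B x ^ (1/2:ℝ)) ^ (2:ℝ) := ENNReal.rpow_le_rpow hF_le (by norm_num)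
      _ = B x := by rw [← ENNReal.rpow_mul]; norm_num
  -- Tonelli
  have hBprod_meas : Measurable
      (fun z : Ω × Ω => ENNReal.ofReal (p z.2 z.1) * (‖g' z.2‖₊ : ℝ≥0∞) ^ 2) :=
    ((hp_meas.comp measurable_swap).ennreal_ofReal).mul
      (((hmg'.comp measurable_snd).nnnorm.coe_nnreal_ennreal).pow_const 2)
  have hswap : ∫⁻ x, B x ∂μ = C := by
    rw [hBdef]
    rw [lintegral_lintegral_swap hBprod_meas.aemeasurable]
    have : ∀ᵐ y ∂μ, ∫⁻ x, ENNReal.ofReal (p y x) * (‖g' y‖₊ : ℝ≥0∞) ^ 2 ∂μ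
        = (‖g' y‖₊ : ℝ≥0∞) ^ 2 := by
      filter_upwards [key] with y hy
      rw [lintegral_mul_const _ (hp_meas.of_uncurry_left).ennreal_ofReal, hy, one_mul]
    exact lintegral_congr_ae this
  have hC_lt : C < ⊤ := by
    have h2 := hg'.2
    rw [eLpNorm_eq_lintegral_rpow_enorm_toReal two_ne_zero ENNReal.ofNat_ne_top] at h2
    have hCeq : C = ∫⁻ y, (‖g' y‖₊ : ℝ≥0∞) ^ (ENNReal.toReal 2) ∂μ := by
      refine lintegral_congr fun y => ?_
      rw [← ENNReal.rpow_natCast]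
      norm_num
    rw [hCeq]
    by_contra h
    push_neg at h
    change (∫⁻ y, (‖g' y‖₊ : ℝ≥0∞) ^ (ENNReal.toReal 2) ∂μ) ^ (1 / ENNReal.toReal 2) < ⊤ at h2
    rw [top_le_iff.mp h] at h2
    simp [ENNReal.top_rpow_of_pos (by norm_num : (0:ℝ) < 1 / ENNReal.toReal 2)] at h2
  have hFB : ∫⁻ x, F x ^ 2 ∂μ ≤ C := by
    calc ∫⁻ x, F x ^ 2 ∂μ ≤ ∫⁻ x, B x ∂μ := lintegral_mono_ae hF_sq
      _ = C := hswap
  have hF_meas : Measurable F := by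
    apply Measurable.lintegral_prod_right'
      (f := fun z : Ω × Ω => ENNReal.ofReal (K z.1 z.2) * (‖g' z.2‖₊ : ℝ≥0∞))
    exact (hK_meas.ennreal_ofReal).mul ((hmg'.comp measurable_snd).nnnorm.coe_nnreal_ennreal)
  have hF_fin : ∀ᵐ x ∂μ, F x < ⊤ := by
    have := ae_lt_top (hF_meas.pow_const 2) (lt_of_le_of_lt hFB hC_lt).ne
    filter_upwards [this] with x hx
    by_contra h
    push_neg at h
    rw [top_le_iff.mp h, ENNReal.top_pow (by norm_num)] at hx
    exact lt_irrefl _ hx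
  -- pointwise norm of Dg' integrand
  have hnorm_eq : ∀ x y, (‖(K x y : ℂ) * g' y‖₊ : ℝ≥0∞)
      = ENNReal.ofReal (K x y) * (‖g' y‖₊ : ℝ≥0∞) := by
    intro x y
    rw [nnnorm_mul, ENNReal.coe_mul]
    congr 1
    rw [← Real.enorm_eq_ofReal (hK_nonneg x y)]
    congr 1
    simp [enorm, nnnorm, Complex.norm_real, abs_of_nonneg (hK_nonneg x y)]
  -- conjunct 1 for g'
  have hint' : ∀ᵐ x ∂μ, Integrable (fun y => K x y * ‖g' y‖) μ := by
    filter_upwards [hF_fin] with x hx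
    refine ⟨((hK_meas.of_uncurry_left).mul hmg'.norm).aestronglyMeasurable, ?_⟩
    rw [HasFiniteIntegral]
    have : ∀ y, (‖K x y * ‖g' y‖‖₊ : ℝ≥0∞) = ENNReal.ofReal (K x y) * (‖g' y‖₊ : ℝ≥0∞) := by
      intro y
      rw [← enorm_eq_nnnorm]
      rw [Real.enorm_eq_ofReal (mul_nonneg (hK_nonneg x y) (norm_nonneg _)),
        ENNReal.ofReal_mul (hK_nonneg x y)]
      congr 1
      rw [← Real.enorm_eq_ofReal (norm_nonneg _)]
      rw [enorm_norm, enorm_eq_nnnorm]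
    calc ∫⁻ y, (‖K x y * ‖g' y‖‖₊ : ℝ≥0∞) ∂μ = F x := lintegral_congr fun y => this y
      _ < ⊤ := hx
  -- strong measurability of Dg'
  have hD_sm : StronglyMeasurable (fun x => ∫ y, (K x y : ℂ) * g' y ∂μ) := by
    apply StronglyMeasurable.integral_prod_right'
      (f := fun z : Ω × Ω => (K z.1 z.2 : ℂ) * g' z.2)
    exact ((Complex.measurable_ofReal.comp hK_meas).mul (hmg'.comp measurable_snd)).stronglyMeasurable
  -- norm bound for Dg'
  have hD_le_F : ∀ x, (‖∫ y, (K x y : ℂ) * g' y ∂μ‖₊ : ℝ≥0∞) ≤ F x := by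
    intro x
    calc (‖∫ y, (K x y : ℂ) * g' y ∂μ‖₊ : ℝ≥0∞)
        ≤ ∫⁻ y, (‖(K x y : ℂ) * g' y‖₊ : ℝ≥0∞) ∂μ := enorm_integral_le_lintegral_enorm _
      _ = F x := lintegral_congr fun y => hnorm_eq x y
  -- eLpNorm bound for Dg'
  have heLp' : eLpNorm (fun x => ∫ y, (K x y : ℂ) * g' y ∂μ) 2 μ ≤ eLpNorm g' 2 μ := by
    rw [eLpNorm_eq_lintegral_rpow_enorm_toReal two_ne_zero ENNReal.ofNat_ne_top,
      eLpNorm_eq_lintegral_rpow_enorm_toReal two_ne_zero ENNReal.ofNat_ne_top]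
    apply ENNReal.rpow_le_rpow _ (by positivity)
    calc ∫⁻ x, (‖∫ y, (K x y : ℂ) * g' y ∂μ‖₊ : ℝ≥0∞) ^ (ENNReal.toReal 2) ∂μ
        ≤ ∫⁻ x, F x ^ 2 ∂μ := by
          refine lintegral_mono fun x => ?_
          calc (‖∫ y, (K x y : ℂ) * g' y ∂μ‖₊ : ℝ≥0∞) ^ (ENNReal.toReal 2)
              = (‖∫ y, (K x y : ℂ) * g' y ∂μ‖₊ : ℝ≥0∞) ^ 2 := by
                rw [← ENNReal.rpow_natCast]; norm_num
            _ ≤ F x ^ 2 := by exact pow_le_pow_left' (hD_le_F x) 2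
      _ ≤ C := hFB
      _ = ∫⁻ y, (‖g' y‖₊ : ℝ≥0∞) ^ (ENNReal.toReal 2) ∂μ := by
          refine lintegral_congr fun y => ?_
          rw [← ENNReal.rpow_natCast]
          norm_num
  have hmemD : MemLp (fun x => ∫ y, (K x y : ℂ) * g' y ∂μ) 2 μ :=
    ⟨hD_sm.aestronglyMeasurable, lt_of_le_of_lt heLp' hg'.2⟩
  -- transfer back to g
  have hgnorm : eLpNorm g 2 μ = eLpNorm g' 2 μ := eLpNorm_congr_ae hgG
  have hmain3 : eLpNorm (fun x => ∫ y, (K x y : ℂ) * g y ∂μ) 2 μ ≤ eLpNorm g 2 μ := by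
    rw [hD_eq, hgnorm]; exact heLp'
  refine ⟨?_, ?_, hmain3, ?_⟩
  · filter_upwards [hint'] with x hx
    refine (integrable_congr ?_).mpr hx
    filter_upwards [hgG] with y hy
    rw [hy]
  · rw [hD_eq]; exact hmemD
  · intro lam hgne heig
    have h1 : eLpNorm (fun x => lam * g x) 2 μ ≤ eLpNorm g 2 μ := by
      rw [← eLpNorm_congr_ae heig]; exact hmain3
    have h2 : eLpNorm (fun x => lam * g x) 2 μ = (‖lam‖₊ : ℝ≥0∞) * eLpNorm g 2 μ := by
      have : (fun x => lam * g x) = lam • g := rfl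
      rw [this, eLpNorm_const_smul]
      try rfl
      try simp [ENNReal.smul_def]
    rw [h2] at h1
    have hpos : eLpNorm g 2 μ ≠ 0 := by
      intro h0
      exact hgne ((eLpNorm_eq_zero_iff hg.1 two_ne_zero).mp h0)
    have hlt : eLpNorm g 2 μ ≠ ⊤ := hg.2.ne
    have : (‖lam‖₊ : ℝ≥0∞) ≤ 1 := by
      have h1' : (‖lam‖₊ : ℝ≥0∞) * eLpNorm g 2 μ ≤ 1 * eLpNorm g 2 μ := by
        rw [one_mul]; exact h1
      exact (ENNReal.mul_le_mul_iff_left hpos hlt).mp h1'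
    have hle : ‖lam‖₊ ≤ 1 := by exact_mod_cast this
    calc ‖lam‖ = ‖lam‖ := rfl
      _ ≤ 1 := hle
end

section
/- Suppose the probability density π satisfies detailed balance with respect to p. Then the function φ_π(x, y) := √(π(x) p(x, y)) is a unit vector of L²(Ω × Ω, μ × μ), it equals T(√π), and W φ_π = φ_π; that is, φ_π is an eigenvector of the quantum walk operator W with eigenvalue 1. -/
open MeasureTheory ContinuousLinearMap
open scoped ENNReal

private lemma aux_eLpNorm_sqrt {α : Type*} [MeasurableSpace α] (ν : Measure α)
    (F : α → ℝ) (hF : ∀ a, 0 ≤ F a)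
    (h1 : ∫⁻ a, ENNReal.ofReal (F a) ∂ν = 1) :
    eLpNorm (fun a => ((Real.sqrt (F a) : ℝ) : ℂ)) 2 ν = 1 := by
  rw [eLpNorm_eq_lintegral_rpow_enorm_toReal two_ne_zero ENNReal.ofNat_ne_top]
  have key : ∀ a, (‖((Real.sqrt (F a) : ℝ) : ℂ)‖ₑ) ^ ((2 : ℝ≥0∞).toReal)
      = ENNReal.ofReal (F a) := by
    intro a
    have hn : ‖((Real.sqrt (F a) : ℝ) : ℂ)‖ = Real.sqrt (F a) := by
      rw [Complex.norm_real, Real.norm_eq_abs, abs_of_nonneg (Real.sqrt_nonneg _)]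
    rw [← ofReal_norm, hn, ENNReal.toReal_ofNat,
      ENNReal.ofReal_rpow_of_nonneg (Real.sqrt_nonneg _) (by norm_num),
      Real.rpow_two, Real.sq_sqrt (hF a)]
  simp_rw [key, h1, ENNReal.one_rpow]


/-- Suppose the probability density `π` satisfies detailed balance with
respect to `p`. Then `φ_π(x,y) := √(π(x) p(x,y))` is a unit vector of `L²(Ω×Ω, μ×μ)`, it
equals `T(√π)`, and `W φ_π = φ_π`, i.e. `φ_π` is an eigenvector of the quantum walk
operator `W = S(2TT* − I)` with eigenvalue `1`. -/
theorem stationary_state_of_quantum_walk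
    {Ω : Type*} [MeasurableSpace Ω] (μ : Measure Ω) [SigmaFinite μ]
    (p : Ω → Ω → ℝ) (hp_meas : Measurable (Function.uncurry p))
    (hp_nonneg : ∀ x y, 0 ≤ p x y)
    (hp_int : ∀ᵐ x ∂μ, ∫ y, p x y ∂μ = 1)
    (T : Lp ℂ 2 μ →L[ℂ] Lp ℂ 2 (μ.prod μ))
    (hT : ∀ f : Lp ℂ 2 μ,
      (T f : Ω × Ω → ℂ) =ᵐ[μ.prod μ] fun z => (Real.sqrt (p z.1 z.2) : ℂ) * f z.1)
    (S : Lp ℂ 2 (μ.prod μ) →L[ℂ] Lp ℂ 2 (μ.prod μ))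
    (hS : ∀ g : Lp ℂ 2 (μ.prod μ),
      (S g : Ω × Ω → ℂ) =ᵐ[μ.prod μ] fun z => g (z.2, z.1))
    (W : Lp ℂ 2 (μ.prod μ) →L[ℂ] Lp ℂ 2 (μ.prod μ))
    (hW : W = S ∘L ((2 : ℂ) • (T ∘L adjoint T) - 1))
    (π : Ω → ℝ) (hπ_meas : Measurable π) (hπ_nonneg : ∀ x, 0 ≤ π x)
    (hπ_int : ∫ x, π x ∂μ = 1)
    (hdb : ∀ᵐ z ∂(μ.prod μ), π z.1 * p z.1 z.2 = π z.2 * p z.2 z.1) :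
    MemLp (fun z : Ω × Ω => (Real.sqrt (π z.1 * p z.1 z.2) : ℂ)) 2 (μ.prod μ) ∧
    eLpNorm (fun z : Ω × Ω => (Real.sqrt (π z.1 * p z.1 z.2) : ℂ)) 2 (μ.prod μ) = 1 ∧
    (∀ f : Lp ℂ 2 μ, (f : Ω → ℂ) =ᵐ[μ] (fun x => (Real.sqrt (π x) : ℂ)) →
      (T f : Ω × Ω → ℂ) =ᵐ[μ.prod μ]
        fun z : Ω × Ω => (Real.sqrt (π z.1 * p z.1 z.2) : ℂ)) ∧
    (∀ g : Lp ℂ 2 (μ.prod μ),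
      (g : Ω × Ω → ℂ) =ᵐ[μ.prod μ]
        (fun z : Ω × Ω => (Real.sqrt (π z.1 * p z.1 z.2) : ℂ)) →
      W g = g) := by
  have hπp_meas : Measurable (fun z : Ω × Ω => π z.1 * p z.1 z.2) :=
    (hπ_meas.comp measurable_fst).mul hp_meas
  -- integrability of π and of p x ·
  have hπ_integrable : Integrable π μ := by
    by_contra h
    rw [integral_undef h] at hπ_int
    norm_num at hπ_int
  have hp_integrable : ∀ᵐ x ∂μ, Integrable (fun y => p x y) μ := by
    filter_upwards [hp_int] with x hx
    by_contra h
    rw [integral_undef h] at hx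
    norm_num at hx
  -- lintegral facts
  have hπ_lint : ∫⁻ x, ENNReal.ofReal (π x) ∂μ = 1 := by
    rw [← ofReal_integral_eq_lintegral_ofReal hπ_integrable
      (Filter.Eventually.of_forall hπ_nonneg), hπ_int, ENNReal.ofReal_one]
  have hkey : ∫⁻ z, ENNReal.ofReal (π z.1 * p z.1 z.2) ∂(μ.prod μ) = 1 := by
    rw [lintegral_prod _ hπp_meas.ennreal_ofReal.aemeasurable]
    have : ∀ᵐ x ∂μ, ∫⁻ y, ENNReal.ofReal (π x * p x y) ∂μ = ENNReal.ofReal (π x) := by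
      filter_upwards [hp_int, hp_integrable] with x hx hxi
      calc ∫⁻ y, ENNReal.ofReal (π x * p x y) ∂μ
          = ∫⁻ y, ENNReal.ofReal (π x) * ENNReal.ofReal (p x y) ∂μ := by
            simp_rw [ENNReal.ofReal_mul (hπ_nonneg x)]
        _ = ENNReal.ofReal (π x) * ∫⁻ y, ENNReal.ofReal (p x y) ∂μ :=
            lintegral_const_mul' _ _ ENNReal.ofReal_ne_top
        _ = ENNReal.ofReal (π x) := by
            rw [← ofReal_integral_eq_lintegral_ofReal hxi
              (Filter.Eventually.of_forall (hp_nonneg x)), hx, ENNReal.ofReal_one, mul_one]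
    rw [lintegral_congr_ae this, hπ_lint]
  -- part 2
  have hφ_norm : eLpNorm (fun z : Ω × Ω => (Real.sqrt (π z.1 * p z.1 z.2) : ℂ)) 2
      (μ.prod μ) = 1 :=
    aux_eLpNorm_sqrt (μ.prod μ) _ (fun z => mul_nonneg (hπ_nonneg _) (hp_nonneg _ _)) hkey
  -- part 1
  have hφ_mem : MemLp (fun z : Ω × Ω => (Real.sqrt (π z.1 * p z.1 z.2) : ℂ)) 2 (μ.prod μ) :=
    ⟨(Complex.measurable_ofReal.comp hπp_meas.sqrt).aestronglyMeasurable,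
      by rw [hφ_norm]; exact ENNReal.one_lt_top⟩
  -- part 3
  have part3 : ∀ f : Lp ℂ 2 μ, (f : Ω → ℂ) =ᵐ[μ] (fun x => (Real.sqrt (π x) : ℂ)) →
      (T f : Ω × Ω → ℂ) =ᵐ[μ.prod μ]
        fun z : Ω × Ω => (Real.sqrt (π z.1 * p z.1 z.2) : ℂ) := by
    intro f hf
    have hf' : ∀ᵐ z ∂(μ.prod μ), (f : Ω → ℂ) z.1 = (Real.sqrt (π z.1) : ℂ) :=
      (Measure.quasiMeasurePreserving_fst).ae hf
    filter_upwards [hT f, hf'] with z h1 h2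
    rw [h1, h2, Real.sqrt_mul (hπ_nonneg _)]
    push_cast
    ring
  refine ⟨hφ_mem, hφ_norm, part3, ?_⟩
  -- the element h = √π of L²(μ)
  have hsqrtπ_mem : MemLp (fun x => (Real.sqrt (π x) : ℂ)) 2 μ :=
    ⟨(Complex.measurable_ofReal.comp hπ_meas.sqrt).aestronglyMeasurable,
      by rw [aux_eLpNorm_sqrt μ _ hπ_nonneg hπ_lint]; exact ENNReal.one_lt_top⟩
  set h : Lp ℂ 2 μ := hsqrtπ_mem.toLp _ with hh_def
  have hh : (h : Ω → ℂ) =ᵐ[μ] fun x => (Real.sqrt (π x) : ℂ) := hsqrtπ_mem.coeFn_toLp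
  intro g hg
  -- T h = g
  have hTh : T h = g := Lp.ext ((part3 h hh).trans hg.symm)
  -- adjoint T g = h
  have hadj : adjoint T g = h := by
    apply ext_inner_right ℂ
    intro f
    rw [adjoint_inner_left, L2.inner_def, L2.inner_def]
    set G : Ω × Ω → ℂ := fun z => ((Real.sqrt (π z.1) * p z.1 z.2 : ℝ) : ℂ) * f z.1 with hG_def
    have e1 : (fun z : Ω × Ω =>
        (inner ℂ ((g : Ω × Ω → ℂ) z) ((T f : Ω × Ω → ℂ) z) : ℂ)) =ᵐ[μ.prod μ] G := by
      filter_upwards [hg, hT f] with z h1 h2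
      simp only [RCLike.inner_apply, h1, h2, hG_def]
      rw [Complex.conj_ofReal]
      have : Real.sqrt (π z.1 * p z.1 z.2) * Real.sqrt (p z.1 z.2)
          = Real.sqrt (π z.1) * p z.1 z.2 := by
        rw [Real.sqrt_mul (hπ_nonneg _), mul_assoc, Real.mul_self_sqrt (hp_nonneg _ _)]
      push_cast [← this]
      ring
    have hGint : Integrable G (μ.prod μ) := (L2.integrable_inner (𝕜 := ℂ) g (T f)).congr e1
    rw [integral_congr_ae e1, integral_prod _ hGint]
    have e2 : (fun x => (inner ℂ ((h : Ω → ℂ) x) ((f : Ω → ℂ) x) : ℂ)) =ᵐ[μ]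
        fun x => (Real.sqrt (π x) : ℂ) * f x := by
      filter_upwards [hh] with x hx
      simp [RCLike.inner_apply, hx, Complex.conj_ofReal]
      ring
    rw [integral_congr_ae e2]
    refine integral_congr_ae ?_
    filter_upwards [hp_int, hp_integrable] with x hx hxi
    calc ∫ y, G (x, y) ∂μ
        = ∫ y, ((Real.sqrt (π x) : ℂ) * f x) * ((p x y : ℝ) : ℂ) ∂μ := by
          refine integral_congr_ae (Filter.Eventually.of_forall fun y => ?_)
          simp only [hG_def]
          push_cast
          ring
      _ = ((Real.sqrt (π x) : ℂ) * f x) * ∫ y, ((p x y : ℝ) : ℂ) ∂μ :=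
          integral_const_mul _ _
      _ = (Real.sqrt (π x) : ℂ) * f x := by
          have hi : ∫ y, ((p x y : ℝ) : ℂ) ∂μ = ((∫ y, p x y ∂μ : ℝ) : ℂ) := integral_ofReal
          rw [hi, hx, Complex.ofReal_one, mul_one]
  -- (2TT* - 1) g = g
  have hC : (((2 : ℂ) • (T ∘L adjoint T) - 1) : Lp ℂ 2 (μ.prod μ) →L[ℂ] Lp ℂ 2 (μ.prod μ)) g
      = g := by
    rw [ContinuousLinearMap.sub_apply, ContinuousLinearMap.smul_apply,
      ContinuousLinearMap.comp_apply, hadj, hTh, ContinuousLinearMap.one_apply,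
      two_smul]
    abel
  -- S g = g
  have hswap : ∀ᵐ z ∂(μ.prod μ), (g : Ω × Ω → ℂ) (z.2, z.1)
      = (Real.sqrt (π z.2 * p z.2 z.1) : ℂ) :=
    (Measure.measurePreserving_swap (μ := μ) (ν := μ)).quasiMeasurePreserving.ae hg
  have hSg : S g = g := by
    apply Lp.ext
    filter_upwards [hS g, hswap, hdb, hg] with z h1 h2 h3 h4
    rw [h1, h2, h4, h3]
  rw [hW, ContinuousLinearMap.comp_apply, hC, hSg]
end

section
/- Let n ≥ 2 be an integer, let a > 0, and set b := (1 − 1/√n)·a. Then ∫_{K'} √(π_a(x) π_b(x)) dx = (∫_{K'} e^{−((a+b)/2)·x₀} dx) / √(Z(a) Z(b)) > 1/3. -/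
/-!
Put `m = (a + b) / 2`. Substituting `x ↦ c • x` gives `c ^ (n + 1) Z(c) = ∫_{c K'} e^{-x₀}`, and
for convex `K'` the midpoints of `a K'` and `b K'` lie in `m K'`. The Prékopa–Leindler inequality,
applied to `e^{-x₀}` restricted to `a K'`, `b K'` and `m K'`, therefore gives
`√(a ^ (n + 1) Z(a) b ^ (n + 1) Z(b)) ≤ m ^ (n + 1) Z(m)`, so the ratio in question is at least
`(a b / m²) ^ ((n + 1) / 2)`. For `b = (1 - 1/√n) a` one has `m² / (a b) = 1 + 1/(4 √n (√n - 1))`,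
whence `(m² / (a b)) ^ (n + 1) ≤ e² < 9`.

Prékopa–Leindler is proved by induction on the dimension with Fubini. In dimension one, after
dividing `f`, `g` by their suprema and `h` by the geometric mean of these, the superlevel sets
`{f > t}`, `{g > t}` have their midpoints inside `{h > t}`, so the one-dimensional Brunn–Minkowski
inequality `|A| + |B| ≤ 2 |C|` integrates over `t` to `∫ f + ∫ g ≤ 2 ∫ h`, and AM–GM gives
`√(∫ f ∫ g) ≤ ∫ h`.
-/

open MeasureTheory Set
open scoped Pointwise

namespace Real

theorem two_mul_volume_image_half_add (c : ℝ) (s : Set ℝ) :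
    2 * volume ((fun x => (x + c) / 2) '' s) = volume s := by
  have h : (fun x : ℝ => (x + c) / 2) = AffineMap.homothety c (1 / 2 : ℝ) := by
    funext x
    simp only [AffineMap.homothety_apply, vsub_eq_sub, vadd_eq_add, smul_eq_mul]
    ring
  rw [h, Measure.addHaar_image_homothety, Module.finrank_self, pow_one, ← mul_assoc,
    ← ENNReal.ofReal_ofNat 2, ← ENNReal.ofReal_mul zero_le_two]
  norm_num

theorem volume_add_volume_le_of_isCompact_midpoint {A B C : Set ℝ} (hA : IsCompact A)
    (hB : IsCompact B) (hA₀ : A.Nonempty) (hB₀ : B.Nonempty)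
    (H : ∀ x ∈ A, ∀ y ∈ B, (x + y) / 2 ∈ C) :
    volume A + volume B ≤ 2 * volume C := by
  set a := sSup A
  set b := sInf B
  have ha : a ∈ A := hA.sSup_mem hA₀
  have hb : b ∈ B := hB.sInf_mem hB₀
  set X := (fun x => (x + b) / 2) '' A
  set Y := (fun y => (y + a) / 2) '' B
  have hXC : X ⊆ C := by
    rintro _ ⟨x, hx, rfl⟩
    exact H x hx b hb
  have hYC : Y ⊆ C := by
    rintro _ ⟨y, hy, rfl⟩
    show (y + a) / 2 ∈ C
    rw [add_comm]
    exact H a ha y hy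
  -- `A` lies left of `a` and `B` right of `b`, so the two translates meet only at `(a + b) / 2`.
  have hXY : X ∩ Y ⊆ {(a + b) / 2} := by
    rintro _ ⟨⟨x, hx, rfl⟩, ⟨y, hy, hxy⟩⟩
    have := le_csSup hA.bddAbove hx
    have := csInf_le hB.bddBelow hy
    simp only at hxy
    rw [mem_singleton_iff]
    linarith
  calc volume A + volume B = 2 * (volume (X ∪ Y) + volume (X ∩ Y)) := by
        rw [measure_union_add_inter X (hB.image (by fun_prop)).measurableSet,
          mul_add, two_mul_volume_image_half_add, two_mul_volume_image_half_add]
    _ ≤ 2 * volume C := by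
        rw [measure_mono_null hXY (measure_singleton _), add_zero]
        gcongr
        exact union_subset hXC hYC

theorem volume_add_volume_le_of_midpoint {A B C : Set ℝ} (hA : MeasurableSet A)
    (hB : MeasurableSet B) (hA₀ : A.Nonempty) (hB₀ : B.Nonempty)
    (H : ∀ x ∈ A, ∀ y ∈ B, (x + y) / 2 ∈ C) :
    volume A + volume B ≤ 2 * volume C := by
  obtain ⟨x₀, hx₀⟩ := hA₀
  obtain ⟨y₀, hy₀⟩ := hB₀
  rw [hA.measure_eq_iSup_isCompact, hB.measure_eq_iSup_isCompact]
  simp_rw [iSup_and']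
  refine ENNReal.biSup_add_biSup_le' ⟨∅, empty_subset _, isCompact_empty⟩
    ⟨∅, empty_subset _, isCompact_empty⟩ fun K hK L hL => ?_
  -- Enlarging `K` and `L` by a point makes them nonempty without decreasing their measure.
  calc volume K + volume L ≤ volume (insert x₀ K) + volume (insert y₀ L) :=
        add_le_add (measure_mono (subset_insert _ _)) (measure_mono (subset_insert _ _))
    _ ≤ 2 * volume C :=
        volume_add_volume_le_of_isCompact_midpoint (hK.2.insert x₀) (hL.2.insert y₀)
          (insert_nonempty _ _) (insert_nonempty _ _) fun x hx y hy =>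
            H x (insert_subset hx₀ hK.1 hx) y (insert_subset hy₀ hL.1 hy)

theorem lintegral_add_lintegral_le_of_min_le {f g h : ℝ → ℝ} (hf : Measurable f)
    (hg : Measurable g) (hh : AEMeasurable h) (hf₀ : 0 ≤ f) (hg₀ : 0 ≤ g)
    (hf₁ : ∀ x, f x ≤ 1) (hg₁ : ∀ y, g y ≤ 1)
    (hf_sup : ∀ t < 1, ∃ x, t < f x) (hg_sup : ∀ t < 1, ∃ y, t < g y)
    (H : ∀ x y, min (f x) (g y) ≤ h ((x + y) / 2)) :
    (∫⁻ x, ENNReal.ofReal (f x)) + ∫⁻ y, ENNReal.ofReal (g y) ≤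
      2 * ∫⁻ z, ENNReal.ofReal (h z) := by
  have hh₀ : 0 ≤ h := fun z => by
    simpa using (le_min (hf₀ z) (hg₀ z)).trans (H z z)
  have hlevel : ∀ t ∈ Ioi (0 : ℝ),
      volume {x | t < f x} + volume {y | t < g y} ≤ 2 * volume {z | t < h z} := by
    intro t _
    rcases lt_or_ge t 1 with ht | ht
    · obtain ⟨x, hx⟩ := hf_sup t ht
      obtain ⟨y, hy⟩ := hg_sup t ht
      exact volume_add_volume_le_of_midpoint (measurableSet_lt measurable_const hf)
        (measurableSet_lt measurable_const hg) ⟨x, hx⟩ ⟨y, hy⟩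
        fun x hx y hy => (lt_min hx hy).trans_le (H x y)
    · have hfe : {x | t < f x} = ∅ := eq_empty_of_forall_notMem fun x hx =>
        (hf₁ x).not_gt (ht.trans_lt hx)
      have hge : {y | t < g y} = ∅ := eq_empty_of_forall_notMem fun y hy =>
        (hg₁ y).not_gt (ht.trans_lt hy)
      simp [hfe, hge]
  rw [lintegral_eq_lintegral_meas_lt volume (ae_of_all _ fun x => hf₀ x) hf.aemeasurable,
    lintegral_eq_lintegral_meas_lt volume (ae_of_all _ fun x => hg₀ x) hg.aemeasurable,
    lintegral_eq_lintegral_meas_lt volume (ae_of_all _ fun x => hh₀ x) hh,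
    ← lintegral_const_mul' _ _ ENNReal.ofNat_ne_top]
  exact (le_lintegral_add _ _).trans (setLIntegral_mono' measurableSet_Ioi hlevel)

theorem integral_add_integral_le_of_min_le {f g h : ℝ → ℝ} (hf : Measurable f)
    (hg : Measurable g) (hf₀ : 0 ≤ f) (hg₀ : 0 ≤ g)
    (hf₁ : ∀ x, f x ≤ 1) (hg₁ : ∀ y, g y ≤ 1)
    (hf_sup : ∀ t < 1, ∃ x, t < f x) (hg_sup : ∀ t < 1, ∃ y, t < g y)
    (hfi : Integrable f) (hgi : Integrable g) (hhi : Integrable h)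
    (H : ∀ x y, min (f x) (g y) ≤ h ((x + y) / 2)) :
    (∫ x, f x) + ∫ y, g y ≤ 2 * ∫ z, h z := by
  have hh₀ : 0 ≤ h := fun z => by
    simpa using (le_min (hf₀ z) (hg₀ z)).trans (H z z)
  have key := lintegral_add_lintegral_le_of_min_le hf hg hhi.aemeasurable hf₀ hg₀ hf₁ hg₁
    hf_sup hg_sup H
  rw [← ofReal_integral_eq_lintegral_ofReal hfi (ae_of_all _ fun x => hf₀ x),
    ← ofReal_integral_eq_lintegral_ofReal hgi (ae_of_all _ fun y => hg₀ y),
    ← ofReal_integral_eq_lintegral_ofReal hhi (ae_of_all _ fun z => hh₀ z),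
    ← ENNReal.ofReal_add (integral_nonneg hf₀) (integral_nonneg hg₀),
    ← ENNReal.ofReal_ofNat 2, ← ENNReal.ofReal_mul zero_le_two,
    ENNReal.ofReal_le_ofReal_iff (mul_nonneg zero_le_two (integral_nonneg hh₀))] at key
  exact key

theorem min_le_sqrt_mul {u v : ℝ} (hu : 0 ≤ u) (hv : 0 ≤ v) : min u v ≤ √(u * v) :=
  (Real.le_sqrt (le_min hu hv) (mul_nonneg hu hv)).mpr <| by
    rw [sq]; exact mul_le_mul (min_le_left u v) (min_le_right u v) (le_min hu hv) hu

theorem sqrt_mul_le_add_div_two {u v : ℝ} (hu : 0 ≤ u) (hv : 0 ≤ v) : √(u * v) ≤ (u + v) / 2 :=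
  Real.sqrt_le_iff.mpr ⟨by positivity, by nlinarith [sq_nonneg (u - v)]⟩

theorem integral_div_iSup_add_integral_div_iSup_le {f g h : ℝ → ℝ} (hf : Measurable f)
    (hg : Measurable g) (hf₀ : 0 ≤ f) (hg₀ : 0 ≤ g) (hfb : BddAbove (range f))
    (hgb : BddAbove (range g)) (hfi : Integrable f) (hgi : Integrable g) (hhi : Integrable h)
    (hF : 0 < ⨆ x, f x) (hG : 0 < ⨆ y, g y) (H : ∀ x y, √(f x * g y) ≤ h ((x + y) / 2)) :
    (∫ x, f x) / (⨆ x, f x) + (∫ y, g y) / (⨆ y, g y) ≤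
      2 * ((∫ z, h z) / √((⨆ x, f x) * ⨆ y, g y)) := by
  set F := ⨆ x, f x
  set G := ⨆ y, g y
  set c := √(F * G)
  have hc : 0 < c := Real.sqrt_pos.mpr (mul_pos hF hG)
  have hmin : ∀ x y, min (f x / F) (g y / G) ≤ h ((x + y) / 2) / c := fun x y => by
    calc min (f x / F) (g y / G) ≤ √(f x / F * (g y / G)) :=
          min_le_sqrt_mul (div_nonneg (hf₀ x) hF.le) (div_nonneg (hg₀ y) hG.le)
      _ = √(f x * g y) / c := by
          rw [div_mul_div_comm, Real.sqrt_div (mul_nonneg (hf₀ x) (hg₀ y))]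
      _ ≤ h ((x + y) / 2) / c := by gcongr; exact H x y
  simpa only [integral_div] using integral_add_integral_le_of_min_le (hf.div_const F)
    (hg.div_const G) (fun x => div_nonneg (hf₀ x) hF.le) (fun y => div_nonneg (hg₀ y) hG.le)
    (fun x => div_le_one_of_le₀ (le_ciSup hfb x) hF.le)
    (fun y => div_le_one_of_le₀ (le_ciSup hgb y) hG.le)
    (fun t ht => (exists_lt_of_lt_ciSup (by nlinarith : t * F < F)).imp fun x hx =>
      (lt_div_iff₀ hF).mpr hx)
    (fun t ht => (exists_lt_of_lt_ciSup (by nlinarith : t * G < G)).imp fun y hy =>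
      (lt_div_iff₀ hG).mpr hy)
    (hfi.div_const F) (hgi.div_const G) (hhi.div_const c) hmin

theorem sqrt_integral_mul_le_integral {f g h : ℝ → ℝ} (hf : Measurable f)
    (hg : Measurable g) (hf₀ : 0 ≤ f) (hg₀ : 0 ≤ g) (hfb : BddAbove (range f))
    (hgb : BddAbove (range g)) (hfi : Integrable f) (hgi : Integrable g) (hhi : Integrable h)
    (H : ∀ x y, √(f x * g y) ≤ h ((x + y) / 2)) :
    √((∫ x, f x) * ∫ y, g y) ≤ ∫ z, h z := by
  have hh₀ : 0 ≤ h := fun z => by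
    simpa using (Real.sqrt_nonneg _).trans (H z z)
  set F := ⨆ x, f x
  set G := ⨆ y, g y
  have hfF : ∀ x, f x ≤ F := le_ciSup hfb
  have hgG : ∀ y, g y ≤ G := le_ciSup hgb
  rcases (show 0 ≤ F from (hf₀ 0).trans (hfF 0)).eq_or_lt with hF | hF
  · have : f = 0 := funext fun x => le_antisymm ((hfF x).trans hF.ge) (hf₀ x)
    simpa [this] using integral_nonneg hh₀
  rcases (show 0 ≤ G from (hg₀ 0).trans (hgG 0)).eq_or_lt with hG | hG
  · have : g = 0 := funext fun y => le_antisymm ((hgG y).trans hG.ge) (hg₀ y)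
    simpa [this] using integral_nonneg hh₀
  have hnorm : (∫ x, f x) / F + (∫ y, g y) / G ≤ 2 * ((∫ z, h z) / √(F * G)) :=
    integral_div_iSup_add_integral_div_iSup_le hf hg hf₀ hg₀ hfb hgb hfi hgi hhi hF hG H
  have hc : 0 < √(F * G) := Real.sqrt_pos.mpr (mul_pos hF hG)
  calc √((∫ x, f x) * ∫ y, g y)
      = √(F * G) * √((∫ x, f x) / F * ((∫ y, g y) / G)) := by
        rw [← Real.sqrt_mul (mul_pos hF hG).le]
        congr 1
        field_simp
    _ ≤ √(F * G) * (((∫ x, f x) / F + (∫ y, g y) / G) / 2) :=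
        mul_le_mul_of_nonneg_left (sqrt_mul_le_add_div_two
          (div_nonneg (integral_nonneg hf₀) hF.le) (div_nonneg (integral_nonneg hg₀) hG.le)) hc.le
    _ ≤ √(F * G) * ((∫ z, h z) / √(F * G)) := mul_le_mul_of_nonneg_left (by linarith) hc.le
    _ = ∫ z, h z := mul_div_cancel₀ _ hc.ne'

end Real

structure NonnegBoundedCompactSupport {X : Type*} [TopologicalSpace X] [MeasurableSpace X]
    (f : X → ℝ) : Prop where
  measurable : Measurable f
  nonneg : 0 ≤ f
  bddAbove : BddAbove (range f)
  hasCompactSupport : HasCompactSupport f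

namespace NonnegBoundedCompactSupport

variable {X Y : Type*} [TopologicalSpace X] [MeasurableSpace X] [TopologicalSpace Y]
  [MeasurableSpace Y]

theorem integrable [OpensMeasurableSpace X] {μ : Measure X} [IsFiniteMeasureOnCompacts μ]
    {f : X → ℝ} (hf : NonnegBoundedCompactSupport f) : Integrable f μ := by
  obtain ⟨M, hM⟩ := hf.bddAbove
  refine (integrableOn_iff_integrable_of_support_subset (subset_tsupport f)).mp <|
    Measure.integrableOn_of_bounded (M := M) hf.hasCompactSupport.measure_lt_top.ne
      hf.measurable.aestronglyMeasurable (ae_of_all _ fun x => ?_)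
  rw [Real.norm_of_nonneg (hf.nonneg x)]
  exact hM (mem_range_self x)

theorem comp_homeomorph [OpensMeasurableSpace X] [BorelSpace Y] {f : Y → ℝ}
    (hf : NonnegBoundedCompactSupport f) (e : X ≃ₜ Y) : NonnegBoundedCompactSupport (f ∘ e) :=
  ⟨hf.measurable.comp e.continuous.measurable, fun x => hf.nonneg (e x),
    hf.bddAbove.mono (range_comp_subset_range e f), hf.hasCompactSupport.comp_homeomorph e⟩

theorem comp_prodMk_right [T2Space X] {f : X × Y → ℝ} (hf : NonnegBoundedCompactSupport f)
    (y : Y) : NonnegBoundedCompactSupport fun x => f (x, y) :=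
  ⟨hf.measurable.comp measurable_prodMk_right, fun x => hf.nonneg (x, y),
    hf.bddAbove.mono (range_comp_subset_range _ f),
    HasCompactSupport.intro (hf.hasCompactSupport.image continuous_fst) fun _ hx =>
      image_eq_zero_of_notMem_tsupport fun h => hx ⟨_, h, rfl⟩⟩

theorem integral_prod_left [OpensMeasurableSpace X] [T2Space X] [T2Space Y] {μ : Measure X}
    [SFinite μ] [IsFiniteMeasureOnCompacts μ] {f : X × Y → ℝ}
    (hf : NonnegBoundedCompactSupport f) :
    NonnegBoundedCompactSupport fun y => ∫ x, f (x, y) ∂μ := by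
  obtain ⟨M, hM⟩ := hf.bddAbove
  set K := Prod.fst '' tsupport f
  have hK : IsCompact K := hf.hasCompactSupport.image continuous_fst
  refine ⟨hf.measurable.stronglyMeasurable.integral_prod_left'.measurable,
    fun y => integral_nonneg fun x => hf.nonneg (x, y), ⟨M * μ.real K, ?_⟩,
    HasCompactSupport.intro (hf.hasCompactSupport.image continuous_snd) fun y hy => ?_⟩
  · rintro _ ⟨y, rfl⟩
    have hslice : ∀ x ∉ K, f (x, y) = 0 := fun _ hx =>
      image_eq_zero_of_notMem_tsupport fun h => hx ⟨_, h, rfl⟩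
    dsimp only
    rw [← setIntegral_eq_integral_of_forall_compl_eq_zero hslice]
    refine (Real.le_norm_self _).trans (norm_setIntegral_le_of_norm_le_const hK.measure_lt_top
      fun x _ => ?_)
    rw [Real.norm_of_nonneg (hf.nonneg (x, y))]
    exact hM (mem_range_self _)
  · exact integral_eq_zero_of_ae <| ae_of_all _ fun _ =>
      image_eq_zero_of_notMem_tsupport fun h => hy ⟨_, h, rfl⟩

theorem indicator [T2Space X] [OpensMeasurableSpace X] {K : Set X} (hK : IsCompact K) {φ : X → ℝ}
    (hφ : Continuous φ) (hφ₀ : 0 ≤ φ) : NonnegBoundedCompactSupport (K.indicator φ) := by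
  obtain ⟨M, hM⟩ := (hK.image hφ).bddAbove
  refine ⟨hφ.measurable.indicator hK.measurableSet, indicator_nonneg fun x _ => hφ₀ x,
    ⟨max M 0, ?_⟩, HasCompactSupport.intro hK fun _ hx => indicator_of_notMem hx φ⟩
  rintro _ ⟨x, rfl⟩
  by_cases hx : x ∈ K
  · rw [indicator_of_mem hx]
    exact le_max_of_le_left (hM (mem_image_of_mem φ hx))
  · rw [indicator_of_notMem hx]
    exact le_max_right M 0

end NonnegBoundedCompactSupport

def PrekopaLeindler (E : Type*) [AddCommGroup E] [Module ℝ E] [TopologicalSpace E]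
    [MeasureSpace E] : Prop :=
  ∀ ⦃f g h : E → ℝ⦄, NonnegBoundedCompactSupport f → NonnegBoundedCompactSupport g →
    NonnegBoundedCompactSupport h → (∀ x y, √(f x * g y) ≤ h (midpoint ℝ x y)) →
    √((∫ x, f x) * ∫ y, g y) ≤ ∫ z, h z

namespace PrekopaLeindler

variable {E F : Type*} [NormedAddCommGroup E] [NormedSpace ℝ E] [MeasureSpace E] [BorelSpace E]
  [NormedAddCommGroup F] [NormedSpace ℝ F] [MeasureSpace F] [BorelSpace F]

theorem of_measurePreserving (hE : PrekopaLeindler E) (e : E ≃L[ℝ] F)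
    (he : MeasurePreserving e) : PrekopaLeindler F := by
  intro f g h hf hg hh H
  have hint : ∀ φ : F → ℝ, ∫ x, φ (e x) = ∫ y, φ y :=
    he.integral_comp e.toHomeomorph.measurableEmbedding
  have hmid : ∀ x y, e (midpoint ℝ x y) = midpoint ℝ (e x) (e y) := fun x y => by
    simp only [midpoint_eq_smul_add, map_smul, map_add]
  simpa only [Function.comp_apply, ContinuousLinearEquiv.coe_toHomeomorph, hint]
    using hE (hf.comp_homeomorph e.toHomeomorph) (hg.comp_homeomorph e.toHomeomorph)
      (hh.comp_homeomorph e.toHomeomorph) fun x y => by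
        simpa only [Function.comp_apply, ContinuousLinearEquiv.coe_toHomeomorph, hmid]
          using H (e x) (e y)

theorem prod [SFinite (volume : Measure E)] [IsFiniteMeasureOnCompacts (volume : Measure E)]
    (hE : PrekopaLeindler E) : PrekopaLeindler (ℝ × E) := by
  intro f g h hf hg hh H
  have hmid : ∀ (s t : ℝ) (x y : E),
      midpoint ℝ (s, x) (t, y) = ((s + t) / 2, midpoint ℝ x y) := fun s t x y => by
    ext
    · simp only [midpoint_eq_smul_add, Prod.smul_fst, Prod.fst_add, smul_eq_mul, invOf_eq_inv]
      ring
    · simp only [midpoint_eq_smul_add, Prod.smul_snd, Prod.snd_add]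
  -- Fubini, and the one-dimensional inequality on every triple of fibres.
  simp only [Measure.volume_eq_prod, integral_prod_symm _ hf.integrable,
    integral_prod_symm _ hg.integrable, integral_prod_symm _ hh.integrable]
  refine hE hf.integral_prod_left hg.integral_prod_left hh.integral_prod_left fun x y => ?_
  exact Real.sqrt_integral_mul_le_integral (hf.comp_prodMk_right x).measurable
    (hg.comp_prodMk_right y).measurable (hf.comp_prodMk_right x).nonneg
    (hg.comp_prodMk_right y).nonneg (hf.comp_prodMk_right x).bddAbove
    (hg.comp_prodMk_right y).bddAbove (hf.comp_prodMk_right x).integrable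
    (hg.comp_prodMk_right y).integrable (hh.comp_prodMk_right _).integrable
    fun s t => by simpa only [hmid] using H (s, x) (t, y)

end PrekopaLeindler

theorem prekopaLeindler_fin_zero : PrekopaLeindler (Fin 0 → ℝ) := by
  intro f g h _ _ _ H
  have hvol : (volume : Measure (Fin 0 → ℝ)).real univ = 1 := by
    simp [Measure.real, volume_pi]
  simp only [integral_unique, hvol, one_smul]
  convert H default default

theorem prekopaLeindler_pi : ∀ d : ℕ, PrekopaLeindler (Fin d → ℝ)
  | 0 => prekopaLeindler_fin_zero
  | d + 1 => by
    refine (prekopaLeindler_pi d).prod.of_measurePreserving (Fin.consEquivL ℝ fun _ => ℝ) ?_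
    have he : ⇑(Fin.consEquivL ℝ fun _ : Fin (d + 1) => ℝ) =
        (MeasurableEquiv.piFinSuccAbove (fun _ : Fin (d + 1) => ℝ) 0).symm := by
      ext p
      simp [MeasurableEquiv.piFinSuccAbove]
    rw [he]
    exact (volume_preserving_piFinSuccAbove (fun _ : Fin (d + 1) => ℝ) 0).symm

theorem sqrt_exp_mul_exp (s t : ℝ) : √(Real.exp s * Real.exp t) = Real.exp ((s + t) / 2) := by
  rw [← Real.exp_add, Real.exp_half]

theorem sqrt_mul_setIntegral_exp_le {d : ℕ} {K : Set (Fin d → ℝ)} (hK : IsCompact K)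
    (hKc : Convex ℝ K) (ℓ : (Fin d → ℝ) →L[ℝ] ℝ) {a b : ℝ} (ha : 0 < a) (hb : 0 < b) :
    √((a ^ d * ∫ x in K, Real.exp (-(a * ℓ x))) * (b ^ d * ∫ x in K, Real.exp (-(b * ℓ x)))) ≤
      ((a + b) / 2) ^ d * ∫ x in K, Real.exp (-((a + b) / 2 * ℓ x)) := by
  set w : (Fin d → ℝ) → ℝ := fun x => Real.exp (-ℓ x)
  have hw : Continuous w := by fun_prop
  -- `c ^ d ∫_K e^{-c ℓ}` is the integral of `e^{-ℓ}` over the dilate `c • K`.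
  have hdil : ∀ c : ℝ, 0 < c →
      ∫ x, (c • K).indicator w x = c ^ d * ∫ x in K, Real.exp (-(c * ℓ x)) := fun c hc => by
    have := Measure.setIntegral_comp_smul_of_pos volume w K hc
    simp only [Module.finrank_fin_fun, smul_eq_mul, w, map_smul] at this
    rw [integral_indicator ((hK.smul c).measurableSet), this, mul_inv_cancel_left₀ (by positivity)]
  have hmid : ∀ x ∈ a • K, ∀ y ∈ b • K, midpoint ℝ x y ∈ ((a + b) / 2) • K := by
    intro x hx y hy
    have hxy : x + y ∈ (a + b) • K := hKc.add_smul ha.le hb.le ▸ add_mem_add hx hy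
    rw [midpoint_eq_smul_add, div_eq_inv_mul, ← smul_smul, invOf_eq_inv]
    exact smul_mem_smul_set hxy
  have H : ∀ x y, √((a • K).indicator w x * (b • K).indicator w y) ≤
      (((a + b) / 2) • K).indicator w (midpoint ℝ x y) := by
    intro x y
    by_cases hx : x ∈ a • K
    · by_cases hy : y ∈ b • K
      · rw [indicator_of_mem hx, indicator_of_mem hy, indicator_of_mem (hmid x hx y hy),
          sqrt_exp_mul_exp]
        refine le_of_eq (congrArg Real.exp ?_)
        simp only [midpoint_eq_smul_add, map_smul, map_add, invOf_eq_inv, smul_eq_mul]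
        ring
      · rw [indicator_of_notMem hy, mul_zero, Real.sqrt_zero]
        exact indicator_nonneg (fun _ _ => (Real.exp_pos _).le) _
    · rw [indicator_of_notMem hx, zero_mul, Real.sqrt_zero]
      exact indicator_nonneg (fun _ _ => (Real.exp_pos _).le) _
  have hw₀ : 0 ≤ w := fun x => (Real.exp_pos _).le
  have := prekopaLeindler_pi d (.indicator (hK.smul a) hw hw₀) (.indicator (hK.smul b) hw hw₀)
    (.indicator (hK.smul _) hw hw₀) H
  rwa [hdil a ha, hdil b hb, hdil _ (by positivity)] at this

theorem setIntegral_pos_of_isCompact {E : Type*} [TopologicalSpace E] [T2Space E] [MeasureSpace E]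
    [OpensMeasurableSpace E] [(volume : Measure E).IsOpenPosMeasure]
    [IsFiniteMeasureOnCompacts (volume : Measure E)] {K : Set E} (hK : IsCompact K)
    (hK₀ : (interior K).Nonempty) {f : E → ℝ} (hf : ContinuousOn f K) (hpos : ∀ x ∈ K, 0 < f x) :
    0 < ∫ x in K, f x := by
  rw [setIntegral_pos_iff_support_of_nonneg_ae
    ((ae_restrict_iff' hK.measurableSet).mpr (ae_of_all _ fun x hx => (hpos x hx).le))
    (hf.integrableOn_compact hK)]
  calc 0 < volume (interior K) := isOpen_interior.measure_pos _ hK₀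
    _ ≤ volume (Function.support f ∩ K) :=
        measure_mono fun x hx => ⟨(hpos x (interior_subset hx)).ne', interior_subset hx⟩

theorem exp_two_lt_nine : Real.exp 2 < 9 := by
  have := Real.exp_one_lt_d9
  rw [show (2 : ℝ) = 1 + 1 by norm_num, Real.exp_add]
  nlinarith [Real.exp_pos 1]

theorem one_sub_one_div_sqrt_pos {n : ℕ} (hn : 2 ≤ n) : 0 < 1 - 1 / √(n : ℝ) := by
  rw [sub_pos, div_lt_one (by positivity), Real.lt_sqrt zero_le_one]
  exact_mod_cast hn

theorem add_div_two_pow_lt_three_mul_sqrt {n : ℕ} (hn : 2 ≤ n) {a b : ℝ} (ha : 0 < a)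
    (hb : b = (1 - 1 / √n) * a) : ((a + b) / 2) ^ (n + 1) < 3 * √((a * b) ^ (n + 1)) := by
  set u := √n
  have hu2 : u ^ 2 = n := Real.sq_sqrt n.cast_nonneg
  have hu : (1.41 : ℝ) ≤ u :=
    Real.le_sqrt_of_sq_le ((by norm_num : (1.41 : ℝ) ^ 2 ≤ 2).trans (by exact_mod_cast hn))
  have hb₀ : 0 < b := hb ▸ mul_pos (one_sub_one_div_sqrt_pos hn) ha
  set q := ((a + b) / 2) ^ 2 / (a * b)
  have hq : q - 1 = 1 / (4 * u * (u - 1)) := by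
    have : u - 1 ≠ 0 := by linarith
    simp only [q, hb]
    field_simp
    ring
  -- `q ^ (n + 1) ≤ exp ((n + 1) (q - 1)) ≤ exp 2`, as `u ^ 2 + 1 ≤ 8 u (u - 1)` for `u ≥ 1.41`.
  have hexp : ((n : ℝ) + 1) * (q - 1) ≤ 2 := by
    rw [hq, ← hu2, mul_one_div, div_le_iff₀ (by nlinarith)]
    nlinarith
  have hq_pow : q ^ (n + 1) < 9 := calc
    q ^ (n + 1) ≤ Real.exp (q - 1) ^ (n + 1) := by
        gcongr
        linarith [Real.add_one_le_exp (q - 1)]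
    _ = Real.exp (((n : ℝ) + 1) * (q - 1)) := by rw [← Real.exp_nat_mul]; push_cast; ring_nf
    _ ≤ Real.exp 2 := Real.exp_le_exp.mpr hexp
    _ < 9 := exp_two_lt_nine
  have hab : 0 < a * b := mul_pos ha hb₀
  rw [show (3 : ℝ) = √9 by rw [show (9 : ℝ) = 3 ^ 2 by norm_num, Real.sqrt_sq zero_le_three],
    ← Real.sqrt_mul (by norm_num), Real.lt_sqrt (by positivity), ← pow_mul, mul_comm,
    pow_mul, show ((a + b) / 2) ^ 2 = q * (a * b) by simp only [q]; field_simp, mul_pow]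
  exact mul_lt_mul_of_pos_right hq_pow (by positivity)

theorem sqrt_exp_div_mul_exp_div (a b t A B : ℝ) :
    √(Real.exp (-(a * t)) / A * (Real.exp (-(b * t)) / B)) =
      Real.exp (-((a + b) / 2 * t)) / √(A * B) := by
  rw [div_mul_div_comm, Real.sqrt_div (by positivity), sqrt_exp_mul_exp]
  ring_nf

/-- For a convex body `K' ⊆ ℝ^{n+1}`, `Z(c) := ∫_{K'} e^{-c x₀} dx` and
`π_c(x) = e^{-c x₀}/Z(c)`. If `n ≥ 2`, `a > 0` and `b = (1 - 1/√n) a`, then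
`∫_{K'} √(π_a π_b) = (∫_{K'} e^{-((a+b)/2) x₀} dx)/√(Z(a) Z(b)) > 1/3`. -/
theorem inner_product_consecutive_stationary_states
    (n : ℕ) (hn : 2 ≤ n) (K' : Set (Fin (n + 1) → ℝ))
    (hK_compact : IsCompact K') (hK_convex : Convex ℝ K')
    (hK_interior : (interior K').Nonempty)
    (Z : ℝ → ℝ) (hZ : ∀ c, Z c = ∫ x in K', Real.exp (-(c * x 0)))
    (a b : ℝ) (ha : 0 < a) (hb : b = (1 - 1 / Real.sqrt n) * a) :
    (∫ x in K', Real.sqrt ((Real.exp (-(a * x 0)) / Z a) * (Real.exp (-(b * x 0)) / Z b)))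
      = (∫ x in K', Real.exp (-(((a + b) / 2) * x 0))) / Real.sqrt (Z a * Z b) ∧
    1 / 3 < (∫ x in K', Real.exp (-(((a + b) / 2) * x 0))) / Real.sqrt (Z a * Z b) := by
  refine ⟨?_, ?_⟩
  · simp_rw [sqrt_exp_div_mul_exp_div, integral_div]
  have hZ₀ : ∀ c, 0 < Z c := fun c => hZ c ▸ setIntegral_pos_of_isCompact hK_compact hK_interior
    (by fun_prop) fun x _ => Real.exp_pos _
  have hb₀ : 0 < b := hb ▸ mul_pos (one_sub_one_div_sqrt_pos hn) ha
  have key := sqrt_mul_setIntegral_exp_le hK_compact hK_convex (ContinuousLinearMap.proj 0) ha hb₀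
  simp only [ContinuousLinearMap.proj_apply, ← hZ a, ← hZ b] at key
  have hm : 0 < ((a + b) / 2) ^ (n + 1) := by positivity
  have hZab : 0 < √(Z a * Z b) := Real.sqrt_pos.mpr (mul_pos (hZ₀ a) (hZ₀ b))
  rw [lt_div_iff₀ hZab]
  refine lt_of_mul_lt_mul_left ?_ hm.le
  calc ((a + b) / 2) ^ (n + 1) * (1 / 3 * √(Z a * Z b))
      < 3 * √((a * b) ^ (n + 1)) * (1 / 3 * √(Z a * Z b)) :=
        mul_lt_mul_of_pos_right (add_div_two_pow_lt_three_mul_sqrt hn ha hb) (by positivity)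
    _ = √(a ^ (n + 1) * Z a * (b ^ (n + 1) * Z b)) := by
        rw [show a ^ (n + 1) * Z a * (b ^ (n + 1) * Z b) = (a * b) ^ (n + 1) * (Z a * Z b) by ring,
          Real.sqrt_mul (x := (a * b) ^ (n + 1)) (by positivity)]
        ring
    _ ≤ _ := key
end

section
/- Let n ≥ 2 be an integer, let a > 0, and set b := (1 − 1/√n)·a. Then the L²-norm of π_a with respect to π_b is at most 8: ∫_{K'} π_a(x)² / π_b(x) dx ≤ 8; equivalently, Z(2a − b) · Z(b) ≤ 8 · Z(a)². -/
open MeasureTheory Set ENNReal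

namespace PLAux

/-- Measure of the preimage of `A` under `y ↦ 2y - b` is half the measure of `A`. -/
lemma vol_preimage_double (A : Set ℝ) (b : ℝ) :
    volume ((fun y : ℝ => 2 * y - b) ⁻¹' A) = volume A / 2 := by
  have hcomp : (fun y : ℝ => 2 * y - b) = (fun z : ℝ => z + (-b)) ∘ (fun y : ℝ => 2 * y) := by
    funext y; simp [Function.comp]; ring
  rw [hcomp, Set.preimage_comp, Real.volume_preimage_mul_left (two_ne_zero),
    measure_preimage_add_right]
  rw [ENNReal.div_eq_inv_mul]
  congr 1
  rw [abs_of_pos (by norm_num : (0:ℝ) < (2:ℝ)⁻¹)]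
  rw [ENNReal.ofReal_inv_of_pos (by norm_num : (0:ℝ) < 2)]
  norm_num

/-- One-sided bound: if the half-sum of `A` with a fixed point lands in `C`. -/
lemma half_bound (A C : Set ℝ) (b : ℝ)
    (h : ∀ x ∈ A, (x + b) / 2 ∈ C) : volume A ≤ 2 * volume C := by
  have hsub : (fun y : ℝ => 2 * y - b) ⁻¹' A ⊆ C := by
    intro y hy
    have := h _ hy
    have heq : (2 * y - b + b) / 2 = y := by ring
    rwa [heq] at this
  have := measure_mono hsub (μ := volume)
  rw [vol_preimage_double] at this
  rw [ENNReal.div_le_iff_le_mul (Or.inl two_ne_zero) (Or.inl (by norm_num))] at this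
  rwa [mul_comm] at this


/-- 1-D Brunn–Minkowski-type bound for midpoint sets. -/
lemma sumset_bound (A B C : Set ℝ) (hA : MeasurableSet A) (hB : MeasurableSet B)
    (hAne : A.Nonempty) (hBne : B.Nonempty)
    (h : ∀ x ∈ A, ∀ y ∈ B, (x + y) / 2 ∈ C) :
    volume A + volume B ≤ 2 * volume C := by
  obtain ⟨a₀, ha₀⟩ := hAne
  obtain ⟨b₀, hb₀⟩ := hBne
  have hA2 : volume A ≤ 2 * volume C := half_bound A C b₀ (fun x hx => h x hx b₀ hb₀)
  have hB2 : volume B ≤ 2 * volume C := by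
    refine half_bound B C a₀ (fun y hy => ?_)
    have := h a₀ ha₀ y hy
    rwa [add_comm] at this
  by_cases hA0 : volume A = 0
  · rw [hA0, zero_add]; exact hB2
  by_cases hB0 : volume B = 0
  · rw [hB0, add_zero]; exact hA2
  by_cases hAt : volume A = ⊤
  · have : 2 * volume C = ⊤ := top_le_iff.mp (hAt ▸ hA2)
    rw [this]; exact le_top
  by_cases hBt : volume B = ⊤
  · have : 2 * volume C = ⊤ := top_le_iff.mp (hBt ▸ hB2)
    rw [this]; exact le_top
  -- main case : both measures positive and finite
  refine ENNReal.le_of_forall_pos_le_add (fun ε hε _ => ?_)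
  have hε2 : ((ε : ℝ≥0∞) / 2) ≠ 0 := by
    simp [ENNReal.div_eq_top, hε.ne']
  obtain ⟨K₀, hK₀A, hK₀c, hK₀⟩ := hA.exists_isCompact_lt_add hAt hε2
  obtain ⟨L₀, hL₀B, hL₀c, hL₀⟩ := hB.exists_isCompact_lt_add hBt hε2
  set K : Set ℝ := K₀ ∪ {a₀} with hK
  set L : Set ℝ := L₀ ∪ {b₀} with hL
  have hKc : IsCompact K := hK₀c.union isCompact_singleton
  have hLc : IsCompact L := hL₀c.union isCompact_singleton
  have hKA : K ⊆ A := union_subset hK₀A (by simpa using ha₀)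
  have hLB : L ⊆ B := union_subset hL₀B (by simpa using hb₀)
  have hKne : K.Nonempty := ⟨a₀, Or.inr rfl⟩
  have hLne : L.Nonempty := ⟨b₀, Or.inr rfl⟩
  have hKm : volume A < volume K + ε / 2 := lt_of_lt_of_le hK₀ (by gcongr; exact subset_union_left)
  have hLm : volume B < volume L + ε / 2 := lt_of_lt_of_le hL₀ (by gcongr; exact subset_union_left)
  set sK : ℝ := sSup K with hsK
  set iL : ℝ := sInf L with hiL
  have hsKmem : sK ∈ K := hKc.sSup_mem hKne
  have hiLmem : iL ∈ L := hLc.sInf_mem hLne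
  set U : Set ℝ := (fun y : ℝ => 2 * y - iL) ⁻¹' K with hU
  set V : Set ℝ := (fun y : ℝ => 2 * y - sK) ⁻¹' L with hV
  have hKmeas : MeasurableSet K := hKc.isClosed.measurableSet
  have hLmeas : MeasurableSet L := hLc.isClosed.measurableSet
  have hUmeas : MeasurableSet U := hKmeas.preimage (by fun_prop)
  have hVmeas : MeasurableSet V := hLmeas.preimage (by fun_prop)
  have hUC : U ⊆ C := by
    intro y hy
    have hx : 2 * y - iL ∈ A := hKA hy
    have := h _ hx iL (hLB hiLmem)
    have heq : (2 * y - iL + iL) / 2 = y := by ring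
    rwa [heq] at this
  have hVC : V ⊆ C := by
    intro y hy
    have hz : 2 * y - sK ∈ B := hLB hy
    have := h sK (hKA hsKmem) _ hz
    have heq : (sK + (2 * y - sK)) / 2 = y := by ring
    rwa [heq] at this
  have hUV : U ∩ V ⊆ {(sK + iL) / 2} := by
    rintro y ⟨hyU, hyV⟩
    have h1 : 2 * y - iL ≤ sK := le_csSup hKc.bddAbove hyU
    have h2 : iL ≤ 2 * y - sK := csInf_le hLc.bddBelow hyV
    have : y = (sK + iL) / 2 := by linarith
    simpa [this]
  have hUVnull : volume (U ∩ V) = 0 :=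
    le_antisymm (le_trans (measure_mono hUV) (by simp)) zero_le
  have hunion : volume U + volume V = volume (U ∪ V) := by
    have := measure_union_add_inter (μ := volume) U hVmeas
    rw [hUVnull, add_zero] at this
    exact this.symm
  have hvolU : volume U = volume K / 2 := vol_preimage_double K iL
  have hvolV : volume V = volume L / 2 := vol_preimage_double L sK
  have hCbound : volume K / 2 + volume L / 2 ≤ volume C := by
    rw [← hvolU, ← hvolV, hunion]
    exact measure_mono (union_subset hUC hVC)
  have h2C : volume K + volume L ≤ 2 * volume C := by
    have := mul_le_mul_right hCbound 2
    rw [mul_add] at this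
    have hK2 : 2 * (volume K / 2) = volume K := ENNReal.mul_div_cancel two_ne_zero (by norm_num)
    have hL2 : 2 * (volume L / 2) = volume L := ENNReal.mul_div_cancel two_ne_zero (by norm_num)
    rwa [hK2, hL2] at this
  calc volume A + volume B ≤ (volume K + ε / 2) + (volume L + ε / 2) :=
        add_le_add hKm.le hLm.le
    _ = (volume K + volume L) + (ε / 2 + ε / 2) := by ring
    _ = (volume K + volume L) + ε := by rw [ENNReal.add_halves]
    _ ≤ 2 * volume C + ε := add_le_add_left h2C _


section Layercake

variable {α : Type*} [MeasurableSpace α]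

lemma vol_level_set (c : ℝ≥0∞) :
    volume {t : ℝ | 0 < t ∧ ENNReal.ofReal t < c} = c := by
  by_cases hc : c = ⊤
  · have : {t : ℝ | 0 < t ∧ ENNReal.ofReal t < c} = Ioi 0 := by
      ext t; simp [hc, ENNReal.ofReal_lt_top]
    rw [this, Real.volume_Ioi, hc]
  · have : {t : ℝ | 0 < t ∧ ENNReal.ofReal t < c} = Ioo 0 c.toReal := by
      ext t
      simp only [mem_setOf_eq, mem_Ioo]
      exact and_congr_right fun ht => ENNReal.ofReal_lt_iff_lt_toReal ht.le hc
    rw [this, Real.volume_Ioo, sub_zero, ENNReal.ofReal_toReal hc]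

/-- Layer-cake formula for `ℝ≥0∞`-valued functions. -/
lemma lintegral_eq_lintegral_meas_lt_ennreal (μ : Measure α) [SFinite μ]
    (f : α → ℝ≥0∞) (hf : Measurable f) :
    ∫⁻ x, f x ∂μ = ∫⁻ t in Ioi (0:ℝ), μ {x | ENNReal.ofReal t < f x} := by
  have hSmeas : MeasurableSet {p : α × ℝ | 0 < p.2 ∧ ENNReal.ofReal p.2 < f p.1} := by
    apply MeasurableSet.inter
    · exact measurable_snd measurableSet_Ioi
    · exact (Measurable.prodMk (ENNReal.measurable_ofReal.comp measurable_snd)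
        (hf.comp measurable_fst)) (measurableSet_lt measurable_fst measurable_snd)
  have key : ∀ x, f x = ∫⁻ t, {t : ℝ | 0 < t ∧ ENNReal.ofReal t < f x}.indicator 1 t := by
    intro x
    rw [lintegral_indicator_one]
    · exact (vol_level_set (f x)).symm
    · exact MeasurableSet.inter measurableSet_Ioi
        ((Measurable.prodMk ENNReal.measurable_ofReal measurable_const)
          (measurableSet_lt measurable_fst measurable_snd))
  calc ∫⁻ x, f x ∂μ
      = ∫⁻ x, ∫⁻ t, ({t : ℝ | 0 < t ∧ ENNReal.ofReal t < f x}.indicator 1 t) ∂volume ∂μ := by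
        exact lintegral_congr key
    _ = ∫⁻ t, ∫⁻ x, ({t : ℝ | 0 < t ∧ ENNReal.ofReal t < f x}.indicator 1 t) ∂μ ∂volume := by
        apply lintegral_lintegral_swap
        apply Measurable.aemeasurable
        have : (Function.uncurry fun (x : α) (t : ℝ) =>
            ({t : ℝ | 0 < t ∧ ENNReal.ofReal t < f x}.indicator (1 : ℝ → ℝ≥0∞) t)) =
            {p : α × ℝ | 0 < p.2 ∧ ENNReal.ofReal p.2 < f p.1}.indicator
              (1 : α × ℝ → ℝ≥0∞) := by
          funext p
          rcases p with ⟨x, t⟩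
          simp [Function.uncurry, Set.indicator_apply, mem_setOf_eq]
        rw [this]
        exact measurable_const.indicator hSmeas
    _ = ∫⁻ t, (Ioi (0:ℝ)).indicator (fun t => μ {x | ENNReal.ofReal t < f x}) t ∂volume := by
        apply lintegral_congr
        intro t
        by_cases ht : 0 < t
        · rw [Set.indicator_of_mem (mem_Ioi.mpr ht) (fun t => μ {x | ENNReal.ofReal t < f x})]
          have : ∀ x, ({t : ℝ | 0 < t ∧ ENNReal.ofReal t < f x}.indicator 1 t : ℝ≥0∞) =
              {x | ENNReal.ofReal t < f x}.indicator 1 x := by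
            intro x
            simp [Set.indicator_apply, mem_setOf_eq, ht]
          rw [lintegral_congr this, lintegral_indicator_one]
          exact (Measurable.prodMk measurable_const hf)
            (measurableSet_lt measurable_fst measurable_snd)
        · rw [Set.indicator_of_notMem (by simpa using ht) (fun t => μ {x | ENNReal.ofReal t < f x})]
          have : ∀ x, ({t : ℝ | 0 < t ∧ ENNReal.ofReal t < f x}.indicator 1 t : ℝ≥0∞) = 0 := by
            intro x
            simp [Set.indicator_apply, ht]
          rw [lintegral_congr this, lintegral_zero]
    _ = ∫⁻ t in Ioi (0:ℝ), μ {x | ENNReal.ofReal t < f x} ∂volume := by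
        rw [← lintegral_indicator measurableSet_Ioi]

end Layercake


lemma measSet_lt_fun {α : Type*} [MeasurableSpace α] {f : α → ℝ≥0∞} (hf : Measurable f)
    (c : ℝ≥0∞) : MeasurableSet {x | c < f x} :=
  (Measurable.prodMk measurable_const hf) (measurableSet_lt measurable_fst measurable_snd)

lemma lintegral_scale (M : ℝ) (hM : 0 < M) (G : ℝ → ℝ≥0∞) (hG : Measurable G) :
    ∫⁻ s, G s = ENNReal.ofReal M * ∫⁻ t, G (M * t) := by
  have hmap : ∫⁻ t, G (M * t) ∂volume = ∫⁻ s, G s ∂(Measure.map (fun x => M * x) volume) :=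
    (lintegral_map hG (measurable_const_mul M)).symm
  rw [hmap, Real.map_volume_mul_left hM.ne', lintegral_smul_measure, smul_eq_mul, ← mul_assoc,
    abs_of_pos (inv_pos.mpr hM), ← ENNReal.ofReal_mul hM.le, mul_inv_cancel₀ hM.ne',
    ENNReal.ofReal_one, one_mul]

lemma ennreal_amgm {A B C : ℝ≥0∞} (h : A + B ≤ 2 * C) : A * B ≤ C ^ 2 := by
  by_cases hC : C = ⊤
  · have : C ^ 2 = ⊤ := by rw [hC]; simp [pow_two]
    rw [this]
    exact le_top
  · have h2C : 2 * C ≠ ⊤ := ENNReal.mul_ne_top (by norm_num) hC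
    have hA : A ≠ ⊤ := fun h' => h2C (top_le_iff.mp (h' ▸ le_trans le_self_add h))
    have hB : B ≠ ⊤ := fun h' => h2C (top_le_iff.mp (h' ▸ le_trans le_add_self h))
    have hr := ENNReal.toReal_mono h2C h
    rw [ENNReal.toReal_add hA hB, ENNReal.toReal_mul] at hr
    have h2 : (2 : ℝ≥0∞).toReal = 2 := by simp
    rw [h2] at hr
    rw [← ENNReal.ofReal_toReal hA, ← ENNReal.ofReal_toReal hB, ← ENNReal.ofReal_toReal hC,
      ← ENNReal.ofReal_mul ENNReal.toReal_nonneg, ← ENNReal.ofReal_pow ENNReal.toReal_nonneg]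
    apply ENNReal.ofReal_le_ofReal
    nlinarith [sq_nonneg (A.toReal - B.toReal), ENNReal.toReal_nonneg (a := A),
      ENNReal.toReal_nonneg (a := B)]

/-- Midpoint Prékopa–Leindler inequality in dimension 1, `ℝ≥0∞`-valued. -/
lemma dim1_PL (f g h : ℝ → ℝ≥0∞) (hf : Measurable f) (hg : Measurable g) (hh : Measurable h)
    (hyp : ∀ x y, f x * g y ≤ (h ((x + y) / 2)) ^ 2) :
    (∫⁻ x, f x) * (∫⁻ y, g y) ≤ (∫⁻ z, h z) ^ 2 := by
  -- reduce to truncated functions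
  suffices key : ∀ N : ℕ, (∫⁻ x, min (f x) N) * (∫⁻ y, min (g y) N) ≤ (∫⁻ z, h z) ^ 2 by
    have hsup : ∀ (f : ℝ → ℝ≥0∞) (x : ℝ), ⨆ N : ℕ, min (f x) N = f x := by
      intro f x
      apply le_antisymm (iSup_le fun N => min_le_left _ _)
      by_cases hx : f x = ⊤
      · rw [hx]
        calc (⊤ : ℝ≥0∞) = ⨆ N : ℕ, (N : ℝ≥0∞) := (ENNReal.iSup_natCast).symm
          _ = ⨆ N : ℕ, min (⊤ : ℝ≥0∞) N :=
            iSup_congr fun N => (min_eq_right le_top).symm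
          _ ≤ ⨆ N : ℕ, min (⊤ : ℝ≥0∞) N := le_rfl
      · obtain ⟨N, hN⟩ := ENNReal.exists_nat_gt hx
        exact le_iSup_of_le N (min_eq_left hN.le).symm.le
    have hmonof : Monotone fun (N : ℕ) (x : ℝ) => min (f x) N := by
      intro N M hNM x
      exact min_le_min le_rfl (by exact_mod_cast Nat.cast_le.mpr hNM)
    have hmonog : Monotone fun (N : ℕ) (y : ℝ) => min (g y) N := by
      intro N M hNM y
      exact min_le_min le_rfl (by exact_mod_cast Nat.cast_le.mpr hNM)
    have hif : ∫⁻ x, f x = ⨆ N : ℕ, ∫⁻ x, min (f x) N := by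
      rw [← lintegral_iSup (fun N => hf.min measurable_const) hmonof]
      exact lintegral_congr fun x => (hsup f x).symm
    have hig : ∫⁻ y, g y = ⨆ N : ℕ, ∫⁻ y, min (g y) N := by
      rw [← lintegral_iSup (fun N => hg.min measurable_const) hmonog]
      exact lintegral_congr fun y => (hsup g y).symm
    rw [hif, hig, ENNReal.iSup_mul]
    apply iSup_le
    intro N
    rw [ENNReal.mul_iSup]
    apply iSup_le
    intro M
    calc (∫⁻ x, min (f x) N) * ∫⁻ y, min (g y) M
        ≤ (∫⁻ x, min (f x) (max N M : ℕ)) * ∫⁻ y, min (g y) (max N M : ℕ) := by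
          apply mul_le_mul'
          · exact lintegral_mono (hmonof (le_max_left N M))
          · exact lintegral_mono (hmonog (le_max_right N M))
      _ ≤ (∫⁻ z, h z) ^ 2 := key _
  intro N
  set fN : ℝ → ℝ≥0∞ := fun x => min (f x) N with hfN
  set gN : ℝ → ℝ≥0∞ := fun y => min (g y) N with hgN
  have hfNm : Measurable fN := hf.min measurable_const
  have hgNm : Measurable gN := hg.min measurable_const
  by_cases hf0 : ∫⁻ x, fN x = 0
  · rw [hf0, zero_mul]; exact zero_le
  by_cases hg0 : ∫⁻ y, gN y = 0
  · rw [hg0, mul_zero]; exact zero_le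
  -- suprema
  set Sf : ℝ≥0∞ := ⨆ x, fN x with hSf
  set Sg : ℝ≥0∞ := ⨆ y, gN y with hSg
  have hSfne : Sf ≠ ⊤ := by
    refine ne_top_of_le_ne_top (ENNReal.natCast_ne_top N) (iSup_le fun x => min_le_right _ _)
  have hSgne : Sg ≠ ⊤ := by
    refine ne_top_of_le_ne_top (ENNReal.natCast_ne_top N) (iSup_le fun y => min_le_right _ _)
  have hSf0 : Sf ≠ 0 := by
    intro h0
    apply hf0
    have : ∀ x, fN x = 0 := fun x => le_antisymm (h0 ▸ le_iSup fN x) zero_le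
    rw [lintegral_congr this, lintegral_zero]
  have hSg0 : Sg ≠ 0 := by
    intro h0
    apply hg0
    have : ∀ y, gN y = 0 := fun y => le_antisymm (h0 ▸ le_iSup gN y) zero_le
    rw [lintegral_congr this, lintegral_zero]
  set M₁ : ℝ := Sf.toReal with hM₁def
  set M₂ : ℝ := Sg.toReal with hM₂def
  have hM₁ : 0 < M₁ := ENNReal.toReal_pos hSf0 hSfne
  have hM₂ : 0 < M₂ := ENNReal.toReal_pos hSg0 hSgne
  have hSfval : Sf = ENNReal.ofReal M₁ := (ENNReal.ofReal_toReal hSfne).symm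
  have hSgval : Sg = ENNReal.ofReal M₂ := (ENNReal.ofReal_toReal hSgne).symm
  set c : ℝ := Real.sqrt (M₁ * M₂) with hcdef
  have hc : 0 < c := Real.sqrt_pos.mpr (by positivity)
  have hc2 : c ^ 2 = M₁ * M₂ := Real.sq_sqrt (by positivity)
  -- level-set functions
  set φ : ℝ → ℝ≥0∞ := fun t => volume {x | ENNReal.ofReal (M₁ * t) < fN x} with hφ
  set ψ : ℝ → ℝ≥0∞ := fun t => volume {y | ENNReal.ofReal (M₂ * t) < gN y} with hψ
  set χ : ℝ → ℝ≥0∞ := fun t => volume {z | ENNReal.ofReal (c * t) < h z} with hχ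
  have hφanti : Antitone φ := by
    intro t t' htt'
    exact measure_mono fun x hx =>
      lt_of_le_of_lt (ENNReal.ofReal_le_ofReal (by nlinarith)) hx
  have hψanti : Antitone ψ := by
    intro t t' htt'
    exact measure_mono fun y hy =>
      lt_of_le_of_lt (ENNReal.ofReal_le_ofReal (by nlinarith)) hy
  have hχanti : Antitone χ := by
    intro t t' htt'
    exact measure_mono fun z hz =>
      lt_of_le_of_lt (ENNReal.ofReal_le_ofReal (by nlinarith)) hz
  -- scaling identities
  have scaling : ∀ (M : ℝ), 0 < M → ∀ (u : ℝ → ℝ≥0∞), Measurable u →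
      ∫⁻ s in Ioi (0:ℝ), volume {x | ENNReal.ofReal s < u x} =
      ENNReal.ofReal M * ∫⁻ t in Ioi (0:ℝ), volume {x | ENNReal.ofReal (M * t) < u x} := by
    intro M hM u hu
    have hmeas : Measurable fun s : ℝ => volume {x | ENNReal.ofReal s < u x} := by
      apply Antitone.measurable
      intro s s' hss'
      exact measure_mono fun x hx => lt_of_le_of_lt (ENNReal.ofReal_le_ofReal hss') hx
    set G : ℝ → ℝ≥0∞ := (Ioi (0:ℝ)).indicator fun s => volume {x | ENNReal.ofReal s < u x}
      with hG
    have hGm : Measurable G := hmeas.indicator measurableSet_Ioi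
    have h1 : ∫⁻ s in Ioi (0:ℝ), volume {x | ENNReal.ofReal s < u x} = ∫⁻ s, G s := by
      rw [hG, lintegral_indicator measurableSet_Ioi]
    have h2 : ∀ t : ℝ, G (M * t) =
        (Ioi (0:ℝ)).indicator (fun t => volume {x | ENNReal.ofReal (M * t) < u x}) t := by
      intro t
      by_cases ht : 0 < t
      · rw [hG, Set.indicator_of_mem (mem_Ioi.mpr (by positivity)),
          Set.indicator_of_mem (mem_Ioi.mpr ht)]
      · have hMt : ¬ (0 < M * t) := by
          intro hcon
          exact ht (by nlinarith)
        rw [hG, Set.indicator_of_notMem (by simpa using hMt),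
          Set.indicator_of_notMem (by simpa using ht)]
    calc ∫⁻ s in Ioi (0:ℝ), volume {x | ENNReal.ofReal s < u x}
        = ∫⁻ s, G s := h1
      _ = ENNReal.ofReal M * ∫⁻ t, G (M * t) := lintegral_scale M hM G hGm
      _ = ENNReal.ofReal M * ∫⁻ t,
            (Ioi (0:ℝ)).indicator (fun t => volume {x | ENNReal.ofReal (M * t) < u x}) t := by
          rw [lintegral_congr h2]
      _ = ENNReal.ofReal M * ∫⁻ t in Ioi (0:ℝ), volume {x | ENNReal.ofReal (M * t) < u x} := by
          rw [lintegral_indicator measurableSet_Ioi]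
  -- layer cake + scaling for the three functions
  have LCf : ∫⁻ x, fN x = ENNReal.ofReal M₁ * ∫⁻ t in Ioi (0:ℝ), φ t := by
    rw [lintegral_eq_lintegral_meas_lt_ennreal volume fN hfNm]
    exact scaling M₁ hM₁ fN hfNm
  have LCg : ∫⁻ y, gN y = ENNReal.ofReal M₂ * ∫⁻ t in Ioi (0:ℝ), ψ t := by
    rw [lintegral_eq_lintegral_meas_lt_ennreal volume gN hgNm]
    exact scaling M₂ hM₂ gN hgNm
  have LCh : ∫⁻ z, h z = ENNReal.ofReal c * ∫⁻ t in Ioi (0:ℝ), χ t := by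
    rw [lintegral_eq_lintegral_meas_lt_ennreal volume h hh]
    exact scaling c hc h hh
  -- pointwise comparison of level set measures
  have level : ∀ t : ℝ, 0 < t → φ t + ψ t ≤ 2 * χ t := by
    intro t ht
    by_cases ht1 : t < 1
    · -- both level sets are nonempty
      have hAne : {x | ENNReal.ofReal (M₁ * t) < fN x}.Nonempty := by
        have hlt : ENNReal.ofReal (M₁ * t) < Sf := by
          rw [hSfval]
          exact ENNReal.ofReal_lt_ofReal_iff hM₁ |>.mpr (by nlinarith)
        obtain ⟨x, hx⟩ := lt_iSup_iff.mp hlt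
        exact ⟨x, hx⟩
      have hBne : {y | ENNReal.ofReal (M₂ * t) < gN y}.Nonempty := by
        have hlt : ENNReal.ofReal (M₂ * t) < Sg := by
          rw [hSgval]
          exact ENNReal.ofReal_lt_ofReal_iff hM₂ |>.mpr (by nlinarith)
        obtain ⟨y, hy⟩ := lt_iSup_iff.mp hlt
        exact ⟨y, hy⟩
      apply sumset_bound _ _ _ (measSet_lt_fun hfNm _) (measSet_lt_fun hgNm _) hAne hBne
      intro x hx y hy
      show ENNReal.ofReal (c * t) < h ((x + y) / 2)
      have hprod : ENNReal.ofReal (c * t) ^ 2 < f x * g y := by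
        have h1 : ENNReal.ofReal (c * t) ^ 2 = ENNReal.ofReal (M₁ * t) * ENNReal.ofReal (M₂ * t) := by
          rw [← ENNReal.ofReal_pow (by positivity), ← ENNReal.ofReal_mul (by positivity)]
          congr 1
          rw [mul_pow, hc2]
          ring
        rw [h1]
        calc ENNReal.ofReal (M₁ * t) * ENNReal.ofReal (M₂ * t)
            < fN x * gN y := ENNReal.mul_lt_mul hx hy
          _ ≤ f x * g y := mul_le_mul' (min_le_left _ _) (min_le_left _ _)
      by_contra hcon
      push_neg at hcon
      have : h ((x + y) / 2) ^ 2 ≤ ENNReal.ofReal (c * t) ^ 2 := pow_le_pow_left' hcon 2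
      exact absurd (lt_of_lt_of_le (lt_of_lt_of_le hprod (hyp x y)) this) (lt_irrefl _)
    · -- t ≥ 1 : both level sets are empty
      push_neg at ht1
      have hφ0 : φ t = 0 := by
        have : {x | ENNReal.ofReal (M₁ * t) < fN x} = ∅ := by
          apply eq_empty_iff_forall_notMem.mpr
          intro x hx
          have hle : fN x ≤ ENNReal.ofReal (M₁ * t) := by
            calc fN x ≤ Sf := le_iSup fN x
              _ = ENNReal.ofReal M₁ := hSfval
              _ ≤ ENNReal.ofReal (M₁ * t) := ENNReal.ofReal_le_ofReal (by nlinarith)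
          exact absurd hx (not_lt.mpr hle)
        simp only [hφ]
        rw [this, measure_empty]
      have hψ0 : ψ t = 0 := by
        have : {y | ENNReal.ofReal (M₂ * t) < gN y} = ∅ := by
          apply eq_empty_iff_forall_notMem.mpr
          intro y hy
          have hle : gN y ≤ ENNReal.ofReal (M₂ * t) := by
            calc gN y ≤ Sg := le_iSup gN y
              _ = ENNReal.ofReal M₂ := hSgval
              _ ≤ ENNReal.ofReal (M₂ * t) := ENNReal.ofReal_le_ofReal (by nlinarith)
          exact absurd hy (not_lt.mpr hle)
        simp only [hψ]
        rw [this, measure_empty]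
      rw [hφ0, hψ0, add_zero]
      exact zero_le
  -- integrate the level inequality
  have hint : (∫⁻ t in Ioi (0:ℝ), φ t) + (∫⁻ t in Ioi (0:ℝ), ψ t) ≤
      2 * ∫⁻ t in Ioi (0:ℝ), χ t := by
    rw [← lintegral_add_left (hφanti.measurable) , ← lintegral_const_mul 2 (hχanti.measurable)]
    apply setLIntegral_mono ((hχanti.measurable).const_mul 2)
    intro t ht
    exact level t ht
  have hAB : (∫⁻ t in Ioi (0:ℝ), φ t) * (∫⁻ t in Ioi (0:ℝ), ψ t) ≤
      (∫⁻ t in Ioi (0:ℝ), χ t) ^ 2 := ennreal_amgm hint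
  rw [LCf, LCg, LCh]
  calc ENNReal.ofReal M₁ * (∫⁻ t in Ioi (0:ℝ), φ t) * (ENNReal.ofReal M₂ * ∫⁻ t in Ioi (0:ℝ), ψ t)
      = (ENNReal.ofReal M₁ * ENNReal.ofReal M₂) *
        ((∫⁻ t in Ioi (0:ℝ), φ t) * ∫⁻ t in Ioi (0:ℝ), ψ t) := by ring
    _ ≤ (ENNReal.ofReal M₁ * ENNReal.ofReal M₂) * (∫⁻ t in Ioi (0:ℝ), χ t) ^ 2 :=
        mul_le_mul' le_rfl hAB
    _ = (ENNReal.ofReal c * ∫⁻ t in Ioi (0:ℝ), χ t) ^ 2 := by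
        rw [mul_pow, ← ENNReal.ofReal_pow hc.le, hc2, ENNReal.ofReal_mul hM₁.le]


/-- Midpoint Prékopa–Leindler inequality on `Fin d → ℝ`, `ℝ≥0∞`-valued. -/
lemma PL_pi : ∀ (d : ℕ) (f g h : (Fin d → ℝ) → ℝ≥0∞), Measurable f → Measurable g →
    Measurable h → (∀ x y, f x * g y ≤ (h ((2:ℝ)⁻¹ • (x + y))) ^ 2) →
    (∫⁻ x, f x) * (∫⁻ y, g y) ≤ (∫⁻ z, h z) ^ 2 := by
  intro d
  induction d with
  | zero =>
    intro f g h hf hg hh hyp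
    have hvol : (volume : Measure (Fin 0 → ℝ)) = Measure.dirac (fun i => i.elim0) := by
      rw [volume_pi, Measure.pi_of_empty]
      congr 1
    rw [hvol, lintegral_dirac' _ hf, lintegral_dirac' _ hg, lintegral_dirac' _ hh]
    refine le_trans (hyp _ _) (le_of_eq ?_)
    congr 1
    exact congrArg h (Subsingleton.elim _ _)
  | succ d ih =>
    intro f g h hf hg hh hyp
    set e := MeasurableEquiv.piFinSuccAbove (fun _ : Fin (d+1) => ℝ) 0 with he
    have hmp := volume_preserving_piFinSuccAbove (fun _ : Fin (d+1) => ℝ) 0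
    have e_lin : ∀ (u v : Fin (d+1) → ℝ), e ((2:ℝ)⁻¹ • (u + v)) = (2:ℝ)⁻¹ • (e u + e v) := by
      intro u v
      rfl
    have esymm_lin : ∀ (p q : ℝ × (Fin d → ℝ)),
        e.symm ((2:ℝ)⁻¹ • (p + q)) = (2:ℝ)⁻¹ • (e.symm p + e.symm q) := by
      intro p q
      apply e.injective
      rw [MeasurableEquiv.apply_symm_apply, e_lin, MeasurableEquiv.apply_symm_apply,
        MeasurableEquiv.apply_symm_apply]
    set f' : ℝ × (Fin d → ℝ) → ℝ≥0∞ := fun p => f (e.symm p) with hf'def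
    set g' : ℝ × (Fin d → ℝ) → ℝ≥0∞ := fun p => g (e.symm p) with hg'def
    set h' : ℝ × (Fin d → ℝ) → ℝ≥0∞ := fun p => h (e.symm p) with hh'def
    have hf' : Measurable f' := hf.comp e.symm.measurable
    have hg' : Measurable g' := hg.comp e.symm.measurable
    have hh' : Measurable h' := hh.comp e.symm.measurable
    have hyp' : ∀ p q, f' p * g' q ≤ (h' ((2:ℝ)⁻¹ • (p + q))) ^ 2 := by
      intro p q
      show f (e.symm p) * g (e.symm q) ≤ (h (e.symm ((2:ℝ)⁻¹ • (p + q)))) ^ 2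
      rw [esymm_lin]
      exact hyp _ _
    set F : ℝ → ℝ≥0∞ := fun x₀ => ∫⁻ z, f' (x₀, z) with hFdef
    set G : ℝ → ℝ≥0∞ := fun y₀ => ∫⁻ w, g' (y₀, w) with hGdef
    set H : ℝ → ℝ≥0∞ := fun m₀ => ∫⁻ m, h' (m₀, m) with hHdef
    have huncurry : ∀ (u : ℝ × (Fin d → ℝ) → ℝ≥0∞),
        Function.uncurry (fun x₀ (z : Fin d → ℝ) => u (x₀, z)) = u := by
      intro u
      funext p
      simp [Function.uncurry]
    have hF : Measurable F := by
      apply Measurable.lintegral_prod_right (f := fun x₀ z => f' (x₀, z))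
      rw [huncurry]
      exact hf'
    have hG : Measurable G := by
      apply Measurable.lintegral_prod_right (f := fun x₀ z => g' (x₀, z))
      rw [huncurry]
      exact hg'
    have hH : Measurable H := by
      apply Measurable.lintegral_prod_right (f := fun x₀ z => h' (x₀, z))
      rw [huncurry]
      exact hh'
    have hyp1D : ∀ x₀ y₀ : ℝ, F x₀ * G y₀ ≤ (H ((x₀ + y₀) / 2)) ^ 2 := by
      intro x₀ y₀
      apply ih (fun z => f' (x₀, z)) (fun w => g' (y₀, w)) (fun m => h' ((x₀ + y₀) / 2, m))
        (hf'.comp (measurable_prodMk_left)) (hg'.comp (measurable_prodMk_left))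
        (hh'.comp (measurable_prodMk_left))
      intro z w
      have hmid : ((x₀ + y₀) / 2, (2:ℝ)⁻¹ • (z + w)) = (2:ℝ)⁻¹ • ((x₀, z) + (y₀, w)) := by
        apply Prod.ext
        · show (x₀ + y₀) / 2 = (2:ℝ)⁻¹ • (x₀ + y₀)
          simp [smul_eq_mul]
          ring
        · rfl
      show f' (x₀, z) * g' (y₀, w) ≤ (h' ((x₀ + y₀) / 2, (2:ℝ)⁻¹ • (z + w))) ^ 2
      rw [hmid]
      exact hyp' _ _
    have hif : ∫⁻ x, f x = ∫⁻ x₀, F x₀ := by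
      rw [← (hmp.symm e).lintegral_comp hf]
      show ∫⁻ p, f' p ∂(volume : Measure (ℝ × (Fin d → ℝ))) = _
      rw [Measure.volume_eq_prod, lintegral_prod _ hf'.aemeasurable]
    have hig : ∫⁻ y, g y = ∫⁻ y₀, G y₀ := by
      rw [← (hmp.symm e).lintegral_comp hg]
      show ∫⁻ p, g' p ∂(volume : Measure (ℝ × (Fin d → ℝ))) = _
      rw [Measure.volume_eq_prod, lintegral_prod _ hg'.aemeasurable]
    have hih : ∫⁻ z, h z = ∫⁻ z₀, H z₀ := by
      rw [← (hmp.symm e).lintegral_comp hh]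
      show ∫⁻ p, h' p ∂(volume : Measure (ℝ × (Fin d → ℝ))) = _
      rw [Measure.volume_eq_prod, lintegral_prod _ hh'.aemeasurable]
    rw [hif, hig, hih]
    exact dim1_PL F G H hF hG hH hyp1D


open Pointwise in
/-- Change of variables: the exponential integral over `c • K'` equals `c^d Z(c)`. -/
lemma smul_body_integral {d : ℕ} (K' : Set (Fin (d+1) → ℝ)) (hK : IsCompact K')
    (c : ℝ) (hc : 0 < c) :
    ∫ y, (c • K').indicator (fun y => Real.exp (-(y 0))) y =
      c ^ (d+1) * ∫ x in K', Real.exp (-(c * x 0)) := by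
  have hd : Module.finrank ℝ (Fin (d+1) → ℝ) = d + 1 := by simp
  have key := MeasureTheory.Measure.integral_comp_smul (volume : Measure (Fin (d+1) → ℝ))
    ((c • K').indicator (fun y => Real.exp (-(y 0)))) c
  rw [hd] at key
  have hpt : ∀ x : Fin (d+1) → ℝ, (c • K').indicator (fun y => Real.exp (-(y 0))) (c • x) =
      K'.indicator (fun x => Real.exp (-(c * x 0))) x := by
    intro x
    by_cases hx : x ∈ K'
    · rw [Set.indicator_of_mem ((Set.smul_mem_smul_set_iff₀ hc.ne' K' x).mpr hx),
        Set.indicator_of_mem hx]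
      congr 1
    · rw [Set.indicator_of_notMem (fun hmem =>
        hx ((Set.smul_mem_smul_set_iff₀ hc.ne' K' x).mp hmem)), Set.indicator_of_notMem hx]
  rw [integral_congr_ae (Filter.Eventually.of_forall hpt)] at key
  rw [integral_indicator hK.isClosed.measurableSet] at key
  have habs : |((c ^ (d+1))⁻¹ : ℝ)| = (c ^ (d+1))⁻¹ := abs_of_pos (by positivity)
  rw [habs, smul_eq_mul] at key
  have hcd : (0:ℝ) < c ^ (d+1) := by positivity
  field_simp at key ⊢
  linarith [key]

open Pointwise in
/-- The `ℝ≥0∞` version of the scaled exponential integral. -/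
lemma smul_body_lintegral {d : ℕ} (K' : Set (Fin (d+1) → ℝ)) (hK : IsCompact K')
    (c : ℝ) (hc : 0 < c) :
    ∫⁻ y, (c • K').indicator (fun y => ENNReal.ofReal (Real.exp (-(y 0)))) y =
      ENNReal.ofReal (c ^ (d+1) * ∫ x in K', Real.exp (-(c * x 0))) := by
  have hKc : IsCompact (c • K') := hK.smul c
  have hmeas : MeasurableSet (c • K') := hKc.isClosed.measurableSet
  have hcont : Continuous fun y : Fin (d+1) → ℝ => Real.exp (-(y 0)) := by
    continuity
  have hint : Integrable ((c • K').indicator (fun y => Real.exp (-(y 0)))) := by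
    rw [integrable_indicator_iff hmeas]
    exact hcont.continuousOn.integrableOn_compact hKc
  have hnn : 0 ≤ᵐ[volume] (c • K').indicator (fun y : Fin (d+1) → ℝ => Real.exp (-(y 0))) := by
    apply Filter.Eventually.of_forall
    intro y
    exact Set.indicator_nonneg (fun y _ => (Real.exp_pos _).le) y
  have hswap : ∀ y, ENNReal.ofReal ((c • K').indicator (fun y => Real.exp (-(y 0))) y) =
      (c • K').indicator (fun y => ENNReal.ofReal (Real.exp (-(y 0)))) y := by
    intro y
    by_cases hy : y ∈ c • K'
    · rw [Set.indicator_of_mem hy, Set.indicator_of_mem hy]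
    · rw [Set.indicator_of_notMem hy, Set.indicator_of_notMem hy, ENNReal.ofReal_zero]
  rw [← lintegral_congr hswap, ← ofReal_integral_eq_lintegral_ofReal hint hnn,
    smul_body_integral K' hK c hc]

/-- Positivity of the partition function. -/
lemma Z_pos {d : ℕ} (K' : Set (Fin (d+1) → ℝ)) (hK : IsCompact K')
    (hKi : (interior K').Nonempty) (c : ℝ) :
    0 < ∫ x in K', Real.exp (-(c * x 0)) := by
  have hne : K'.Nonempty := hKi.mono interior_subset
  have hcont : Continuous fun x : Fin (d+1) → ℝ => Real.exp (-(c * x 0)) := by continuity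
  obtain ⟨z, hz, hminOn⟩ := hK.exists_isMinOn hne hcont.continuousOn
  have hmin : ∀ x ∈ K', Real.exp (-(c * z 0)) ≤ Real.exp (-(c * x 0)) := fun x hx => hminOn hx
  have hvol_pos : 0 < volume K' := Measure.measure_pos_of_nonempty_interior _ hKi
  have hvol_ne : volume K' ≠ ⊤ := hK.measure_lt_top.ne
  have h1 : Real.exp (-(c * z 0)) * (volume K').toReal ≤ ∫ x in K', Real.exp (-(c * x 0)) := by
    have := setIntegral_ge_of_const_le_real hK.isClosed.measurableSet hvol_ne hmin
      (hcont.continuousOn.integrableOn_compact hK)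
    rwa [measureReal_def] at this
  have h2 : 0 < Real.exp (-(c * z 0)) * (volume K').toReal :=
    mul_pos (Real.exp_pos _) (ENNReal.toReal_pos hvol_pos.ne' hvol_ne)
  linarith

/-- Arithmetic: `(n/(n-1))^(n+1) ≤ 8` for `n ≥ 2`. -/
lemma ratio_pow_le_eight (n : ℕ) (hn : 2 ≤ n) : ((n : ℝ) / ((n : ℝ) - 1)) ^ (n + 1) ≤ 8 := by
  rcases eq_or_lt_of_le hn with heq | hlt
  · subst heq
    norm_num
  · -- n ≥ 3
    have hn3 : (3 : ℕ) ≤ n := hlt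
    have hn3' : (3 : ℝ) ≤ (n : ℝ) := by exact_mod_cast hn3
    have hden : (0 : ℝ) < (n : ℝ) - 1 := by linarith
    have hx : (0 : ℝ) ≤ 1 / ((n : ℝ) - 1) := by positivity
    have hsplit : (n : ℝ) / ((n : ℝ) - 1) = 1 + 1 / ((n : ℝ) - 1) := by
      field_simp
      ring
    have hexp : 1 + 1 / ((n : ℝ) - 1) ≤ Real.exp (1 / ((n : ℝ) - 1)) := by
      have := Real.add_one_le_exp (1 / ((n : ℝ) - 1))
      linarith
    have hpow : ((n : ℝ) / ((n : ℝ) - 1)) ^ (n + 1) ≤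
        Real.exp (1 / ((n : ℝ) - 1)) ^ (n + 1) := by
      rw [hsplit]
      exact pow_le_pow_left₀ (by positivity) hexp (n + 1)
    have hexp2 : Real.exp (1 / ((n : ℝ) - 1)) ^ (n + 1) = Real.exp ((n + 1) / ((n : ℝ) - 1)) := by
      rw [← Real.exp_nat_mul]
      congr 1
      push_cast
      ring
    have harg : ((n : ℝ) + 1) / ((n : ℝ) - 1) ≤ 2 := by
      rw [div_le_iff₀ hden]
      linarith
    have h8 : Real.exp 2 ≤ 8 := by
      have h1 : Real.exp 1 ≤ 2.7182818286 := Real.exp_one_lt_d9.le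
      have h2 : Real.exp 2 = Real.exp 1 * Real.exp 1 := by
        rw [← Real.exp_add]; norm_num
      nlinarith [Real.exp_pos 1]
    calc ((n : ℝ) / ((n : ℝ) - 1)) ^ (n + 1)
        ≤ Real.exp (((n : ℝ) + 1) / ((n : ℝ) - 1)) := by
          rw [← hexp2]
          exact hpow
      _ ≤ Real.exp 2 := Real.exp_le_exp.mpr harg
      _ ≤ 8 := h8

end PLAux


open PLAux Pointwise in
/-- For a convex body `K' ⊆ ℝ^{n+1}` with `Z(c) := ∫_{K'} e^{-c x₀} dx` and
densities `π_c(x) = e^{-c x₀}/Z(c)`: if `n ≥ 2`, `a > 0` and `b = (1 - 1/√n) a`, then the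
L²-norm of `π_a` with respect to `π_b` is at most 8, i.e.
`∫_{K'} π_a(x)²/π_b(x) dx ≤ 8`; equivalently, `Z(2a - b) Z(b) ≤ 8 Z(a)²`. -/
theorem l2_norm_consecutive_densities_le_eight
    (n : ℕ) (hn : 2 ≤ n) (K' : Set (Fin (n + 1) → ℝ))
    (hK_compact : IsCompact K') (hK_convex : Convex ℝ K')
    (hK_interior : (interior K').Nonempty)
    (Z : ℝ → ℝ) (hZ : ∀ c, Z c = ∫ x in K', Real.exp (-(c * x 0)))
    (a b : ℝ) (ha : 0 < a) (hb : b = (1 - 1 / Real.sqrt n) * a) :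
    (∫ x in K', (Real.exp (-(a * x 0)) / Z a) ^ 2 / (Real.exp (-(b * x 0)) / Z b)) ≤ 8 ∧
    Z (2 * a - b) * Z b ≤ 8 * Z a ^ 2 := by
  -- basic numeric facts
  have hn1 : (1:ℝ) < (n:ℝ) := by
    have : (2:ℝ) ≤ (n:ℝ) := by exact_mod_cast hn
    linarith
  set s : ℝ := Real.sqrt n with hsdef
  have hs1 : (1:ℝ) < s := by
    rw [hsdef, show (1:ℝ) = Real.sqrt 1 by rw [Real.sqrt_one]]
    exact Real.sqrt_lt_sqrt (by norm_num) hn1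
  have hspos : (0:ℝ) < s := by linarith
  have hs2 : s ^ 2 = (n:ℝ) := Real.sq_sqrt (by positivity)
  have hbpos : 0 < b := by
    rw [hb]
    apply mul_pos _ ha
    have h1 : 1 / s < 1 := by rw [div_lt_one hspos]; exact hs1
    linarith
  set a' : ℝ := 2 * a - b with ha'def
  have ha'pos : 0 < a' := by
    have h1 : 0 < 1 / s := by positivity
    rw [ha'def, hb]
    nlinarith
  -- positivity of the Z's
  have hZa : 0 < Z a := by rw [hZ a]; exact Z_pos K' hK_compact hK_interior a
  have hZb : 0 < Z b := by rw [hZ b]; exact Z_pos K' hK_compact hK_interior b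
  have hZa' : 0 < Z a' := by rw [hZ a']; exact Z_pos K' hK_compact hK_interior a'
  -- the three ℝ≥0∞ densities on scaled copies of K'
  set E : (Fin (n+1) → ℝ) → ℝ≥0∞ := fun y => ENNReal.ofReal (Real.exp (-(y 0))) with hEdef
  have hEmeas : Measurable E := by
    apply ENNReal.measurable_ofReal.comp
    exact (Real.continuous_exp.comp (continuous_neg.comp ((continuous_apply 0)))).measurable
  have hsmulmeas : ∀ c : ℝ, MeasurableSet (c • K') :=
    fun c => (hK_compact.smul c).isClosed.measurableSet
  set f : (Fin (n+1) → ℝ) → ℝ≥0∞ := (a' • K').indicator E with hfdef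
  set g : (Fin (n+1) → ℝ) → ℝ≥0∞ := (b • K').indicator E with hgdef
  set h : (Fin (n+1) → ℝ) → ℝ≥0∞ := (a • K').indicator E with hhdef
  have hfm : Measurable f := hEmeas.indicator (hsmulmeas a')
  have hgm : Measurable g := hEmeas.indicator (hsmulmeas b)
  have hhm : Measurable h := hEmeas.indicator (hsmulmeas a)
  -- the Prékopa–Leindler hypothesis
  have hyp : ∀ y z, f y * g z ≤ (h ((2:ℝ)⁻¹ • (y + z))) ^ 2 := by
    intro y z
    by_cases hy : y ∈ a' • K'
    swap
    · rw [hfdef, Set.indicator_of_notMem hy]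
      rw [zero_mul]
      exact zero_le
    by_cases hz : z ∈ b • K'
    swap
    · rw [hgdef, Set.indicator_of_notMem hz]
      rw [mul_zero]
      exact zero_le
    obtain ⟨u, hu, huy⟩ := hy
    obtain ⟨v, hv, hvz⟩ := hz
    have hmid : (2:ℝ)⁻¹ • (y + z) ∈ a • K' := by
      refine Set.mem_smul_set.mpr ⟨(a'/(2*a)) • u + (b/(2*a)) • v, ?_, ?_⟩
      · apply hK_convex hu hv (by positivity) (by positivity)
        field_simp
        rw [ha'def]
        ring
      · rw [← huy, ← hvz, smul_add, smul_smul, smul_smul, smul_add, smul_smul, smul_smul]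
        have e1 : a * (a'/(2*a)) = (2:ℝ)⁻¹ * a' := by
          field_simp
        have e2 : a * (b/(2*a)) = (2:ℝ)⁻¹ * b := by
          field_simp
        rw [e1, e2]
    rw [hfdef, hgdef, hhdef, Set.indicator_of_mem (by rw [← huy]; exact Set.smul_mem_smul_set hu),
      Set.indicator_of_mem (by rw [← hvz]; exact Set.smul_mem_smul_set hv),
      Set.indicator_of_mem hmid]
    rw [hEdef]
    simp only
    rw [← ENNReal.ofReal_mul (Real.exp_pos _).le, ← ENNReal.ofReal_pow (Real.exp_pos _).le]
    apply ENNReal.ofReal_le_ofReal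
    apply le_of_eq
    rw [← Real.exp_add, ← Real.exp_nat_mul]
    congr 1
    show -(y 0) + -(z 0) = 2 * -(((2:ℝ)⁻¹ • (y + z)) 0)
    have : ((2:ℝ)⁻¹ • (y + z)) 0 = (2:ℝ)⁻¹ * (y 0 + z 0) := rfl
    rw [this]
    ring
  -- apply Prékopa–Leindler
  have PL := PL_pi (n+1) f g h hfm hgm hhm hyp
  -- rewrite the three lintegrals
  rw [hfdef, hgdef, hhdef, smul_body_lintegral K' hK_compact a' ha'pos,
    smul_body_lintegral K' hK_compact b hbpos, smul_body_lintegral K' hK_compact a ha] at PL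
  rw [← hZ a, ← hZ b, ← hZ a'] at PL
  rw [← ENNReal.ofReal_mul (by positivity), ← ENNReal.ofReal_pow (by positivity)] at PL
  have Preal : (a' ^ (n+1) * Z a') * (b ^ (n+1) * Z b) ≤ (a ^ (n+1) * Z a) ^ 2 :=
    (ENNReal.ofReal_le_ofReal_iff (by positivity)).mp PL
  -- now pure real arithmetic
  have hab : a' * b = (1 - 1/(n:ℝ)) * a ^ 2 := by
    have key2 : (2*a - (1 - 1/s)*a) * ((1 - 1/s)*a) = (1 - 1/(s^2)) * a^2 := by
      field_simp
      ring
    rw [ha'def, hb, key2, hs2]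
  have habpos : 0 < a' * b := mul_pos ha'pos hbpos
  have hn1' : (0:ℝ) < (n:ℝ) - 1 := by linarith
  have ha2 : a ^ 2 = (a' * b) * ((n:ℝ)/((n:ℝ) - 1)) := by
    rw [hab]
    field_simp
  have hmain : Z a' * Z b ≤ 8 * Z a ^ 2 := by
    have hcancel : (a' * b) ^ (n+1) * (Z a' * Z b) ≤ (a' * b) ^ (n+1) * (8 * Z a ^ 2) := by
      calc (a' * b) ^ (n+1) * (Z a' * Z b)
          = (a' ^ (n+1) * Z a') * (b ^ (n+1) * Z b) := by rw [mul_pow]; ring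
        _ ≤ (a ^ (n+1) * Z a) ^ 2 := Preal
        _ = (a ^ 2) ^ (n+1) * Z a ^ 2 := by ring
        _ = (a' * b) ^ (n+1) * (((n:ℝ)/((n:ℝ) - 1)) ^ (n+1) * Z a ^ 2) := by
            rw [ha2, mul_pow]
            ring
        _ ≤ (a' * b) ^ (n+1) * (8 * Z a ^ 2) := by
            apply mul_le_mul_of_nonneg_left _ (by positivity)
            apply mul_le_mul_of_nonneg_right (ratio_pow_le_eight n hn) (by positivity)
    exact le_of_mul_le_mul_left hcancel (by positivity)
  constructor
  · -- the L² statement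
    have hptwise : ∀ x : Fin (n+1) → ℝ,
        (Real.exp (-(a * x 0)) / Z a) ^ 2 / (Real.exp (-(b * x 0)) / Z b) =
        Real.exp (-((2*a - b) * x 0)) * (Z b / Z a ^ 2) := by
      intro x
      have hexp : Real.exp (-(a * x 0)) ^ 2 / Real.exp (-(b * x 0)) =
          Real.exp (-((2*a - b) * x 0)) := by
        rw [show Real.exp (-(a * x 0)) ^ 2 = Real.exp (-(2 * a * x 0)) by
          rw [pow_two, ← Real.exp_add]; congr 1; ring]
        rw [← Real.exp_sub]
        congr 1
        ring
      rw [div_pow, div_div_div_comm, hexp, div_div_eq_mul_div, mul_div_assoc]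
    calc (∫ x in K', (Real.exp (-(a * x 0)) / Z a) ^ 2 / (Real.exp (-(b * x 0)) / Z b))
        = ∫ x in K', Real.exp (-((2*a - b) * x 0)) * (Z b / Z a ^ 2) := by
          exact setIntegral_congr_fun hK_compact.isClosed.measurableSet
            (fun x _ => hptwise x)
      _ = (∫ x in K', Real.exp (-((2*a - b) * x 0))) * (Z b / Z a ^ 2) := by
          rw [integral_mul_const]
      _ = Z (2*a - b) * Z b / Z a ^ 2 := by
          rw [← hZ (2*a - b)]
          ring
      _ ≤ 8 := by
          rw [div_le_iff₀ (by positivity)]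
          calc Z (2*a - b) * Z b ≤ 8 * Z a ^ 2 := hmain
            _ = 8 * Z a ^ 2 := rfl
  · exact hmain
end

section
/- Let a, b > 0 with 2b > a. Let X be a random point of K' with density π_a, and set V := e^{(a−b)·X₀}, where X₀ is the first coordinate of X. Then E[V] = Z(b)/Z(a), E[V²] = Z(2b−a)/Z(a), and E[V²]/E[V]² = Z(2b−a)·Z(a)/Z(b)² ≤ (b²/(a(2b−a)))^{n+1}. In particular, if n ≥ 2 and a = (1 + 1/√n)·b, then E[V²]/E[V]² ≤ 8. -/
open MeasureTheory Set Filter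
open scoped ENNReal NNReal Pointwise

section PLmachinery

lemma vol_add_compact (K L : Set ℝ) (hK : IsCompact K) (hL : IsCompact L)
    (hKne : K.Nonempty) (hLne : L.Nonempty) :
    volume K + volume L ≤ volume (K + L) := by
  set k0 := sSup K with hk0
  set l0 := sInf L with hl0
  have hk0K : k0 ∈ K := hK.sSup_mem hKne
  have hl0L : l0 ∈ L := hL.sInf_mem hLne
  set A : Set ℝ := (fun x => x + l0) '' K with hA
  set B : Set ℝ := (fun y => k0 + y) '' L with hB
  have hAm : MeasurableSet A := (hK.image (continuous_add_right l0)).isClosed.measurableSet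
  have hBm : MeasurableSet B := (hL.image (continuous_add_left k0)).isClosed.measurableSet
  have hvolA : volume A = volume K := by
    have : A = (fun x => x + (-l0)) ⁻¹' K := by
      ext x
      constructor
      · rintro ⟨y, hy, rfl⟩; simpa using hy
      · intro hx; exact ⟨x - l0, by rw [sub_eq_add_neg]; exact hx, by ring⟩
    rw [this, measure_preimage_add_right]
  have hvolB : volume B = volume L := by
    have : B = (fun y => (-k0) + y) ⁻¹' L := by
      ext x
      constructor
      · rintro ⟨y, hy, rfl⟩; simpa using hy
      · intro hx; exact ⟨x - k0, by simpa [neg_add_eq_sub] using hx, by ring⟩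
    rw [this, measure_preimage_add]
  have hsub : A ∪ B ⊆ K + L := by
    rintro x (⟨y, hy, rfl⟩ | ⟨y, hy, rfl⟩)
    · exact Set.add_mem_add hy hl0L
    · exact Set.add_mem_add hk0K hy
  have hinter : volume (A ∩ B) = 0 := by
    apply measure_mono_null (t := {k0 + l0}) _ (measure_singleton _)
    rintro x ⟨⟨y, hy, rfl⟩, ⟨z, hz, hz'⟩⟩
    have h1 : y + l0 ≤ k0 + l0 := by
      have := le_csSup hK.bddAbove hy; linarith
    have h2 : k0 + l0 ≤ y + l0 := by
      have h3 := csInf_le hL.bddBelow hz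
      have hz'' : k0 + z = y + l0 := hz'
      linarith
    simp [le_antisymm h1 h2]
  calc volume K + volume L = volume A + volume B := by rw [hvolA, hvolB]
    _ = volume (A ∪ B) + volume (A ∩ B) := (measure_union_add_inter' hAm B).symm
    _ = volume (A ∪ B) := by rw [hinter, add_zero]
    _ ≤ volume (K + L) := measure_mono hsub

lemma vol_midpoints (S T U : Set ℝ) (hS : MeasurableSet S) (hT : MeasurableSet T)
    (hSne : S.Nonempty) (hTne : T.Nonempty) (hSfin : volume S ≠ ∞) (hTfin : volume T ≠ ∞)
    (hU : ∀ x ∈ S, ∀ y ∈ T, (x + y) / 2 ∈ U) :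
    volume S + volume T ≤ 2 * volume U := by
  rcases eq_or_ne (2 * volume U) ∞ with htop | hfin
  · exact htop ▸ le_top
  apply ENNReal.le_of_forall_pos_le_add
  intro ε hε _
  obtain ⟨K, hKS, hKc, hKv⟩ := hS.exists_isCompact_lt_add hSfin
    (ε := (ε : ℝ≥0∞) / 2) (by simp [hε.ne'])
  obtain ⟨L, hLT, hLc, hLv⟩ := hT.exists_isCompact_lt_add hTfin
    (ε := (ε : ℝ≥0∞) / 2) (by simp [hε.ne'])
  obtain ⟨s0, hs0⟩ := hSne
  obtain ⟨t0, ht0⟩ := hTne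
  set K' : Set ℝ := K ∪ {s0} with hK'
  set L' : Set ℝ := L ∪ {t0} with hL'
  have hK'c : IsCompact K' := hKc.union isCompact_singleton
  have hL'c : IsCompact L' := hLc.union isCompact_singleton
  have hK'S : K' ⊆ S := union_subset hKS (by simpa using hs0)
  have hL'T : L' ⊆ T := union_subset hLT (by simpa using ht0)
  have hmid : (2⁻¹ : ℝ) • (K' + L') ⊆ U := by
    rintro x ⟨w, ⟨k, hk, l, hl, rfl⟩, rfl⟩
    have := hU k (hK'S hk) l (hL'T hl)
    simpa [smul_eq_mul, div_eq_inv_mul] using this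
  have hvolsmul : volume ((2⁻¹ : ℝ) • (K' + L')) = ENNReal.ofReal 2⁻¹ * volume (K' + L') := by
    rw [Measure.addHaar_smul]
    norm_num
  have hKL : volume K' + volume L' ≤ volume (K' + L') :=
    vol_add_compact K' L' hK'c hL'c ⟨s0, by simp [hK']⟩ ⟨t0, by simp [hL']⟩
  have h2 : 2 * volume ((2⁻¹ : ℝ) • (K' + L')) = volume (K' + L') := by
    rw [hvolsmul, ← mul_assoc]
    have : (2 : ℝ≥0∞) * ENNReal.ofReal 2⁻¹ = 1 := by
      rw [ENNReal.ofReal_inv_of_pos (by norm_num), ENNReal.ofReal_ofNat,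
        ENNReal.mul_inv_cancel (by norm_num) (by norm_num)]
    rw [this, one_mul]
  calc volume S + volume T ≤ (volume K + ε/2) + (volume L + ε/2) := add_le_add hKv.le hLv.le
    _ = volume K + volume L + ((ε : ℝ≥0∞) / 2 + (ε : ℝ≥0∞) / 2) := by abel
    _ = volume K + volume L + ε := by rw [ENNReal.add_halves]
    _ ≤ volume K' + volume L' + ε := by
        gcongr
        · exact subset_union_left
        · exact subset_union_left
    _ ≤ volume (K' + L') + ε := by gcongr
    _ = 2 * volume ((2⁻¹ : ℝ) • (K' + L')) + ε := by rw [h2]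
    _ ≤ 2 * volume U + ε := by
        have := measure_mono (μ := volume) hmid
        gcongr

lemma layercake_le_one (w : ℝ → ℝ≥0∞) (hw : Measurable w) (hw1 : ∀ x, w x ≤ 1) :
    ∫⁻ x, w x = ∫⁻ t in Ioo (0:ℝ) 1, volume {x | ENNReal.ofReal t ≤ w x} := by
  have hfin : ∀ x, w x ≠ ∞ := fun x => ne_top_of_le_ne_top ENNReal.one_ne_top (hw1 x)
  have h1 : ∫⁻ x, w x = ∫⁻ x, ENNReal.ofReal ((w x).toReal) := by
    congr 1; funext x; rw [ENNReal.ofReal_toReal (hfin x)]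
  rw [h1, lintegral_eq_lintegral_meas_le volume
    (Eventually.of_forall fun x => ENNReal.toReal_nonneg)
    (hw.ennreal_toReal.aemeasurable)]
  have hsplit : (Ioi (0:ℝ)) = Ioc (0:ℝ) 1 ∪ Ioi (1:ℝ) := by
    ext t; simp only [mem_Ioi, mem_union, mem_Ioc]
    constructor
    · intro h; rcases le_or_gt t 1 with h' | h'
      · exact Or.inl ⟨h, h'⟩
      · exact Or.inr h'
    · rintro (⟨h, _⟩ | h) <;> linarith
  rw [hsplit, lintegral_union measurableSet_Ioi
    (Set.disjoint_left.mpr (fun t h1 h2 => absurd (mem_Ioi.mp h2) (not_lt.mpr h1.2)))]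
  have hzero : ∫⁻ t in Ioi (1:ℝ), volume {a : ℝ | t ≤ (w a).toReal} = 0 := by
    rw [setLIntegral_congr_fun measurableSet_Ioi
      (fun t (ht : 1 < t) => ?_), lintegral_zero]
    have : {a : ℝ | t ≤ (w a).toReal} = ∅ := by
      ext a
      simp only [mem_setOf_eq, mem_empty_iff_false, iff_false, not_le]
      calc (w a).toReal ≤ 1 := ENNReal.toReal_le_of_le_ofReal zero_le_one (by simpa using hw1 a)
        _ < t := ht
    simp [this]
  rw [hzero, add_zero, ← Measure.restrict_congr_set Ioo_ae_eq_Ioc]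
  apply setLIntegral_congr_fun measurableSet_Ioo
  intro t ht
  dsimp only
  congr 1
  ext x
  simp only [mem_setOf_eq]
  rw [ENNReal.ofReal_le_iff_le_toReal (hfin x)]

lemma amgm_ennreal (a b : ℝ≥0∞) (ha : a ≠ ∞) (hb : b ≠ ∞) : 4 * (a * b) ≤ (a + b) ^ 2 := by
  lift a to ℝ≥0 using ha
  lift b to ℝ≥0 using hb
  rw [← ENNReal.coe_mul, ← ENNReal.coe_add, ← ENNReal.coe_pow,
    show (4 : ℝ≥0∞) = ((4 : ℝ≥0) : ℝ≥0∞) by norm_num, ← ENNReal.coe_mul, ENNReal.coe_le_coe,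
    ← NNReal.coe_le_coe]
  push_cast
  nlinarith [sq_nonneg ((a : ℝ) - b), NNReal.coe_nonneg a, NNReal.coe_nonneg b]

lemma onedim_PL (f g h : ℝ → ℝ≥0∞) (hf : Measurable f) (hg : Measurable g) (hh : Measurable h)
    (hftop : (⨆ x, f x) ≠ ∞) (hgtop : (⨆ x, g x) ≠ ∞) (R : ℝ)
    (hfR : ∀ x : ℝ, R < |x| → f x = 0) (hgR : ∀ x : ℝ, R < |x| → g x = 0)
    (hyp : ∀ x y, f x * g y ≤ h ((x + y) / 2) ^ 2) :
    (∫⁻ x, f x) * ∫⁻ y, g y ≤ (∫⁻ z, h z) ^ 2 := by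
  set Ff := ⨆ x, f x with hFf
  set Fg := ⨆ x, g x with hFg
  rcases eq_or_ne Ff 0 with hf0 | hf0
  · have hz : ∀ x, f x = 0 := fun x => le_antisymm (hf0 ▸ le_iSup f x) zero_le
    rw [lintegral_congr hz, lintegral_zero, zero_mul]
    exact zero_le
  rcases eq_or_ne Fg 0 with hg0 | hg0
  · have hz : ∀ x, g x = 0 := fun x => le_antisymm (hg0 ▸ le_iSup g x) zero_le
    rw [lintegral_congr hz, lintegral_zero, mul_zero]
    exact zero_le
  set s := (Ff * Fg) ^ ((1:ℝ)/2) with hsdef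
  have hs2 : s ^ 2 = Ff * Fg := by
    rw [hsdef, ← ENNReal.rpow_natCast _ 2, ← ENNReal.rpow_mul]
    norm_num
  have hsne : s ≠ 0 := by
    rw [hsdef]
    intro hc
    rcases ENNReal.rpow_eq_zero_iff.mp hc with ⟨h1, _⟩ | ⟨_, h2⟩
    · exact mul_ne_zero hf0 hg0 h1
    · norm_num at h2
  have hstop : s ≠ ∞ := by
    rw [hsdef]
    intro hc
    rcases ENNReal.rpow_eq_top_iff.mp hc with ⟨_, h2⟩ | ⟨h1, _⟩
    · norm_num at h2
    · exact ENNReal.mul_ne_top hftop hgtop h1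
  set f' : ℝ → ℝ≥0∞ := fun x => f x * Ff⁻¹ with hf'def
  set g' : ℝ → ℝ≥0∞ := fun y => g y * Fg⁻¹ with hg'def
  set h' : ℝ → ℝ≥0∞ := fun z => min (h z * s⁻¹) 1 with hh'def
  have hf'm : Measurable f' := hf.mul_const _
  have hg'm : Measurable g' := hg.mul_const _
  have hh'm : Measurable h' := (hh.mul_const _).min measurable_const
  have hf'le : ∀ x, f' x ≤ 1 := fun x => by
    show f x * Ff⁻¹ ≤ 1
    rw [ENNReal.mul_inv_le_iff hf0 hftop, one_mul]
    exact le_iSup f x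
  have hg'le : ∀ y, g' y ≤ 1 := fun y => by
    show g y * Fg⁻¹ ≤ 1
    rw [ENNReal.mul_inv_le_iff hg0 hgtop, one_mul]
    exact le_iSup g y
  have hh'le : ∀ z, h' z ≤ 1 := fun z => min_le_right _ _
  have hf'sup : (⨆ x, f' x) = 1 := by
    rw [hf'def, ← ENNReal.iSup_mul, ← hFf, ENNReal.mul_inv_cancel hf0 hftop]
  have hg'sup : (⨆ y, g' y) = 1 := by
    rw [hg'def, ← ENNReal.iSup_mul, ← hFg, ENNReal.mul_inv_cancel hg0 hgtop]
  have habs : ∀ x : ℝ, x ∉ Icc (-R) R → R < |x| := fun x hx =>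
    not_le.mp (fun hle => hx (mem_Icc.mpr (abs_le.mp hle)))
  have hIccfin : volume (Icc (-R) R) ≠ ∞ := by
    rw [Real.volume_Icc]; exact ENNReal.ofReal_ne_top
  have hkey : ∀ t ∈ Ioo (0:ℝ) 1,
      volume {x | ENNReal.ofReal t ≤ f' x} + volume {y | ENNReal.ofReal t ≤ g' y}
        ≤ 2 * volume {z | ENNReal.ofReal t ≤ h' z} := by
    intro t ht
    obtain ⟨ht0, ht1⟩ := ht
    have htpos : (0 : ℝ≥0∞) < ENNReal.ofReal t := ENNReal.ofReal_pos.mpr ht0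
    have htlt1 : ENNReal.ofReal t < 1 := by
      rw [← ENNReal.ofReal_one]
      exact (ENNReal.ofReal_lt_ofReal_iff one_pos).mpr ht1
    have hfsub : {x | ENNReal.ofReal t ≤ f' x} ⊆ Icc (-R) R := by
      intro x hx
      by_contra hxR
      have hz : f' x = 0 := by show f x * Ff⁻¹ = 0; rw [hfR x (habs x hxR), zero_mul]
      rw [mem_setOf_eq, hz] at hx
      exact absurd hx (not_le.mpr htpos)
    have hgsub : {y | ENNReal.ofReal t ≤ g' y} ⊆ Icc (-R) R := by
      intro y hy
      by_contra hyR
      have hz : g' y = 0 := by show g y * Fg⁻¹ = 0; rw [hgR y (habs y hyR), zero_mul]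
      rw [mem_setOf_eq, hz] at hy
      exact absurd hy (not_le.mpr htpos)
    apply vol_midpoints
    · exact measurableSet_le measurable_const hf'm
    · exact measurableSet_le measurable_const hg'm
    · obtain ⟨x, hx⟩ := lt_iSup_iff.mp (hf'sup ▸ htlt1)
      exact ⟨x, hx.le⟩
    · obtain ⟨y, hy⟩ := lt_iSup_iff.mp (hg'sup ▸ htlt1)
      exact ⟨y, hy.le⟩
    · exact ne_top_of_le_ne_top hIccfin (measure_mono hfsub)
    · exact ne_top_of_le_ne_top hIccfin (measure_mono hgsub)
    · intro x hx y hy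
      simp only [mem_setOf_eq] at hx hy ⊢
      have hfx : ENNReal.ofReal t * Ff ≤ f x := by
        calc ENNReal.ofReal t * Ff ≤ (f x * Ff⁻¹) * Ff := mul_le_mul_left hx _
          _ = f x * (Ff⁻¹ * Ff) := by rw [mul_assoc]
          _ = f x := by rw [ENNReal.inv_mul_cancel hf0 hftop, mul_one]
      have hgy : ENNReal.ofReal t * Fg ≤ g y := by
        calc ENNReal.ofReal t * Fg ≤ (g y * Fg⁻¹) * Fg := mul_le_mul_left hy _
          _ = g y * (Fg⁻¹ * Fg) := by rw [mul_assoc]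
          _ = g y := by rw [ENNReal.inv_mul_cancel hg0 hgtop, mul_one]
      have hprod : (ENNReal.ofReal t * s) ^ 2 ≤ h ((x + y) / 2) ^ 2 := by
        calc (ENNReal.ofReal t * s) ^ 2 = (ENNReal.ofReal t)^2 * s^2 := by rw [mul_pow]
          _ = (ENNReal.ofReal t * Ff) * (ENNReal.ofReal t * Fg) := by rw [hs2]; ring
          _ ≤ f x * g y := mul_le_mul' hfx hgy
          _ ≤ h ((x + y) / 2) ^ 2 := hyp x y
      have hsq : ENNReal.ofReal t * s ≤ h ((x + y) / 2) := by
        have h2 := ENNReal.rpow_le_rpow hprod (by norm_num : (0:ℝ) ≤ 1/2)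
        rwa [← ENNReal.rpow_natCast (ENNReal.ofReal t * s) 2, ← ENNReal.rpow_natCast (h _) 2,
          ← ENNReal.rpow_mul, ← ENNReal.rpow_mul, show ((2:ℕ):ℝ) * (1/2) = 1 by norm_num,
          ENNReal.rpow_one, ENNReal.rpow_one] at h2
      refine le_min ?_ htlt1.le
      calc ENNReal.ofReal t = (ENNReal.ofReal t * s) * s⁻¹ := by
            rw [mul_assoc, ENNReal.mul_inv_cancel hsne hstop, mul_one]
        _ ≤ h ((x + y) / 2) * s⁻¹ := mul_le_mul_left hsq _
  -- measurability of level-measure functions (they are antitone)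
  have hant : ∀ w : ℝ → ℝ≥0∞, Antitone (fun t : ℝ => volume {x | ENNReal.ofReal t ≤ w x}) :=
    fun w t1 t2 hle =>
      measure_mono (fun x hx => le_trans (ENNReal.ofReal_le_ofReal hle) hx)
  have hf'int := layercake_le_one f' hf'm hf'le
  have hg'int := layercake_le_one g' hg'm hg'le
  have hh'int := layercake_le_one h' hh'm hh'le
  have hsum : (∫⁻ x, f' x) + (∫⁻ y, g' y) ≤ 2 * ∫⁻ z, h' z := by
    rw [hf'int, hg'int, hh'int, ← lintegral_add_left ((hant f').measurable) ,
      ← lintegral_const_mul 2 ((hant h').measurable)]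
    apply setLIntegral_mono ((((hant h').measurable).const_mul 2).comp measurable_id)
    intro t ht
    exact hkey t ht
  have hXfin : (∫⁻ x, f' x) ≠ ∞ := by
    apply ne_top_of_le_ne_top hIccfin
    calc (∫⁻ x, f' x) ≤ ∫⁻ x, (Icc (-R) R).indicator 1 x := by
          apply lintegral_mono
          intro x
          by_cases hx : x ∈ Icc (-R) R
          · rw [indicator_of_mem hx]; exact hf'le x
          · have : f' x = 0 := by show f x * Ff⁻¹ = 0; rw [hfR x (habs x hx), zero_mul]
            rw [this]; exact zero_le
      _ = volume (Icc (-R) R) := by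
          rw [lintegral_indicator measurableSet_Icc]
          simp
  have hYfin : (∫⁻ y, g' y) ≠ ∞ := by
    apply ne_top_of_le_ne_top hIccfin
    calc (∫⁻ y, g' y) ≤ ∫⁻ y, (Icc (-R) R).indicator 1 y := by
          apply lintegral_mono
          intro y
          by_cases hy : y ∈ Icc (-R) R
          · rw [indicator_of_mem hy]; exact hg'le y
          · have : g' y = 0 := by show g y * Fg⁻¹ = 0; rw [hgR y (habs y hy), zero_mul]
            rw [this]; exact zero_le
      _ = volume (Icc (-R) R) := by
          rw [lintegral_indicator measurableSet_Icc]
          simp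
  have hXY : (∫⁻ x, f' x) * ∫⁻ y, g' y ≤ (∫⁻ z, h' z) ^ 2 := by
    have h4 : 4 * ((∫⁻ x, f' x) * ∫⁻ y, g' y) ≤ 4 * (∫⁻ z, h' z) ^ 2 := by
      calc 4 * ((∫⁻ x, f' x) * ∫⁻ y, g' y) ≤ ((∫⁻ x, f' x) + ∫⁻ y, g' y) ^ 2 :=
            amgm_ennreal _ _ hXfin hYfin
        _ ≤ (2 * ∫⁻ z, h' z) ^ 2 := pow_le_pow_left₀ zero_le hsum 2
        _ = 4 * (∫⁻ z, h' z) ^ 2 := by rw [mul_pow]; norm_num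
    exact (ENNReal.mul_le_mul_iff_right (by norm_num) (by norm_num)).mp h4
  have hh'2 : (∫⁻ z, h' z) ≤ (∫⁻ z, h z) * s⁻¹ := by
    calc (∫⁻ z, h' z) ≤ ∫⁻ z, h z * s⁻¹ := lintegral_mono (fun z => min_le_left _ _)
      _ = (∫⁻ z, h z) * s⁻¹ := lintegral_mul_const' _ _ (ENNReal.inv_ne_top.mpr hsne)
  have hfX : (∫⁻ x, f x) = (∫⁻ x, f' x) * Ff := by
    have h1 : (∫⁻ x, f' x) = (∫⁻ x, f x) * Ff⁻¹ :=
      lintegral_mul_const' Ff⁻¹ f (ENNReal.inv_ne_top.mpr hf0)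
    rw [h1, mul_assoc, ENNReal.inv_mul_cancel hf0 hftop, mul_one]
  have hgY : (∫⁻ y, g y) = (∫⁻ y, g' y) * Fg := by
    have h1 : (∫⁻ y, g' y) = (∫⁻ y, g y) * Fg⁻¹ :=
      lintegral_mul_const' Fg⁻¹ g (ENNReal.inv_ne_top.mpr hg0)
    rw [h1, mul_assoc, ENNReal.inv_mul_cancel hg0 hgtop, mul_one]
  calc (∫⁻ x, f x) * ∫⁻ y, g y = ((∫⁻ x, f' x) * ∫⁻ y, g' y) * (Ff * Fg) := by
        rw [hfX, hgY]; ring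
    _ = ((∫⁻ x, f' x) * ∫⁻ y, g' y) * s ^ 2 := by rw [hs2]
    _ ≤ (∫⁻ z, h' z) ^ 2 * s ^ 2 := mul_le_mul_left hXY _
    _ ≤ ((∫⁻ z, h z) * s⁻¹) ^ 2 * s ^ 2 := mul_le_mul_left (pow_le_pow_left₀ zero_le hh'2 2) _
    _ = (∫⁻ z, h z) ^ 2 * ((s⁻¹ * s) ^ 2) := by rw [mul_pow, mul_assoc, ← mul_pow]
    _ = (∫⁻ z, h z) ^ 2 := by rw [ENNReal.inv_mul_cancel hsne hstop, one_pow, mul_one]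

lemma insertNth_mid {d : ℕ} (i : Fin (d + 1)) (u v : ℝ) (x y : Fin d → ℝ) :
    Fin.insertNth (α := fun _ => ℝ) i ((u + v) / 2) (fun j => (x j + y j) / 2)
      = fun j => (Fin.insertNth (α := fun _ => ℝ) i u x j
          + Fin.insertNth (α := fun _ => ℝ) i v y j) / 2 := by
  funext j
  refine i.succAboveCases ?_ ?_ j
  · simp
  · intro k
    simp

lemma multi_PL : ∀ (d : ℕ) (f g h : (Fin d → ℝ) → ℝ≥0∞), Measurable f → Measurable g →
    Measurable h → (⨆ x, f x) ≠ ∞ → (⨆ x, g x) ≠ ∞ → ∀ R : ℝ,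
    (∀ x : Fin d → ℝ, ∀ j, R < |x j| → f x = 0) →
    (∀ x : Fin d → ℝ, ∀ j, R < |x j| → g x = 0) →
    (∀ x y, f x * g y ≤ h (fun j => (x j + y j) / 2) ^ 2) →
    (∫⁻ x, f x) * ∫⁻ y, g y ≤ (∫⁻ z, h z) ^ 2 := by
  intro d
  induction d with
  | zero =>
    intro f g h hf hg hh _ _ R _ _ hyp
    have hvol : (volume : Measure (Fin 0 → ℝ)) univ = 1 := by
      rw [volume_pi, Measure.pi_univ]
      simp
    set x0 : Fin 0 → ℝ := fun _ => 0 with hx0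
    have hcf : ∀ x, f x = f x0 := fun x => congrArg f (Subsingleton.elim _ _)
    have hcg : ∀ x, g x = g x0 := fun x => congrArg g (Subsingleton.elim _ _)
    have hch : ∀ x, h x = h x0 := fun x => congrArg h (Subsingleton.elim _ _)
    rw [lintegral_congr hcf, lintegral_congr hcg, lintegral_congr hch,
      lintegral_const, lintegral_const, lintegral_const, hvol,
      mul_one, mul_one, mul_one]
    have h0 := hyp x0 x0
    have heq : (fun j : Fin 0 => (x0 j + x0 j) / 2) = x0 := Subsingleton.elim _ _
    rwa [heq] at h0
  | succ d ih =>
    intro f g h hf hg hh hftop hgtop R hfR hgR hyp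
    have habs : ∀ u : ℝ, u ∉ Icc (-R) R → R < |u| := fun u hu =>
      not_le.mp (fun hle => hu (mem_Icc.mpr (abs_le.mp hle)))
    have hIccfin : volume (Icc (-R) R) ≠ ∞ := by
      rw [Real.volume_Icc]; exact ENNReal.ofReal_ne_top
    set i : Fin (d + 1) := 0 with hi
    set e := MeasurableEquiv.piFinSuccAbove (fun _ : Fin (d + 1) => ℝ) i with he
    have hmp := measurePreserving_piFinSuccAbove (fun _ : Fin (d + 1) => (volume : Measure ℝ)) i
    have hesymm : ∀ (u : ℝ) (x : Fin d → ℝ), e.symm (u, x) = Fin.insertNth i u x := by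
      intro u x; rfl
    set F : (Fin d → ℝ) → ℝ≥0∞ := fun x => ∫⁻ u, f (Fin.insertNth i u x) with hF
    set G : (Fin d → ℝ) → ℝ≥0∞ := fun y => ∫⁻ v, g (Fin.insertNth i v y) with hG
    set H : (Fin d → ℝ) → ℝ≥0∞ := fun z => ∫⁻ w, h (Fin.insertNth i w z) with hH
    have hmeas : ∀ (φ : (Fin (d+1) → ℝ) → ℝ≥0∞), Measurable φ →
        Measurable (fun p : ℝ × (Fin d → ℝ) => φ (Fin.insertNth i p.1 p.2)) := by
      intro φ hφ
      have hcomp : (fun p : ℝ × (Fin d → ℝ) => φ (Fin.insertNth i p.1 p.2)) = φ ∘ e.symm := by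
        funext p; rw [Function.comp_apply, ← hesymm p.1 p.2]
      rw [hcomp]
      exact hφ.comp e.symm.measurable
    have hFm : Measurable F :=
      Measurable.lintegral_prod_left (f := fun u x => f (Fin.insertNth i u x)) (hmeas f hf)
    have hGm : Measurable G :=
      Measurable.lintegral_prod_left (f := fun u x => g (Fin.insertNth i u x)) (hmeas g hg)
    have hHm : Measurable H :=
      Measurable.lintegral_prod_left (f := fun u x => h (Fin.insertNth i u x)) (hmeas h hh)
    have hint : ∀ (φ : (Fin (d+1) → ℝ) → ℝ≥0∞), Measurable φ →
        ∫⁻ x, φ x = ∫⁻ x : Fin d → ℝ, ∫⁻ u : ℝ, φ (Fin.insertNth i u x) := by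
      intro φ hφ
      calc ∫⁻ x, φ x = ∫⁻ x, (φ ∘ e.symm) (e x) := by
            apply lintegral_congr; intro x; simp
        _ = ∫⁻ p, (φ ∘ e.symm) p ∂((volume : Measure ℝ).prod volume) :=
            hmp.lintegral_comp (hφ.comp e.symm.measurable)
        _ = ∫⁻ x : Fin d → ℝ, ∫⁻ u : ℝ, φ (Fin.insertNth i u x) := by
            rw [lintegral_prod_symm' _ (hφ.comp e.symm.measurable)]
            apply lintegral_congr; intro x
            apply lintegral_congr; intro u
            rw [Function.comp_apply, hesymm]
    -- section helpers
    have hsecf : ∀ x : Fin d → ℝ, ∀ u : ℝ, R < |u| → f (Fin.insertNth i u x) = 0 := by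
      intro x u hu
      apply hfR _ i
      rwa [Fin.insertNth_apply_same]
    have hsecg : ∀ y : Fin d → ℝ, ∀ v : ℝ, R < |v| → g (Fin.insertNth i v y) = 0 := by
      intro y v hv
      apply hgR _ i
      rwa [Fin.insertNth_apply_same]
    have hbound : ∀ (φ : (Fin (d+1) → ℝ) → ℝ≥0∞),
        (∀ x : Fin d → ℝ, ∀ u : ℝ, R < |u| → φ (Fin.insertNth i u x) = 0) →
        ∀ x : Fin d → ℝ, (∫⁻ u, φ (Fin.insertNth i u x))
          ≤ (⨆ z, φ z) * volume (Icc (-R) R) := by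
      intro φ hsupp x
      calc (∫⁻ u, φ (Fin.insertNth i u x))
          ≤ ∫⁻ u, (Icc (-R) R).indicator (fun _ => ⨆ z, φ z) u := by
            apply lintegral_mono
            intro u
            by_cases hu : u ∈ Icc (-R) R
            · rw [indicator_of_mem hu]; exact le_iSup φ _
            · show φ (Fin.insertNth i u x) ≤ _
              rw [hsupp x u (habs u hu)]
              exact zero_le
        _ = (⨆ z, φ z) * volume (Icc (-R) R) := lintegral_indicator_const measurableSet_Icc _
    -- apply induction hypothesis
    rw [hint f hf, hint g hg, hint h hh]
    apply ih F G H hFm hGm hHm ?_ ?_ R ?_ ?_ ?_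
    · exact ne_top_of_le_ne_top (ENNReal.mul_ne_top hftop hIccfin)
        (iSup_le (hbound f hsecf))
    · exact ne_top_of_le_ne_top (ENNReal.mul_ne_top hgtop hIccfin)
        (iSup_le (hbound g hsecg))
    · intro x j hj
      show (∫⁻ u, f (Fin.insertNth i u x)) = 0
      have : ∀ u : ℝ, f (Fin.insertNth i u x) = 0 := by
        intro u
        apply hfR _ (i.succAbove j)
        rwa [Fin.insertNth_apply_succAbove]
      rw [lintegral_congr this, lintegral_zero]
    · intro y j hj
      show (∫⁻ v, g (Fin.insertNth i v y)) = 0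
      have : ∀ v : ℝ, g (Fin.insertNth i v y) = 0 := by
        intro v
        apply hgR _ (i.succAbove j)
        rwa [Fin.insertNth_apply_succAbove]
      rw [lintegral_congr this, lintegral_zero]
    · intro x y
      apply onedim_PL (fun u => f (Fin.insertNth i u x)) (fun v => g (Fin.insertNth i v y))
        (fun w => h (Fin.insertNth i w (fun j => (x j + y j) / 2)))
        ((hmeas f hf).comp (measurable_id.prodMk measurable_const))
        ((hmeas g hg).comp (measurable_id.prodMk measurable_const))
        ((hmeas h hh).comp (measurable_id.prodMk measurable_const))
        (ne_top_of_le_ne_top hftop (iSup_le fun u => le_iSup f _))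
        (ne_top_of_le_ne_top hgtop (iSup_le fun v => le_iSup g _))
        R (hsecf x) (hsecg y)
      intro u v
      have := hyp (Fin.insertNth i u x) (Fin.insertNth i v y)
      rwa [← insertNth_mid i u v x y] at this

variable {m : ℕ}

-- scaling identity
lemma scaling_W (K : Set (Fin (m + 1) → ℝ)) {t : ℝ} (ht : 0 < t) :
    ∫ x in t • K, Real.exp (-x 0) = t ^ (m + 1) * ∫ x in K, Real.exp (-(t * x 0)) := by
  have h := Measure.setIntegral_comp_smul (volume : Measure (Fin (m+1) → ℝ))
    (fun y => Real.exp (-y 0)) K ht.ne'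
  simp only [Pi.smul_apply, smul_eq_mul, Module.finrank_fin_fun] at h
  rw [h, ← mul_assoc, abs_of_nonneg (by positivity), mul_inv_cancel₀ (by positivity), one_mul]

-- positivity of Z
lemma Z_pos (K : Set (Fin (m + 1) → ℝ)) (hKc : IsCompact K)
    (hKi : (interior K).Nonempty) (c : ℝ) :
    0 < ∫ x in K, Real.exp (-(c * x 0)) := by
  obtain ⟨M, hM⟩ := hKc.isBounded.subset_closedBall 0
  have hcont : Continuous fun x : Fin (m+1) → ℝ => Real.exp (-(c * x 0)) := by
    continuity
  have hint : IntegrableOn (fun x : Fin (m+1) → ℝ => Real.exp (-(c * x 0))) K :=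
    hcont.continuousOn.integrableOn_compact hKc
  have hKvol : 0 < volume K := Measure.measure_pos_of_nonempty_interior _ hKi
  have hKfin : volume K ≠ ∞ := hKc.measure_lt_top.ne
  have hlow : ∀ x ∈ K, Real.exp (-(|c| * M)) ≤ Real.exp (-(c * x 0)) := by
    intro x hx
    apply Real.exp_le_exp.mpr
    have h1 : |x 0| ≤ ‖x‖ := by
      rw [← Real.norm_eq_abs]; exact norm_le_pi_norm x 0
    have h2 : ‖x‖ ≤ M := by simpa using hM hx
    have : c * x 0 ≤ |c| * M := by
      calc c * x 0 ≤ |c * x 0| := le_abs_self _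
        _ = |c| * |x 0| := abs_mul _ _
        _ ≤ |c| * M := by
            apply mul_le_mul_of_nonneg_left (h1.trans h2) (abs_nonneg c)
    linarith
  calc (0:ℝ) < Real.exp (-(|c| * M)) * (volume K).toReal := by
        apply mul_pos (Real.exp_pos _)
        exact ENNReal.toReal_pos hKvol.ne' hKfin
    _ ≤ ∫ x in K, Real.exp (-(c * x 0)) :=
        by have := setIntegral_ge_of_const_le_real hKc.measurableSet hKfin hlow hint
           exact this

lemma smul_PL (K : Set (Fin (m + 1) → ℝ)) (hKc : IsCompact K) (hKv : Convex ℝ K)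
    (a c : ℝ) (ha : 0 < a) (hc : 0 < c) :
    (∫ x in a • K, Real.exp (-x 0)) * (∫ x in c • K, Real.exp (-x 0))
      ≤ (∫ x in ((a + c) / 2) • K, Real.exp (-x 0)) ^ 2 := by
  set b := (a + c) / 2 with hbdef
  obtain ⟨M0, hM0⟩ := hKc.isBounded.subset_closedBall 0
  set M := max M0 0 with hM
  have hKM : K ⊆ Metric.closedBall 0 M :=
    hM0.trans (Metric.closedBall_subset_closedBall (le_max_left _ _))
  set R := (a + c) * M with hRdef
  have hRnn : 0 ≤ R := by positivity
  -- norm bound on scaled elements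
  have hnorm : ∀ t : ℝ, 0 < t → t ≤ a + c → ∀ x ∈ t • K, ‖x‖ ≤ R := by
    intro t ht htle x hx
    obtain ⟨p, hp, rfl⟩ := hx
    have hpM : ‖p‖ ≤ M := by simpa using hKM hp
    calc ‖t • p‖ = |t| * ‖p‖ := by rw [norm_smul, Real.norm_eq_abs]
      _ = t * ‖p‖ := by rw [abs_of_pos ht]
      _ ≤ (a + c) * M := by
          apply mul_le_mul htle hpM (norm_nonneg _) (by positivity)
  have hcoord : ∀ x : Fin (m+1) → ℝ, ∀ j, |x j| ≤ ‖x‖ := by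
    intro x j
    rw [← Real.norm_eq_abs]
    exact norm_le_pi_norm x j
  -- the three functions
  have hmemsc : ∀ t : ℝ, MeasurableSet (t • K) := fun t => by
    rcases eq_or_ne t 0 with rfl | ht
    · rcases eq_empty_or_nonempty K with rfl | hKne
      · simp
      · rw [zero_smul_set hKne]
        exact measurableSet_singleton 0
    · exact ((hKc.image (continuous_const_smul t)).isClosed).measurableSet
  set fA : (Fin (m+1) → ℝ) → ℝ≥0∞ :=
    (a • K).indicator (fun x => ENNReal.ofReal (Real.exp (-x 0))) with hfA
  set fC : (Fin (m+1) → ℝ) → ℝ≥0∞ :=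
    (c • K).indicator (fun x => ENNReal.ofReal (Real.exp (-x 0))) with hfC
  set fB : (Fin (m+1) → ℝ) → ℝ≥0∞ :=
    (b • K).indicator (fun x => ENNReal.ofReal (Real.exp (-x 0))) with hfB
  have hmeasae : Measurable fun x : Fin (m+1) → ℝ => ENNReal.ofReal (Real.exp (-x 0)) := by
    apply ENNReal.measurable_ofReal.comp
    exact (Real.continuous_exp.comp (continuous_neg.comp (continuous_apply 0))).measurable
  have hfAm : Measurable fA := hmeasae.indicator (hmemsc a)
  have hfCm : Measurable fC := hmeasae.indicator (hmemsc c)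
  have hfBm : Measurable fB := hmeasae.indicator (hmemsc b)
  -- sup bounds
  have hsup : ∀ (t : ℝ), 0 < t → t ≤ a + c →
      (⨆ x, ((t • K).indicator (fun x => ENNReal.ofReal (Real.exp (-x 0)))) x) ≠ ∞ := by
    intro t ht htle
    apply ne_top_of_le_ne_top (ENNReal.ofReal_ne_top (r := Real.exp R))
    apply iSup_le
    intro x
    by_cases hx : x ∈ t • K
    · rw [indicator_of_mem hx]
      apply ENNReal.ofReal_le_ofReal
      apply Real.exp_le_exp.mpr
      have := (hcoord x 0).trans (hnorm t ht htle x hx)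
      have h2 := neg_le_of_abs_le ((hcoord x 0).trans (hnorm t ht htle x hx))
      linarith [abs_nonneg (x 0)]
    · rw [indicator_of_notMem hx]; exact zero_le
  -- support
  have hsupp : ∀ (t : ℝ), 0 < t → t ≤ a + c → ∀ x : Fin (m+1) → ℝ, ∀ j, R < |x j| →
      ((t • K).indicator (fun x => ENNReal.ofReal (Real.exp (-x 0)))) x = 0 := by
    intro t ht htle x j hj
    apply indicator_of_notMem
    intro hx
    exact absurd ((hcoord x j).trans (hnorm t ht htle x hx)) (not_le.mpr hj)
  -- midpoint hypothesis
  have hmid : ∀ x y, fA x * fC y ≤ fB (fun j => (x j + y j) / 2) ^ 2 := by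
    intro x y
    by_cases hx : x ∈ a • K
    · by_cases hy : y ∈ c • K
      · have hmem : (fun j => (x j + y j) / 2) ∈ b • K := by
          have hsum : x + y ∈ (a + c) • K := by
            rw [hKv.add_smul ha.le hc.le]
            exact Set.add_mem_add hx hy
          have h2 : (fun j => (x j + y j) / 2) = (2⁻¹ : ℝ) • (x + y) := by
            funext j
            simp [Pi.smul_apply, smul_eq_mul, div_eq_inv_mul]
          rw [h2, hbdef, div_eq_inv_mul, mul_smul]
          exact smul_mem_smul_set hsum
        rw [hfA, hfC, hfB, indicator_of_mem hx, indicator_of_mem hy, indicator_of_mem hmem]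
        apply le_of_eq
        rw [← ENNReal.ofReal_mul (Real.exp_nonneg _), ← ENNReal.ofReal_pow (Real.exp_nonneg _)]
        congr 1
        rw [← Real.exp_add, ← Real.exp_nat_mul]
        congr 1
        push_cast
        ring
      · rw [hfC, indicator_of_notMem hy, mul_zero]
        exact zero_le
    · rw [hfA, indicator_of_notMem hx, zero_mul]
      exact zero_le
  have hb : 0 < b := by rw [hbdef]; positivity
  have hble : b ≤ a + c := by rw [hbdef]; linarith
  have hPL := multi_PL (m + 1) fA fC fB hfAm hfCm hfBm
    (hsup a ha (by linarith)) (hsup c hc (by linarith)) R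
    (hsupp a ha (by linarith)) (hsupp c hc (by linarith)) hmid
  -- convert lintegrals to integrals
  have hconv : ∀ (t : ℝ), 0 < t →
      ∫⁻ x, ((t • K).indicator (fun x => ENNReal.ofReal (Real.exp (-x 0)))) x
        = ENNReal.ofReal (∫ x in t • K, Real.exp (-x 0)) := by
    intro t ht
    rw [lintegral_indicator (hmemsc t)]
    rw [ofReal_integral_eq_lintegral_ofReal]
    · apply ContinuousOn.integrableOn_compact (hKc.image (continuous_const_smul t))
      exact (Real.continuous_exp.comp (continuous_neg.comp (continuous_apply 0))).continuousOn
    · exact Eventually.of_forall (fun x => (Real.exp_nonneg _)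
)
  rw [hconv a ha, hconv c hc, hconv b hb] at hPL
  rw [← ENNReal.ofReal_mul (integral_nonneg (fun x => (Real.exp_nonneg _))),
    ← ENNReal.ofReal_pow (integral_nonneg (fun x => (Real.exp_nonneg _)))] at hPL
  exact (ENNReal.ofReal_le_ofReal_iff (by positivity)).mp hPL

end PLmachinery

/-- For a convex body `K' ⊆ ℝ^{n+1}` with `Z(c) := ∫_{K'} e^{-c x₀} dx` and
density `π_a(x) = e^{-a x₀}/Z(a)`: let `a, b > 0` with `2b > a`, and let `V := e^{(a-b) X₀}`
where `X` is a random point of `K'` with density `π_a`. Then `E[V] = Z(b)/Z(a)`,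
`E[V²] = Z(2b-a)/Z(a)`, and `E[V²]/E[V]² = Z(2b-a) Z(a)/Z(b)² ≤ (b²/(a(2b-a)))^{n+1}`.
In particular, if `n ≥ 2` and `a = (1 + 1/√n) b`, then `E[V²]/E[V]² ≤ 8`. -/
theorem chebyshev_cooling_ratio_bound
    (n : ℕ) (hn : 1 ≤ n) (K' : Set (Fin (n + 1) → ℝ))
    (hK_compact : IsCompact K') (hK_convex : Convex ℝ K')
    (hK_interior : (interior K').Nonempty)
    (Z : ℝ → ℝ) (hZ : ∀ c, Z c = ∫ x in K', Real.exp (-(c * x 0)))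
    (a b : ℝ) (ha : 0 < a) (hb : 0 < b) (hab : a < 2 * b) :
    (∫ x in K', Real.exp ((a - b) * x 0) * (Real.exp (-(a * x 0)) / Z a)) = Z b / Z a ∧
    (∫ x in K', (Real.exp ((a - b) * x 0)) ^ 2 * (Real.exp (-(a * x 0)) / Z a))
      = Z (2 * b - a) / Z a ∧
    (Z (2 * b - a) / Z a) / (Z b / Z a) ^ 2 = Z (2 * b - a) * Z a / Z b ^ 2 ∧
    Z (2 * b - a) * Z a / Z b ^ 2 ≤ (b ^ 2 / (a * (2 * b - a))) ^ (n + 1) ∧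
    (2 ≤ n → a = (1 + 1 / Real.sqrt n) * b → Z (2 * b - a) * Z a / Z b ^ 2 ≤ 8) := by
  have hc : 0 < 2 * b - a := by linarith
  have hZpos : ∀ c : ℝ, 0 < Z c := by
    intro c
    rw [hZ c]
    exact Z_pos K' hK_compact hK_interior c
  have hZa := hZpos a
  have hZb := hZpos b
  have hZc := hZpos (2 * b - a)
  -- Part 1
  have part1 : (∫ x in K', Real.exp ((a - b) * x 0) * (Real.exp (-(a * x 0)) / Z a))
      = Z b / Z a := by
    have h1 : ∀ x : Fin (n+1) → ℝ,
        Real.exp ((a - b) * x 0) * (Real.exp (-(a * x 0)) / Z a)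
          = Real.exp (-(b * x 0)) * (Z a)⁻¹ := by
      intro x
      rw [div_eq_mul_inv, ← mul_assoc, ← Real.exp_add]
      have : (a - b) * x 0 + -(a * x 0) = -(b * x 0) := by ring
      rw [this]
    simp only [h1]
    rw [integral_mul_const, ← hZ b, div_eq_mul_inv]
  -- Part 2
  have part2 : (∫ x in K', (Real.exp ((a - b) * x 0)) ^ 2 * (Real.exp (-(a * x 0)) / Z a))
      = Z (2 * b - a) / Z a := by
    have h2 : ∀ x : Fin (n+1) → ℝ,
        (Real.exp ((a - b) * x 0)) ^ 2 * (Real.exp (-(a * x 0)) / Z a)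
          = Real.exp (-((2 * b - a) * x 0)) * (Z a)⁻¹ := by
      intro x
      rw [div_eq_mul_inv, ← mul_assoc, ← Real.exp_nat_mul, ← Real.exp_add]
      have : (2 : ℕ) * ((a - b) * x 0) + -(a * x 0) = -((2 * b - a) * x 0) := by
        push_cast
        ring
      rw [this]
    simp only [h2]
    rw [integral_mul_const, ← hZ (2 * b - a), div_eq_mul_inv]
  -- Part 3
  have part3 : (Z (2 * b - a) / Z a) / (Z b / Z a) ^ 2 = Z (2 * b - a) * Z a / Z b ^ 2 := by
    field_simp
  -- Part 4
  have part4 : Z (2 * b - a) * Z a / Z b ^ 2 ≤ (b ^ 2 / (a * (2 * b - a))) ^ (n + 1) := by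
    have hmidb : (a + (2 * b - a)) / 2 = b := by ring
    have hPL := smul_PL K' hK_compact hK_convex a (2 * b - a) ha hc
    rw [hmidb] at hPL
    rw [scaling_W K' ha, scaling_W K' hc, scaling_W K' hb, ← hZ a, ← hZ (2 * b - a), ← hZ b]
      at hPL
    rw [div_pow, div_le_div_iff₀ (by positivity) (by positivity), mul_pow a (2 * b - a),
      pow_right_comm b 2 (n + 1)]
    calc Z (2 * b - a) * Z a * (a ^ (n + 1) * (2 * b - a) ^ (n + 1))
        = (a ^ (n+1) * Z a) * ((2 * b - a) ^ (n+1) * Z (2 * b - a)) := by ring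
      _ ≤ (b ^ (n+1) * Z b) ^ 2 := hPL
      _ = (b ^ (n + 1)) ^ 2 * (Z b) ^ 2 := by rw [mul_pow]
  refine ⟨part1, part2, part3, part4, ?_⟩
  -- Part 5
  intro hn2 hae
  have hnR : (2 : ℝ) ≤ (n : ℝ) := by exact_mod_cast hn2
  have hn1R : (0 : ℝ) < (n : ℝ) - 1 := by linarith
  have hnpos : (0 : ℝ) < (n : ℝ) := by linarith
  have hsq : (1 / Real.sqrt n) ^ 2 = 1 / (n : ℝ) := by
    rw [div_pow, one_pow, Real.sq_sqrt hnpos.le]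
  have hprod : a * (2 * b - a) = (1 - 1 / (n : ℝ)) * b ^ 2 := by
    have : a * (2 * b - a) = (1 - (1 / Real.sqrt n) ^ 2) * b ^ 2 := by
      rw [hae]; ring
    rw [this, hsq]
  have h1n : (0 : ℝ) < 1 - 1 / (n : ℝ) := by
    rw [sub_pos, div_lt_one hnpos]
    linarith
  have hratio : b ^ 2 / (a * (2 * b - a)) = (n : ℝ) / ((n : ℝ) - 1) := by
    rw [hprod, div_eq_div_iff (by positivity) (by linarith : ((n : ℝ) - 1) ≠ 0)]
    field_simp
  have hfinal : ((n : ℝ) / ((n : ℝ) - 1)) ^ (n + 1) ≤ 8 := by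
    rcases eq_or_lt_of_le hn2 with h2 | h3
    · subst h2
      norm_num
    · -- n ≥ 3
      have hn3 : (3 : ℝ) ≤ (n : ℝ) := by exact_mod_cast h3
      have hx : (0 : ℝ) < (n : ℝ) / ((n : ℝ) - 1) := div_pos hnpos hn1R
      have hlog : Real.log ((n : ℝ) / ((n : ℝ) - 1)) ≤ 1 / ((n : ℝ) - 1) := by
        have h := Real.log_le_sub_one_of_pos hx
        have heq : (n : ℝ) / ((n : ℝ) - 1) - 1 = 1 / ((n : ℝ) - 1) := by
          rw [div_sub_one hn1R.ne']; congr 1; ring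
        linarith [heq ▸ h]
      have hexp : ((n : ℝ) / ((n : ℝ) - 1)) ^ (n + 1)
          = Real.exp ((n + 1 : ℕ) * Real.log ((n : ℝ) / ((n : ℝ) - 1))) := by
        rw [Real.exp_nat_mul, Real.exp_log hx]
      rw [hexp]
      have hb2 : ((n + 1 : ℕ) : ℝ) * Real.log ((n : ℝ) / ((n : ℝ) - 1)) ≤ 2 := by
        have hnn : ((n + 1 : ℕ) : ℝ) = (n : ℝ) + 1 := by push_cast; ring
        rw [hnn]
        have hlognn : 0 ≤ Real.log ((n : ℝ) / ((n : ℝ) - 1)) := by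
          apply Real.log_nonneg
          rw [le_div_iff₀ hn1R]
          linarith
        calc ((n : ℝ) + 1) * Real.log ((n : ℝ) / ((n : ℝ) - 1))
            ≤ ((n : ℝ) + 1) * (1 / ((n : ℝ) - 1)) := by
              apply mul_le_mul_of_nonneg_left hlog (by linarith)
          _ ≤ 2 := by
              rw [mul_one_div, div_le_iff₀ hn1R]
              linarith
      calc Real.exp ((n + 1 : ℕ) * Real.log ((n : ℝ) / ((n : ℝ) - 1)))
          ≤ Real.exp 2 := Real.exp_le_exp.mpr hb2
        _ ≤ 8 := by
            have he2 : Real.exp 2 = Real.exp 1 * Real.exp 1 := by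
              rw [← Real.exp_add]; norm_num
            nlinarith [Real.exp_one_lt_d9, Real.exp_pos 1]
  calc Z (2 * b - a) * Z a / Z b ^ 2 ≤ (b ^ 2 / (a * (2 * b - a))) ^ (n + 1) := part4
    _ = ((n : ℝ) / ((n : ℝ) - 1)) ^ (n + 1) := by rw [hratio]
    _ ≤ 8 := hfinal
end

section
/- Let H be a complex Hilbert space, let ψ, φ ∈ H be unit vectors, and let 0 < p ≤ 1 satisfy |⟨ψ, φ⟩|² ≥ p. Set ω := e^{iπ/3} and define the unitaries R_ψ := ω P_ψ + (I − P_ψ) and R_φ := ω P_φ + (I − P_φ), where P_ψ and P_φ are the orthogonal projections onto the spans of ψ and φ. Define unitaries recursively by U₀ := I and U_{m+1} := U_m R_ψ U_m† R_φ U_m (U_m† the adjoint of U_m). Then for every m ≥ 0, |⟨φ, U_m ψ⟩|² ≥ 1 − (1 − p)^{3^m}. -/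
open scoped ComplexInnerProductSpace

open ContinuousLinearMap

private lemma aux_reflection_unitary
    {H : Type*} [NormedAddCommGroup H] [InnerProductSpace ℂ H] [CompleteSpace H]
    (v : H) (hv : ⟪v, v⟫ = (1:ℂ)) (ω : ℂ) (hω1 : ω * (starRingEnd ℂ) ω = 1)
    (P R : H →L[ℂ] H) (hP : ∀ x, P x = ⟪v, x⟫ • v)
    (hR : R = ω • P + (1 - P)) :
    (∀ x, adjoint R (R x) = x) ∧ (∀ x, R (adjoint R x) = x) := by
  have hadj : (starRingEnd ℂ ω) • P + (1 - P) = adjoint R := by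
    rw [ContinuousLinearMap.eq_adjoint_iff]
    intro x y
    simp only [hR, add_apply, smul_apply, sub_apply, one_apply_eq_self, hP,
      inner_add_left, inner_add_right, inner_sub_left, inner_sub_right,
      inner_smul_left, inner_smul_right]
    simp only [Complex.conj_conj, inner_conj_symm]
    ring
  have hRapp : ∀ x, R x = (ω * ⟪v, x⟫) • v + (x - ⟪v, x⟫ • v) := by
    intro x
    simp only [hR, add_apply, smul_apply, sub_apply, one_apply_eq_self, hP, smul_smul]
  have hAapp : ∀ x, adjoint R x = ((starRingEnd ℂ ω) * ⟪v, x⟫) • v + (x - ⟪v, x⟫ • v) := by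
    intro x
    rw [← hadj]
    simp only [add_apply, smul_apply, sub_apply, one_apply_eq_self, hP, smul_smul]
  have hω1' : (starRingEnd ℂ ω) * ω = 1 := by rw [mul_comm]; exact hω1
  constructor
  · intro x
    rw [hRapp, hAapp]
    simp only [inner_add_right, inner_sub_right, inner_smul_right, hv, mul_one]
    match_scalars
    · linear_combination (⟪v, x⟫ : ℂ) * hω1
    · ring
  · intro x
    rw [hAapp, hRapp]
    simp only [inner_add_right, inner_sub_right, inner_smul_right, hv, mul_one]
    match_scalars
    · linear_combination (⟪v, x⟫ : ℂ) * hω1'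
    · ring

private lemma aux_comp_unitary
    {H : Type*} [NormedAddCommGroup H] [InnerProductSpace ℂ H] [CompleteSpace H]
    (A B : H →L[ℂ] H)
    (hA : (∀ x, adjoint A (A x) = x) ∧ (∀ x, A (adjoint A x) = x))
    (hB : (∀ x, adjoint B (B x) = x) ∧ (∀ x, B (adjoint B x) = x)) :
    (∀ x, adjoint (A ∘L B) ((A ∘L B) x) = x) ∧
      (∀ x, (A ∘L B) (adjoint (A ∘L B) x) = x) := by
  constructor
  · intro x
    simp only [ContinuousLinearMap.adjoint_comp, comp_apply]
    rw [hA.1, hB.1]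
  · intro x
    simp only [ContinuousLinearMap.adjoint_comp, comp_apply]
    rw [hB.2, hA.2]


/-- π/3-amplitude amplification. Let `H` be a complex Hilbert space,
`ψ, φ` unit vectors with `|⟨ψ, φ⟩|² ≥ p` for some `0 < p ≤ 1`, `ω = e^{iπ/3}`,
`R_ψ = ω P_ψ + (I - P_ψ)`, `R_φ = ω P_φ + (I - P_φ)` (with `P_v` the orthogonal projection
onto the span of `v`), and `U₀ = I`, `U_{m+1} = U_m R_ψ U_m† R_φ U_m`. Then for every `m`,
`|⟨φ, U_m ψ⟩|² ≥ 1 - (1-p)^{3^m}`. -/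
theorem pi_over_three_amplitude_amplification
    {H : Type*} [NormedAddCommGroup H] [InnerProductSpace ℂ H] [CompleteSpace H]
    (ψ φ : H) (hψ : ‖ψ‖ = 1) (hφ : ‖φ‖ = 1)
    (p : ℝ) (hp0 : 0 < p) (hp1 : p ≤ 1)
    (hoverlap : p ≤ ‖⟪ψ, φ⟫‖ ^ 2)
    (ω : ℂ) (hω : ω = Complex.exp (Real.pi * Complex.I / 3))
    (Pψ Pφ : H →L[ℂ] H)
    (hPψ : ∀ x, Pψ x = ⟪ψ, x⟫ • ψ) (hPφ : ∀ x, Pφ x = ⟪φ, x⟫ • φ)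
    (Rψ Rφ : H →L[ℂ] H)
    (hRψ : Rψ = ω • Pψ + (1 - Pψ)) (hRφ : Rφ = ω • Pφ + (1 - Pφ))
    (U : ℕ → H →L[ℂ] H) (hU0 : U 0 = 1)
    (hUrec : ∀ m, U (m + 1)
      = (((U m ∘L Rψ) ∘L ContinuousLinearMap.adjoint (U m)) ∘L Rφ) ∘L U m) :
    ∀ m : ℕ, 1 - (1 - p) ^ (3 ^ m) ≤ ‖⟪φ, U m ψ⟫‖ ^ 2 := by
  have hψψ : ⟪ψ, ψ⟫ = (1:ℂ) := by rw [inner_self_eq_norm_sq_to_K, hψ]; norm_num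
  have hφφ : ⟪φ, φ⟫ = (1:ℂ) := by rw [inner_self_eq_norm_sq_to_K, hφ]; norm_num
  -- facts about ω
  have hωform : ω = Complex.exp ((Real.pi / 3 : ℝ) * Complex.I) := by
    rw [hω]; push_cast; ring_nf
  have hωabs : ‖ω‖ = 1 := by
    rw [hωform]; exact Complex.norm_exp_ofReal_mul_I _
  have hω1 : ω * (starRingEnd ℂ) ω = 1 := by
    rw [Complex.mul_conj, ← Complex.sq_norm, hωabs]; norm_num
  have hωre : ω.re = 1/2 := by
    rw [hωform, Complex.exp_ofReal_mul_I_re, Real.cos_pi_div_three]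
  have hω2 : (starRingEnd ℂ) ω = 1 - ω := by
    have h := Complex.add_conj ω
    rw [hωre] at h
    have h' : ω + (starRingEnd ℂ) ω = 1 := by rw [h]; norm_num
    linear_combination h'
  have hωsq : ω ^ 2 = ω - 1 := by
    have h := hω1
    rw [hω2] at h
    linear_combination -h
  -- unitarity of Rψ, Rφ, and U m
  have hRψU := aux_reflection_unitary ψ hψψ ω hω1 Pψ Rψ hPψ hRψ
  have hRφU := aux_reflection_unitary φ hφφ ω hω1 Pφ Rφ hPφ hRφ
  have hid : (∀ x : H, adjoint (1 : H →L[ℂ] H) ((1 : H →L[ℂ] H) x) = x) ∧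
      (∀ x : H, (1 : H →L[ℂ] H) (adjoint (1 : H →L[ℂ] H) x) = x) := by
    have h1 : adjoint (1 : H →L[ℂ] H) = 1 := by
      symm
      rw [ContinuousLinearMap.eq_adjoint_iff]
      intro x y
      simp
    simp [h1]
  have hUL : ∀ m, (∀ x, adjoint (U m) (U m x) = x) ∧ (∀ x, U m (adjoint (U m) x) = x) := by
    intro m
    induction m with
    | zero => rw [hU0]; exact hid
    | succ m ih =>
      rw [hUrec]
      have hadj : (∀ x, adjoint (adjoint (U m)) (adjoint (U m) x) = x) ∧
          (∀ x, adjoint (U m) (adjoint (adjoint (U m)) x) = x) := by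
        constructor
        · intro x; rw [ContinuousLinearMap.adjoint_adjoint]; exact ih.2 x
        · intro x; rw [ContinuousLinearMap.adjoint_adjoint]; exact ih.1 x
      exact aux_comp_unitary _ _
        (aux_comp_unitary _ _
          (aux_comp_unitary _ _ (aux_comp_unitary _ _ ih hRψU) hadj) hRφU) ih
  -- the recursion for the amplitude
  have hrec : ∀ m, ⟪φ, U (m+1) ψ⟫
      = ⟪φ, U m ψ⟫ * (2*ω - 1 + (ω-1)^2 * (⟪φ, U m ψ⟫ * (starRingEnd ℂ) ⟪φ, U m ψ⟫)) := by
    intro m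
    set a : ℂ := ⟪φ, U m ψ⟫ with ha
    have hUstep : U (m+1) ψ = ω • (U m ψ) + ((ω-1) * a) • φ
        + ((ω-1)^2 * a * (starRingEnd ℂ) a) • (U m ψ) := by
      rw [hUrec]
      simp only [comp_apply]
      have h1 : Rφ (U m ψ) = U m ψ + ((ω-1) * a) • φ := by
        rw [hRφ]
        simp only [add_apply, smul_apply, sub_apply, one_apply_eq_self, hPφ, ← ha]
        match_scalars <;> ring
      rw [h1, map_add, map_smul, (hUL m).1 ψ]
      have h2 : ⟪ψ, adjoint (U m) φ⟫ = (starRingEnd ℂ) a := by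
        rw [ContinuousLinearMap.adjoint_inner_right, ← inner_conj_symm, ha]
      have h3 : Rψ ψ = ω • ψ := by
        rw [hRψ]
        simp only [add_apply, smul_apply, sub_apply, one_apply_eq_self, hPψ, hψψ, one_smul]
        abel
      have h4 : Rψ (adjoint (U m) φ) = adjoint (U m) φ + ((ω-1) * (starRingEnd ℂ) a) • ψ := by
        rw [hRψ]
        simp only [add_apply, smul_apply, sub_apply, one_apply_eq_self, hPψ, h2]
        match_scalars <;> ring
      rw [map_add, map_smul, h3, h4]
      simp only [map_add, map_smul]
      rw [(hUL m).2 φ]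
      match_scalars <;> ring
    rw [hUstep]
    simp only [inner_add_right, inner_smul_right, hφφ, ← ha]
    ring
  -- passing to normSq
  have hnsq : ∀ m, Complex.normSq ⟪φ, U (m+1) ψ⟫
      = Complex.normSq ⟪φ, U m ψ⟫ * (3 - 3 * Complex.normSq ⟪φ, U m ψ⟫
          + Complex.normSq ⟪φ, U m ψ⟫ ^ 2) := by
    intro m
    set a : ℂ := ⟪φ, U m ψ⟫ with ha
    have key : (Complex.normSq ⟪φ, U (m+1) ψ⟫ : ℂ)
        = (Complex.normSq a : ℂ) * (3 - 3 * (Complex.normSq a : ℂ) + (Complex.normSq a : ℂ)^2) := by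
      rw [← Complex.mul_conj, ← Complex.mul_conj, hrec m, ← ha]
      simp only [map_mul, map_add, map_sub, map_pow, map_one, map_ofNat, Complex.conj_conj, hω2]
      set b : ℂ := (starRingEnd ℂ) a
      linear_combination (a^3*b^3*ω^2 - a^3*b^3*ω - 4*a*b + 4*a^2*b^2 - a^3*b^3) * hωsq
    exact_mod_cast key
  -- normSq ≤ 1
  have ht1 : ∀ m, Complex.normSq ⟪φ, U m ψ⟫ ≤ 1 := by
    intro m
    have hs : ⟪U m ψ, U m ψ⟫ = (1:ℂ) := by
      rw [← ContinuousLinearMap.adjoint_inner_right, (hUL m).1 ψ, hψψ]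
    have hnorm : ‖U m ψ‖ = 1 := by
      have h := inner_self_eq_norm_sq (𝕜 := ℂ) (U m ψ)
      rw [hs] at h
      simp at h
      nlinarith [norm_nonneg (U m ψ)]
    have h := norm_inner_le_norm (𝕜 := ℂ) φ (U m ψ)
    rw [hφ, hnorm, one_mul] at h
    rw [← Complex.sq_norm]
    have habs : ‖⟪φ, U m ψ⟫‖ ≤ 1 := h
    nlinarith [norm_nonneg ⟪φ, U m ψ⟫]
  -- main induction
  have main : ∀ m, 1 - Complex.normSq ⟪φ, U m ψ⟫ ≤ (1 - p) ^ (3 ^ m) := by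
    intro m
    induction m with
    | zero =>
      have h0 : Complex.normSq ⟪φ, ψ⟫ = Complex.normSq ⟪ψ, φ⟫ := by
        rw [← inner_conj_symm]; exact Complex.normSq_conj _
      have : p ≤ Complex.normSq ⟪φ, ψ⟫ := by
        rw [h0, ← Complex.sq_norm]; exact hoverlap
      simp only [hU0, one_apply_eq_self, pow_zero, pow_one]
      linarith
    | succ m ih =>
      have h0 : 0 ≤ 1 - Complex.normSq ⟪φ, U m ψ⟫ := by linarith [ht1 m]
      have hcube : 1 - Complex.normSq ⟪φ, U (m+1) ψ⟫
          = (1 - Complex.normSq ⟪φ, U m ψ⟫) ^ 3 := by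
        rw [hnsq m]; ring
      rw [hcube]
      calc (1 - Complex.normSq ⟪φ, U m ψ⟫) ^ 3 ≤ ((1 - p) ^ (3 ^ m)) ^ 3 :=
            pow_le_pow_left₀ h0 ih 3
        _ = (1 - p) ^ (3 ^ (m+1)) := by rw [← pow_mul, pow_succ]
  intro m
  have := main m
  rw [Complex.sq_norm]
  linarith
end

section
/- Let K be a complex Hilbert space, E an orthogonal projection on K, V a unitary on K, ω := e^{iπ/3}, and 0 ≤ ε ≤ 1. Suppose u₀ and u₁ are unit vectors in the range of E such that V u₀ = u₀ and V u₁ = √(1−ε)·w + √ε·u₁ for some unit vector w with E w = 0. Define Q := ω E + (I − E) and R̃ := V† Q V. Then R̃ u₀ = ω u₀ and ‖R̃ u₁ − u₁‖ ≤ 2√ε. -/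
/-- Approximate reflection from phase estimation. Let `K` be a complex
Hilbert space, `E` an orthogonal projection, `V` a unitary, `ω = e^{iπ/3}`, `0 ≤ ε ≤ 1`.
Suppose `u₀, u₁` are unit vectors in the range of `E` with `V u₀ = u₀` and
`V u₁ = √(1-ε) w + √ε u₁` for a unit vector `w` with `E w = 0`. Let `Q = ω E + (I - E)` and
`R̃ = V† Q V`. Then `R̃ u₀ = ω u₀` and `‖R̃ u₁ - u₁‖ ≤ 2√ε`. -/
theorem approximate_reflection_via_phase_estimation
    {K : Type*} [NormedAddCommGroup K] [InnerProductSpace ℂ K] [CompleteSpace K]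
    (E : K →L[ℂ] K) (hE_idem : E ∘L E = E)
    (hE_sa : ContinuousLinearMap.adjoint E = E)
    (V : K →L[ℂ] K) (hV_iso : ∀ x, ‖V x‖ = ‖x‖) (hV_surj : Function.Surjective V)
    (ω : ℂ) (hω : ω = Complex.exp (Real.pi * Complex.I / 3))
    (ε : ℝ) (hε0 : 0 ≤ ε) (hε1 : ε ≤ 1)
    (u₀ u₁ w : K) (hu₀ : ‖u₀‖ = 1) (hu₁ : ‖u₁‖ = 1) (hw : ‖w‖ = 1)
    (hEu₀ : E u₀ = u₀) (hEu₁ : E u₁ = u₁) (hEw : E w = 0)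
    (hVu₀ : V u₀ = u₀)
    (hVu₁ : V u₁ = (Real.sqrt (1 - ε) : ℂ) • w + (Real.sqrt ε : ℂ) • u₁)
    (Q R : K →L[ℂ] K)
    (hQ : Q = ω • E + (1 - E))
    (hR : R = (ContinuousLinearMap.adjoint V ∘L Q) ∘L V) :
    R u₀ = ω • u₀ ∧ ‖R u₁ - u₁‖ ≤ 2 * Real.sqrt ε := by
  set V' : K →L[ℂ] K := ContinuousLinearMap.adjoint V with hV'
  have hinner : ∀ x y : K, inner ℂ (V x) (V y) = (inner ℂ x y : ℂ) := fun x y =>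
    (⟨V.toLinearMap, hV_iso⟩ : K →ₗᵢ[ℂ] K).inner_map_map x y
  have hVadjV : ∀ x, V' (V x) = x := by
    intro x
    apply ext_inner_right ℂ
    intro y
    rw [hV', ContinuousLinearMap.adjoint_inner_left, hinner]
  have hV'_norm : ∀ z, ‖V' z‖ = ‖z‖ := by
    intro z
    obtain ⟨x, rfl⟩ := hV_surj z
    rw [hVadjV, hV_iso]
  -- Q on range of E and on kernel of E
  have hQu₀ : Q u₀ = ω • u₀ := by
    simp [hQ, ContinuousLinearMap.add_apply, ContinuousLinearMap.smul_apply,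
      ContinuousLinearMap.sub_apply, hEu₀]
  have hQu₁ : Q u₁ = ω • u₁ := by
    simp [hQ, ContinuousLinearMap.add_apply, ContinuousLinearMap.smul_apply,
      ContinuousLinearMap.sub_apply, hEu₁]
  have hQw : Q w = w := by
    simp [hQ, ContinuousLinearMap.add_apply, ContinuousLinearMap.smul_apply,
      ContinuousLinearMap.sub_apply, hEw]
  constructor
  · rw [hR]
    simp only [ContinuousLinearMap.comp_apply, hVu₀, hQu₀, map_smul]
    rw [← hVu₀, hVadjV, hVu₀]
  · -- compute ω - 1 has absolute value 1
    have hω_re : ω.re = 1 / 2 := by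
      have : (Real.pi : ℂ) * Complex.I / 3 = ((Real.pi / 3 : ℝ) : ℂ) * Complex.I := by
        push_cast; ring
      rw [hω, this, Complex.exp_ofReal_mul_I_re, Real.cos_pi_div_three]
    have hω_im : ω.im = Real.sqrt 3 / 2 := by
      have : (Real.pi : ℂ) * Complex.I / 3 = ((Real.pi / 3 : ℝ) : ℂ) * Complex.I := by
        push_cast; ring
      rw [hω, this, Complex.exp_ofReal_mul_I_im, Real.sin_pi_div_three]
    have habs : ‖ω - 1‖ = 1 := by
      rw [Complex.norm_def, Complex.normSq_apply]
      simp only [Complex.sub_re, Complex.sub_im, Complex.one_re, Complex.one_im,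
        hω_re, hω_im]
      have h3 : Real.sqrt 3 ^ 2 = 3 := Real.sq_sqrt (by norm_num)
      rw [show (1/2 - 1) * (1/2 - 1) + (Real.sqrt 3 / 2 - 0) * (Real.sqrt 3 / 2 - 0)
          = 1/4 + Real.sqrt 3 ^ 2 / 4 by ring, h3]
      norm_num
    have key : R u₁ - u₁ = V' (Q (V u₁) - V u₁) := by
      rw [hR, map_sub]
      simp only [ContinuousLinearMap.comp_apply, hV', hVadjV]
      rw [← hV', hVadjV]
    have hdiff : Q (V u₁) - V u₁ = (Real.sqrt ε : ℂ) • ((ω - 1) • u₁) := by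
      rw [hVu₁, map_add, map_smul, map_smul, hQw, hQu₁]
      rw [smul_smul, sub_smul, smul_sub, smul_smul]
      simp
    rw [key, hdiff, hV'_norm, norm_smul, norm_smul, habs, hu₁]
    simp only [Complex.norm_real, Real.norm_eq_abs, abs_of_nonneg (Real.sqrt_nonneg ε)]
    nlinarith [Real.sqrt_nonneg ε]
end

section
/- Let n ≥ 1 be an integer, let D ≥ 1, and let K ⊆ ℝⁿ be a convex body with B(0, 1) ⊆ K ⊆ B(0, D), where B(0, ρ) denotes the closed Euclidean ball of radius ρ centered at the origin. Define the cone C := {(x₀, x̄) ∈ ℝ × ℝⁿ : x₀ ≥ 0 and ‖x̄‖ ≤ x₀} and the pencil K' := ([0, 2D] × K) ∩ C ⊆ ℝ^{n+1}. Then D · vol_n(K) ≤ vol_{n+1}(K') ≤ 2D · vol_n(K), where vol_k denotes k-dimensional Lebesgue measure. -/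
open MeasureTheory Set

/-! The pencil is squeezed between the cylinders `[D, 2D] × K` and `[0, 2D] × K`: the lower one
lies in the cone because every point of `K` has norm at most `D`. -/

theorem volume_Icc_prod {E : Type*} [MeasureSpace E] [SFinite (volume : Measure E)]
    (a b : ℝ) (s : Set E) :
    volume (Icc a b ×ˢ s) = ENNReal.ofReal (b - a) * volume s := by
  rw [Measure.volume_eq_prod, Measure.prod_prod, Real.volume_Icc]

theorem Ici_prod_subset_cone {E : Type*} [SeminormedAddCommGroup E] {r : ℝ} {s : Set E}
    (hr : 0 ≤ r) (hs : s ⊆ Metric.closedBall 0 r) :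
    Ici r ×ˢ s ⊆ {x : ℝ × E | 0 ≤ x.1 ∧ ‖x.2‖ ≤ x.1} := by
  rintro ⟨t, y⟩ ⟨ht : r ≤ t, hy⟩
  have hy : ‖y‖ ≤ r := mem_closedBall_zero_iff.mp (hs hy)
  exact ⟨hr.trans ht, hy.trans ht⟩

theorem pencil_volume_bounds_general
    (n : ℕ) (D : ℝ) (hD : 1 ≤ D)
    (K : Set (EuclideanSpace ℝ (Fin n)))
    (hK_upper : K ⊆ Metric.closedBall 0 D)
    (C K' : Set (ℝ × EuclideanSpace ℝ (Fin n)))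
    (hC : C = {x : ℝ × EuclideanSpace ℝ (Fin n) | 0 ≤ x.1 ∧ ‖x.2‖ ≤ x.1})
    (hK' : K' = (Set.Icc (0 : ℝ) (2 * D) ×ˢ K) ∩ C) :
    ENNReal.ofReal D * volume K ≤ volume K' ∧
    volume K' ≤ ENNReal.ofReal (2 * D) * volume K := by
  subst hC hK'
  have hD0 : 0 ≤ D := zero_le_one.trans hD
  have h_inner : Icc D (2 * D) ×ˢ K ⊆ (Icc 0 (2 * D) ×ˢ K) ∩ {x | 0 ≤ x.1 ∧ ‖x.2‖ ≤ x.1} :=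
    subset_inter (prod_mono (Icc_subset_Icc hD0 le_rfl) subset_rfl)
      ((prod_mono Icc_subset_Ici_self subset_rfl).trans (Ici_prod_subset_cone hD0 hK_upper))
  constructor
  · calc ENNReal.ofReal D * volume K = volume (Icc D (2 * D) ×ˢ K) := by
          rw [volume_Icc_prod]; ring_nf
      _ ≤ _ := measure_mono h_inner
  · calc _ ≤ volume (Icc (0 : ℝ) (2 * D) ×ˢ K) := measure_mono inter_subset_left
      _ = ENNReal.ofReal (2 * D) * volume K := by rw [volume_Icc_prod, sub_zero]

/-- Pencil construction. Let `K ⊆ ℝⁿ` be a convex body with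
`B(0,1) ⊆ K ⊆ B(0,D)` for some `D ≥ 1`. With the cone
`C = {(x₀, x̄) : x₀ ≥ 0, ‖x̄‖ ≤ x₀}` and pencil `K' = ([0, 2D] × K) ∩ C ⊆ ℝ^{n+1}`,
we have `D · vol_n(K) ≤ vol_{n+1}(K') ≤ 2D · vol_n(K)`. -/
theorem pencil_volume_bounds
    (n : ℕ) (hn : 1 ≤ n) (D : ℝ) (hD : 1 ≤ D)
    (K : Set (EuclideanSpace ℝ (Fin n)))
    (hK_compact : IsCompact K) (hK_convex : Convex ℝ K)
    (hK_interior : (interior K).Nonempty)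
    (hK_lower : Metric.closedBall 0 1 ⊆ K)
    (hK_upper : K ⊆ Metric.closedBall 0 D)
    (C K' : Set (ℝ × EuclideanSpace ℝ (Fin n)))
    (hC : C = {x : ℝ × EuclideanSpace ℝ (Fin n) | 0 ≤ x.1 ∧ ‖x.2‖ ≤ x.1})
    (hK' : K' = (Set.Icc (0 : ℝ) (2 * D) ×ˢ K) ∩ C) :
    ENNReal.ofReal D * volume K ≤ volume K' ∧
    volume K' ≤ ENNReal.ofReal (2 * D) * volume K :=
  pencil_volume_bounds_general n D hD K hK_upper C K' hC hK'
end

section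
/- Let V₁, …, V_m be independent nonnegative square-integrable random variables with E[V_j] > 0 and E[V_j²] ≤ B·E[V_j]² for all j ∈ [m] (where B ≥ 1). Let 0 < ε ≤ 1 and let k be an integer with k ≥ 16Bm/ε². Let (X_j^{(ℓ)})_{j ∈ [m], ℓ ∈ [k]} be mutually independent random variables such that X_j^{(ℓ)} has the same distribution as V_j for each j, ℓ. Set X̄_j := (1/k)·Σ_{ℓ=1}^{k} X_j^{(ℓ)}, X := Π_{j=1}^{m} X̄_j, and E[V] := Π_{j=1}^{m} E[V_j]. Then Pr[(1 − ε)·E[V] ≤ X ≤ (1 + ε)·E[V]] ≥ 3/4. -/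
open MeasureTheory ProbabilityTheory


/-- Functions of disjoint blocks of an independent family are independent. -/
lemma blocks_indepFun {Ω : Type*} [MeasurableSpace Ω] {μ : Measure Ω}
    {m k : ℕ} {X : Fin m → Fin k → Ω → ℝ}
    (hX_meas : ∀ j ℓ, Measurable (X j ℓ))
    (hX_indep : iIndepFun
      (fun q : Fin m × Fin k => X q.1 q.2) μ)
    (g : Fin m → (Fin k → ℝ) → ℝ) (hg : ∀ j, Measurable (g j))
    (s : Finset (Fin m)) (j : Fin m) (hj : j ∉ s) :
    IndepFun (∏ i ∈ s, fun ω => g i (fun ℓ => X i ℓ ω))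
      (fun ω => g j (fun ℓ => X j ℓ ω)) μ := by
  classical
  set S : Finset (Fin m × Fin k) := s ×ˢ Finset.univ with hS
  set T : Finset (Fin m × Fin k) := {j} ×ˢ Finset.univ with hT
  have hST : Disjoint S T := by
    rw [Finset.disjoint_left]
    rintro ⟨a, b⟩ haS haT
    simp only [hS, hT, Finset.mem_product, Finset.mem_singleton] at haS haT
    exact hj (haT.1 ▸ haS.1)
  have h := hX_indep.indepFun_finset S T hST (fun q => hX_meas q.1 q.2)
  have hmemS : ∀ i ∈ s, ∀ ℓ : Fin k, ((i, ℓ) : Fin m × Fin k) ∈ S := by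
    intro i hi ℓ; simp [hS, Finset.mem_product, hi]
  have hmemT : ∀ ℓ : Fin k, ((j, ℓ) : Fin m × Fin k) ∈ T := by
    intro ℓ; simp [hT, Finset.mem_product]
  set φS : ((q : S) → ℝ) → ℝ :=
    fun v => ∏ i ∈ s.attach, g i.1 (fun ℓ => v ⟨(i.1, ℓ), hmemS i.1 i.2 ℓ⟩) with hφS
  set φT : ((q : T) → ℝ) → ℝ :=
    fun v => g j (fun ℓ => v ⟨(j, ℓ), hmemT ℓ⟩) with hφT
  have hφSm : Measurable φS := by
    apply Finset.measurable_prod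
    intro i _
    exact (hg i.1).comp (measurable_pi_lambda _ (fun ℓ => measurable_pi_apply _))
  have hφTm : Measurable φT :=
    (hg j).comp (measurable_pi_lambda _ (fun ℓ => measurable_pi_apply _))
  have h2 := h.comp hφSm hφTm
  convert h2 using 1
  funext ω
  simp only [Finset.prod_apply, Function.comp_apply, hφS]
  rw [← Finset.prod_attach s (fun i => g i (fun ℓ => X i ℓ ω))]
  rfl

lemma prod_integrable_and_integral {Ω : Type*} [MeasurableSpace Ω] {μ : Measure Ω}
    [IsProbabilityMeasure μ] {m : ℕ} {W : Fin m → Ω → ℝ}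
    (hint : ∀ i, Integrable (W i) μ)
    (hindep : ∀ (s : Finset (Fin m)) (j : Fin m), j ∉ s →
      IndepFun (∏ i ∈ s, W i) (W j) μ)
    (s : Finset (Fin m)) :
    Integrable (∏ i ∈ s, W i) μ ∧
      ∫ ω, (∏ i ∈ s, W i) ω ∂μ = ∏ i ∈ s, ∫ ω, W i ω ∂μ := by
  classical
  induction s using Finset.induction_on with
  | empty => exact ⟨integrable_const 1, by simp⟩
  | @insert j s hj ih =>
    obtain ⟨ih1, ih2⟩ := ih
    have hid := hindep s j hj
    have hint2 : Integrable ((∏ i ∈ s, W i) * W j) μ :=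
      hid.integrable_mul ih1 (hint j)
    have heq : (∏ i ∈ Insert.insert j s, W i) = (∏ i ∈ s, W i) * W j := by
      rw [Finset.prod_insert hj, mul_comm]
    constructor
    · rw [heq]; exact hint2
    · rw [heq]
      have := hid.integral_mul_eq_mul_integral ih1.aestronglyMeasurable (hint j).aestronglyMeasurable
      calc ∫ ω, ((∏ i ∈ s, W i) * W j) ω ∂μ
          = (∫ ω, (∏ i ∈ s, W i) ω ∂μ) * ∫ ω, W j ω ∂μ := this
        _ = ∏ i ∈ Insert.insert j s, ∫ ω, W i ω ∂μ := by
            rw [ih2, Finset.prod_insert hj, mul_comm]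

lemma one_add_pow_le_aux {x : ℝ} (hx : 0 ≤ x) :
    ∀ m : ℕ, x * m ≤ 1 / 2 → (1 + x) ^ m ≤ 1 + 2 * x * m := by
  intro m
  induction m with
  | zero => simp
  | succ n ih =>
    intro h
    have hn : x * n ≤ 1 / 2 := by
      have hmono : x * n ≤ x * (n + 1) := by nlinarith
      calc x * n ≤ x * (n+1) := hmono
        _ ≤ 1/2 := by push_cast at h ⊢; linarith
    have h1 := ih hn
    have h2 : (0:ℝ) ≤ 1 + x := by linarith
    calc (1 + x) ^ (n + 1) = (1 + x) ^ n * (1 + x) := by ring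
      _ ≤ (1 + 2 * x * n) * (1 + x) := by nlinarith [pow_nonneg h2 n]
      _ ≤ 1 + 2 * x * ((n:ℝ) + 1) := by nlinarith
      _ = 1 + 2 * x * ((n:ℕ) + 1 : ℕ) := by push_cast; ring


/-- (Dyer–Frieze, Chebyshev cooling.) Let `V₁,…,V_m` be independent
nonnegative square-integrable random variables with `E[V_j] > 0` and
`E[V_j²] ≤ B E[V_j]²` (`B ≥ 1`). Let `0 < ε ≤ 1` and `k ≥ 16Bm/ε²`. Let `X_j^{(ℓ)}`
(`j ∈ [m]`, `ℓ ∈ [k]`) be mutually independent with `X_j^{(ℓ)} ~ V_j`. With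
`X̄_j = (1/k) Σ_ℓ X_j^{(ℓ)}`, `X = Π_j X̄_j` and `E[V] = Π_j E[V_j]`,
`Pr[(1−ε) E[V] ≤ X ≤ (1+ε) E[V]] ≥ 3/4`. -/
theorem chebyshev_cooling_product_estimate
    {Ω : Type*} [MeasurableSpace Ω] (μpr : Measure Ω) [IsProbabilityMeasure μpr]
    (m k : ℕ) (B ε : ℝ) (hB : 1 ≤ B) (hε0 : 0 < ε) (hε1 : ε ≤ 1)
    (hk : 16 * B * m / ε ^ 2 ≤ k)
    (V : Fin m → Ω → ℝ)
    (hV_meas : ∀ j, Measurable (V j))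
    (hV_indep : iIndepFun V μpr)
    (hV_nonneg : ∀ j, ∀ᵐ ω ∂μpr, 0 ≤ V j ω)
    (hV_L2 : ∀ j, MemLp (V j) 2 μpr)
    (hV_pos : ∀ j, 0 < ∫ ω, V j ω ∂μpr)
    (hV_var : ∀ j, ∫ ω, (V j ω) ^ 2 ∂μpr ≤ B * (∫ ω, V j ω ∂μpr) ^ 2)
    (X : Fin m → Fin k → Ω → ℝ)
    (hX_meas : ∀ j ℓ, Measurable (X j ℓ))
    (hX_dist : ∀ j ℓ, IdentDistrib (X j ℓ) (V j) μpr μpr)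
    (hX_indep : iIndepFun
      (fun q : Fin m × Fin k => X q.1 q.2) μpr) :
    (3 : ℝ) / 4 ≤
      (μpr {ω | (1 - ε) * ∏ j, ∫ ω', V j ω' ∂μpr ≤ ∏ j, (k : ℝ)⁻¹ * ∑ ℓ, X j ℓ ω ∧
              ∏ j, (k : ℝ)⁻¹ * ∑ ℓ, X j ℓ ω ≤ (1 + ε) * ∏ j, ∫ ω', V j ω' ∂μpr}).toReal := by
  classical
  rcases Nat.eq_zero_or_pos m with hm | hm
  · subst hm
    have hset : {ω : Ω | (1 - ε) * ∏ j, ∫ ω', V j ω' ∂μpr ≤ ∏ j, (k : ℝ)⁻¹ * ∑ ℓ, X j ℓ ω ∧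
        ∏ j, (k : ℝ)⁻¹ * ∑ ℓ, X j ℓ ω ≤ (1 + ε) * ∏ j, ∫ ω', V j ω' ∂μpr} = Set.univ := by
      ext ω
      simp only [Finset.univ_eq_empty, Finset.prod_empty, mul_one, Set.mem_setOf_eq,
        Set.mem_univ, iff_true]
      constructor <;> linarith
    rw [hset, measure_univ, ENNReal.toReal_one]
    norm_num
  -- m ≥ 1
  have hm1 : (1:ℝ) ≤ m := by exact_mod_cast hm
  have hε2 : ε ^ 2 ≤ 1 := by nlinarith
  have hε2pos : 0 < ε ^ 2 := by positivity
  have hk16 : (16:ℝ) ≤ k := by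
    refine le_trans ?_ hk
    rw [le_div_iff₀ hε2pos]
    nlinarith
  have hkpos : (0:ℝ) < k := by linarith
  have hknat : 0 < k := by exact_mod_cast hkpos
  -- notation
  set EVj : Fin m → ℝ := fun j => ∫ ω, V j ω ∂μpr with hEVj
  set e : ℝ := ∏ j, EVj j with he
  have hepos : 0 < e := Finset.prod_pos fun j _ => hV_pos j
  clear_value e
  set A : Fin m → Ω → ℝ := fun j ω => (k : ℝ)⁻¹ * ∑ ℓ, X j ℓ ω with hA
  set Q : Fin m → ℝ := fun j => ∫ ω, (V j ω) ^ 2 ∂μpr with hQ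
  -- facts about X
  have hXL2 : ∀ j ℓ, MemLp (X j ℓ) 2 μpr := fun j ℓ =>
    (hX_dist j ℓ).symm.memLp_snd (hV_L2 j)
  have hXint : ∀ j ℓ, Integrable (X j ℓ) μpr := fun j ℓ =>
    (hXL2 j ℓ).integrable one_le_two
  have hXi : ∀ j ℓ, ∫ ω, X j ℓ ω ∂μpr = EVj j := fun j ℓ => (hX_dist j ℓ).integral_eq
  have hXsq : ∀ j ℓ, ∫ ω, (X j ℓ ω) ^ 2 ∂μpr = Q j := fun j ℓ =>
    ((hX_dist j ℓ).comp (measurable_id.pow_const 2)).integral_eq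
  -- facts about A
  have hAmeas : ∀ j, Measurable (A j) := fun j =>
    (Finset.measurable_sum _ fun ℓ _ => hX_meas j ℓ).const_mul _
  have hAint : ∀ j, Integrable (A j) μpr := fun j =>
    ((integrable_finset_sum _ fun ℓ _ => hXint j ℓ)).const_mul _
  have hAi : ∀ j, ∫ ω, A j ω ∂μpr = EVj j := by
    intro j
    rw [hA]
    simp only
    rw [integral_const_mul, integral_finset_sum _ fun ℓ _ => hXint j ℓ]
    simp only [hXi, Finset.sum_const, Finset.card_univ, Fintype.card_fin, nsmul_eq_mul]
    field_simp
  have hAL2 : ∀ j, MemLp (A j) 2 μpr := by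
    intro j
    have hs : MemLp (fun ω => ∑ ℓ, X j ℓ ω) 2 μpr :=
      memLp_finset_sum _ (fun ℓ _ => hXL2 j ℓ)
    exact hs.const_mul _
  have hAsqint : ∀ j, Integrable (fun ω => (A j ω) ^ 2) μpr := fun j =>
    (hAL2 j).integrable_sq
  -- second moment of A j
  have hpairint : ∀ j (ℓ ℓ' : Fin k), Integrable (fun ω => X j ℓ ω * X j ℓ' ω) μpr := by
    intro j ℓ ℓ'
    rcases eq_or_ne ℓ ℓ' with rfl | hne
    · have := (hXL2 j ℓ).integrable_sq
      convert this using 1; funext ω; ring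
    · have hij : ((j, ℓ) : Fin m × Fin k) ≠ (j, ℓ') := by simp [hne]
      exact (hX_indep.indepFun hij).integrable_mul (hXint j ℓ) (hXint j ℓ')
  have hpair : ∀ j (ℓ ℓ' : Fin k), ∫ ω, X j ℓ ω * X j ℓ' ω ∂μpr =
      if ℓ = ℓ' then Q j else (EVj j) ^ 2 := by
    intro j ℓ ℓ'
    rcases eq_or_ne ℓ ℓ' with rfl | hne
    · simp only [if_pos rfl]
      rw [← hXsq j ℓ]
      congr 1; funext ω; ring
    · rw [if_neg hne]
      have hij : ((j, ℓ) : Fin m × Fin k) ≠ (j, ℓ') := by simp [hne]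
      have := (hX_indep.indepFun hij).integral_mul_eq_mul_integral (hXint j ℓ).aestronglyMeasurable (hXint j ℓ').aestronglyMeasurable
      calc ∫ ω, X j ℓ ω * X j ℓ' ω ∂μpr = ∫ ω, (X j ℓ * X j ℓ') ω ∂μpr := rfl
        _ = (∫ ω, X j ℓ ω ∂μpr) * ∫ ω, X j ℓ' ω ∂μpr := this
        _ = (EVj j) ^ 2 := by rw [hXi, hXi]; ring
  have hAsq : ∀ j, ∫ ω, (A j ω) ^ 2 ∂μpr =
      ((k:ℝ)⁻¹) ^ 2 * ((k:ℝ) * Q j + ((k:ℝ) ^ 2 - k) * (EVj j) ^ 2) := by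
    intro j
    have hexp : ∀ ω, (A j ω) ^ 2 =
        ((k:ℝ)⁻¹) ^ 2 * ∑ ℓ, ∑ ℓ', X j ℓ ω * X j ℓ' ω := by
      intro ω
      rw [hA]
      simp only
      rw [mul_pow, pow_two (∑ ℓ, X j ℓ ω), Finset.sum_mul_sum]
    simp_rw [hexp]
    rw [integral_const_mul, integral_finset_sum _ (fun ℓ _ =>
      integrable_finset_sum _ (fun ℓ' _ => hpairint j ℓ ℓ'))]
    have : ∀ ℓ : Fin k, ∫ ω, ∑ ℓ', X j ℓ ω * X j ℓ' ω ∂μpr =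
        Q j + ((k:ℝ) - 1) * (EVj j) ^ 2 := by
      intro ℓ
      rw [integral_finset_sum _ (fun ℓ' _ => hpairint j ℓ ℓ')]
      have : ∀ ℓ' : Fin k, ∫ ω, X j ℓ ω * X j ℓ' ω ∂μpr =
          (EVj j) ^ 2 + (if ℓ = ℓ' then Q j - (EVj j) ^ 2 else 0) := by
        intro ℓ'; rw [hpair]; split <;> ring
      simp_rw [this]
      rw [Finset.sum_add_distrib, Finset.sum_ite_eq]
      simp [Finset.sum_const, Finset.card_univ]
      ring
    simp_rw [this]
    rw [Finset.sum_const, Finset.card_univ]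
    simp only [Fintype.card_fin, nsmul_eq_mul]
    ring
  -- second moment bound
  set x : ℝ := (B - 1) / k with hx
  have hxnn : 0 ≤ x := div_nonneg (by linarith) hkpos.le
  clear_value x
  have hcle : ∀ j, ∫ ω, (A j ω) ^ 2 ∂μpr ≤ (1 + x) * (EVj j) ^ 2 := by
    intro j
    rw [hAsq j, hx]
    have hQle := hV_var j
    have hQeq : Q j ≤ B * (EVj j) ^ 2 := hQle
    have hEsq : 0 ≤ (EVj j) ^ 2 := sq_nonneg _
    have hkne : (k:ℝ) ≠ 0 := ne_of_gt hkpos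
    rw [div_eq_mul_inv]
    have expand : ((k:ℝ)⁻¹) ^ 2 * ((k:ℝ) * Q j + ((k:ℝ) ^ 2 - k) * (EVj j) ^ 2)
        = Q j * (k:ℝ)⁻¹ + (1 - (k:ℝ)⁻¹) * (EVj j) ^ 2 := by
      field_simp
    rw [expand]
    have hkinv : 0 < (k:ℝ)⁻¹ := by positivity
    nlinarith [mul_le_mul_of_nonneg_right hQeq (le_of_lt hkinv)]
  have hcnn : ∀ j, 0 ≤ ∫ ω, (A j ω) ^ 2 ∂μpr := fun j =>
    integral_nonneg fun ω => sq_nonneg _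
  -- independence of block functions
  have hind1 : ∀ (s : Finset (Fin m)) (j : Fin m), j ∉ s →
      IndepFun (∏ i ∈ s, A i) (A j) μpr := by
    intro s j hj
    have hg : ∀ i : Fin m, Measurable (fun v : Fin k → ℝ => (k:ℝ)⁻¹ * ∑ ℓ, v ℓ) :=
      fun i => (Finset.measurable_sum _ fun ℓ _ => measurable_pi_apply ℓ).const_mul _
    exact blocks_indepFun hX_meas hX_indep (fun i v => (k:ℝ)⁻¹ * ∑ ℓ, v ℓ) hg s j hj
  have hind2 : ∀ (s : Finset (Fin m)) (j : Fin m), j ∉ s →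
      IndepFun (∏ i ∈ s, fun ω => (A i ω) ^ 2) (fun ω => (A j ω) ^ 2) μpr := by
    intro s j hj
    have hg : ∀ i : Fin m, Measurable (fun v : Fin k → ℝ => ((k:ℝ)⁻¹ * ∑ ℓ, v ℓ) ^ 2) :=
      fun i => ((Finset.measurable_sum _ fun ℓ _ =>
        measurable_pi_apply ℓ).const_mul _).pow_const 2
    exact blocks_indepFun hX_meas hX_indep (fun i v => ((k:ℝ)⁻¹ * ∑ ℓ, v ℓ) ^ 2) hg s j hj
  -- product integrability and first/second moments of Y
  obtain ⟨hYint, hYi⟩ := prod_integrable_and_integral hAint hind1 Finset.univ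
  obtain ⟨hY2int, hY2i⟩ := prod_integrable_and_integral
    (W := fun j => fun ω => (A j ω) ^ 2) hAsqint hind2 Finset.univ
  set Y : Ω → ℝ := ∏ j, A j with hY
  have hYapp : ∀ ω, Y ω = ∏ j, A j ω := fun ω => Finset.prod_apply ω Finset.univ A
  clear_value Y
  have hYmeas : Measurable Y := by
    have h := Finset.measurable_prod (s := Finset.univ) (f := A) (fun i _ => hAmeas i)
    have hfe : Y = fun ω => ∏ j, A j ω := funext hYapp
    rw [hfe]; exact h
  have hYsq_eq : ∀ ω, (∏ i, fun ω' => (A i ω') ^ 2) ω = (Y ω) ^ 2 := by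
    intro ω
    rw [Finset.prod_apply, hYapp, ← Finset.prod_pow]
  have hYmean : ∫ ω, Y ω ∂μpr = e := by
    rw [hYi]; simp only [hAi]; exact he.symm
  have hYsqint : Integrable (fun ω => (Y ω) ^ 2) μpr := by
    have := hY2int
    refine this.congr ?_
    exact Filter.Eventually.of_forall fun ω => hYsq_eq ω
  have hYL2 : MemLp Y 2 μpr :=
    (memLp_two_iff_integrable_sq hYmeas.aestronglyMeasurable).mpr hYsqint
  have hYsqmean : ∫ ω, (Y ω) ^ 2 ∂μpr = ∏ j, ∫ ω, (A j ω) ^ 2 ∂μpr := by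
    rw [← hY2i]
    exact integral_congr_ae (Filter.Eventually.of_forall fun ω => (hYsq_eq ω).symm)
  -- variance bound
  have hxm : x * m ≤ ε ^ 2 / 16 := by
    rw [hx, div_mul_eq_mul_div, div_le_div_iff₀ hkpos (by norm_num : (0:ℝ) < 16)]
    have : 16 * B * m / ε ^ 2 ≤ (k:ℝ) := hk
    rw [div_le_iff₀ hε2pos] at this
    nlinarith
  have hxm2 : x * m ≤ 1 / 2 := by nlinarith
  have hM : ∏ j, ∫ ω, (A j ω) ^ 2 ∂μpr ≤ (1 + 2 * x * m) * e ^ 2 := by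
    have h1 : ∏ j, ∫ ω, (A j ω) ^ 2 ∂μpr ≤ ∏ j, (1 + x) * (EVj j) ^ 2 :=
      Finset.prod_le_prod (fun j _ => hcnn j) (fun j _ => hcle j)
    have h2 : ∏ j, (1 + x) * (EVj j) ^ 2 = (1 + x) ^ m * e ^ 2 := by
      rw [Finset.prod_mul_distrib, Finset.prod_const, Finset.card_univ, Fintype.card_fin,
        he, ← Finset.prod_pow]
    have h3 : (1 + x) ^ m ≤ 1 + 2 * x * m := one_add_pow_le_aux hxnn m hxm2
    calc ∏ j, ∫ ω, (A j ω) ^ 2 ∂μpr ≤ (1 + x) ^ m * e ^ 2 := by rw [← h2]; exact h1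
      _ ≤ (1 + 2 * x * m) * e ^ 2 :=
          mul_le_mul_of_nonneg_right h3 (sq_nonneg e)
  have hvar : variance Y μpr ≤ 2 * x * m * e ^ 2 := by
    rw [variance_eq_sub hYL2]
    have h1 : μpr[Y ^ 2] = ∫ ω, (Y ω) ^ 2 ∂μpr :=
      integral_congr_ae (Filter.Eventually.of_forall fun ω => by simp [Pi.pow_apply])
    have h2 : μpr[Y] = e := hYmean
    rw [h1, h2, hYsqmean]
    linarith [hM]
  -- Chebyshev
  have hce : 0 < ε * e := by positivity
  have hcheb := meas_ge_le_variance_div_sq (μ := μpr) hYL2 hce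
  have hbound : variance Y μpr / (ε * e) ^ 2 ≤ 1 / 8 := by
    have h1 : 2 * x * m * e ^ 2 ≤ (ε ^ 2 / 8) * e ^ 2 := by
      have hh := mul_le_mul_of_nonneg_right hxm (sq_nonneg e)
      linarith
    have h2 : variance Y μpr ≤ (ε ^ 2 / 8) * e ^ 2 := le_trans hvar h1
    rw [div_le_iff₀ (by positivity : (0:ℝ) < (ε * e) ^ 2)]
    calc variance Y μpr ≤ (ε ^ 2 / 8) * e ^ 2 := h2
      _ = 1 / 8 * (ε * e) ^ 2 := by ring
  have hcheb2 : μpr {ω | ε * e ≤ |Y ω - μpr[Y]|} ≤ ENNReal.ofReal (1 / 8) :=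
    le_trans hcheb (ENNReal.ofReal_le_ofReal hbound)
  -- event inclusion
  set Eset : Set Ω := {ω | (1 - ε) * ∏ j, ∫ ω', V j ω' ∂μpr ≤ ∏ j, (k : ℝ)⁻¹ * ∑ ℓ, X j ℓ ω ∧
      ∏ j, (k : ℝ)⁻¹ * ∑ ℓ, X j ℓ ω ≤ (1 + ε) * ∏ j, ∫ ω', V j ω' ∂μpr} with hEset
  have hEset2 : Eset = {ω | (1 - ε) * e ≤ Y ω ∧ Y ω ≤ (1 + ε) * e} := by
    rw [hEset]
    ext ω
    have h1 : (∏ j, ∫ ω', V j ω' ∂μpr) = e := by rw [he]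
    have h2 : (∏ j, (k:ℝ)⁻¹ * ∑ ℓ, X j ℓ ω) = Y ω := by
      rw [hYapp ω]
    simp only [Set.mem_setOf_eq, h1, h2]
  have hEm : MeasurableSet Eset := by
    rw [hEset2]
    exact (measurableSet_le measurable_const hYmeas).inter
      (measurableSet_le hYmeas measurable_const)
  have hsub : Esetᶜ ⊆ {ω | ε * e ≤ |Y ω - μpr[Y]|} := by
    intro ω hω
    rw [hEset2] at hω
    simp only [Set.mem_compl_iff, Set.mem_setOf_eq, not_and_or, not_le] at hω
    have hμY : μpr[Y] = e := hYmean
    simp only [Set.mem_setOf_eq, hμY]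
    rcases hω with h | h
    · rw [le_abs]; right; linarith
    · rw [le_abs]; left; linarith
  have hcompl : μpr Esetᶜ ≤ ENNReal.ofReal (1 / 8) :=
    le_trans (measure_mono hsub) hcheb2
  have hcomplR : (μpr Esetᶜ).toReal ≤ 1 / 8 := by
    calc (μpr Esetᶜ).toReal ≤ (ENNReal.ofReal (1 / 8)).toReal :=
          ENNReal.toReal_mono ENNReal.ofReal_ne_top hcompl
      _ = 1 / 8 := by rw [ENNReal.toReal_ofReal]; norm_num
  have hsum : (μpr Eset).toReal + (μpr Esetᶜ).toReal = 1 := by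
    rw [← ENNReal.toReal_add (measure_ne_top _ _) (measure_ne_top _ _),
      measure_add_measure_compl hEm, measure_univ, ENNReal.toReal_one]
  have hgoal : {ω | (1 - ε) * e ≤ ∏ j, (k : ℝ)⁻¹ * ∑ ℓ, X j ℓ ω ∧
      ∏ j, (k : ℝ)⁻¹ * ∑ ℓ, X j ℓ ω ≤ (1 + ε) * e} = Eset := by
    rw [hEset2]
    ext ω
    rw [Set.mem_setOf_eq, Set.mem_setOf_eq, hYapp ω]
  rw [hgoal]
  linarith
end
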